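/- arXiv:2504.07920 — 10 statements merged into one kernel-verified Lean document; each statement's English description precedes it below -/
import Mathlib

section
/- Let T be a bidirected tree (each undirected tree edge replaced by two antiparallel directed edges) rooted at an arbitrary vertex r, and let Δ ≥ 1. Define λ(a,b) = d̂(r,a) mod Δ for each edge (a,b) pointing away from r, and λ(a,b) = (Δ - d̂(r,a)) mod Δ for each edge (a,b) pointing toward r. Then for every ordered pair of vertices (u,v), the fastest temporal path from u to v along the unique tree path has total waiting time at most Δ - 1; moreover if Δ is even, the total waiting time is at most Δ - 2. -/
/-- A strict temporal path in a Δ-periodic temporal graph: edge `i` goes from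
`vert i` to `vert (i+1)` and is traversed at time `time i`, where the times are
strictly increasing and congruent to the edge label modulo Δ. -/
structure TempPath (V : Type) (A : V → V → Prop) (lab : V → V → ℕ) (Δ : ℕ)
    (u v : V) where
  len : ℕ
  len_pos : 1 ≤ len
  vert : ℕ → V
  time : ℕ → ℕ
  source : vert 0 = u
  target : vert len = v
  nodup : ∀ i j, i ≤ len → j ≤ len → i ≠ j → vert i ≠ vert j
  adj : ∀ i, i < len → A (vert i) (vert (i + 1))
  label_mem : ∀ i, i < len → time i % Δ = lab (vert i) (vert (i + 1)) % Δ
  strict : ∀ i, i + 1 < len → time i < time (i + 1)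

/-- The duration of a temporal path: arrival time minus start time plus one
(traversing an edge takes one time unit). -/
def TempPath.duration {V : Type} {A : V → V → Prop} {lab : V → V → ℕ} {Δ : ℕ}
    {u v : V} (p : TempPath V A lab Δ u v) : ℕ :=
  p.time (p.len - 1) - p.time 0 + 1

open SimpleGraph Walk

private lemma path_length_eq_dist {V : Type} {G : SimpleGraph V} (hT : G.IsTree)
    {x y : V} {p : G.Walk x y} (hp : p.IsPath) : p.length = G.dist x y := by
  obtain ⟨q, hq, hql⟩ := hT.isConnected.exists_path_of_dist x y
  have h : (⟨p, hp⟩ : G.Path x y) = ⟨q, hq⟩ := hT.IsAcyclic.path_unique _ _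
  have : p = q := congrArg Subtype.val h
  rw [this, hql]

private lemma concat_isPath {V : Type} {G : SimpleGraph V} {x y z : V}
    {p : G.Walk x y} (hp : p.IsPath) (h : G.Adj y z) (hz : z ∉ p.support) :
    (p.concat h).IsPath := by
  rw [← Walk.isPath_reverse_iff, Walk.reverse_concat]
  exact (hp.reverse).cons (by simpa [Walk.support_reverse] using hz)

private lemma step_dichotomy {V : Type} {G : SimpleGraph V} (hT : G.IsTree) (r : V)
    {a b : V} (hab : G.Adj a b) :
    G.dist r b = G.dist r a + 1 ∨ G.dist r a = G.dist r b + 1 := by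
  classical
  obtain ⟨P, hP, hPl⟩ := hT.isConnected.exists_path_of_dist r b
  by_cases ha : a ∈ P.support
  · left
    have h1 : (P.takeUntil a ha).length = G.dist r a :=
      path_length_eq_dist hT (hP.takeUntil ha)
    have h2 : (P.takeUntil a ha).length + (P.dropUntil a ha).length = P.length := by
      rw [← Walk.length_append, Walk.take_spec]
    have h3 : (P.dropUntil a ha).length ≠ 0 := fun h =>
      hab.ne (Walk.eq_of_length_eq_zero h)
    have h4 : G.dist r b ≤ G.dist r a + G.dist a b := hT.isConnected.dist_triangle
    have h5 : G.dist a b = 1 := dist_eq_one_iff_adj.mpr hab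
    omega
  · right
    have hQ : (P.concat hab.symm).IsPath := concat_isPath hP hab.symm ha
    have := path_length_eq_dist hT hQ
    rw [Walk.length_concat, hPl] at this
    omega

private lemma unique_parent {V : Type} {G : SimpleGraph V} (hT : G.IsTree) (r : V)
    {w : V} : ∃ P : G.Walk r w, P.IsPath ∧ ∀ b, G.Adj b w → G.dist r b + 1 = G.dist r w →
      b = P.getVert (G.dist r w - 1) := by
  classical
  obtain ⟨P, hP, hPl⟩ := hT.isConnected.exists_path_of_dist r w
  refine ⟨P, hP, fun b hb hdb => ?_⟩
  obtain ⟨Q, hQ, hQl⟩ := hT.isConnected.exists_path_of_dist r b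
  have hw : w ∉ Q.support := by
    intro hw
    have h1 : G.dist r w ≤ (Q.takeUntil w hw).length := G.dist_le _
    have h2 := Q.length_takeUntil_le hw
    omega
  have hQP : (Q.concat hb).IsPath := concat_isPath hQ hb hw
  have heq : (⟨Q.concat hb, hQP⟩ : G.Path r w) = ⟨P, hP⟩ := hT.IsAcyclic.path_unique _ _
  have heq' : Q.concat hb = P := congrArg Subtype.val heq
  have : (Q.concat hb).getVert Q.length = b := by
    rw [Walk.concat_eq_append, Walk.getVert_append]
    simp
  rw [heq'] at this
  rw [← this, hQl]
  congr 1
  omega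

private lemma path_getVert_injOn {V : Type} {G : SimpleGraph V} :
    ∀ {x y : V} {p : G.Walk x y}, p.IsPath →
      ∀ i j, i ≤ p.length → j ≤ p.length → p.getVert i = p.getVert j → i = j := by
  intro x y p
  induction p with
  | nil => intro _ i j hi hj _; simp at hi hj; omega
  | @cons x' y' z' h q ih =>
    intro hp i j hi hj hij
    have hq := hp.of_cons
    have hx : x' ∉ q.support := by
      have := hp.support_nodup
      simp at this
      exact this.1
    match i, j with
    | 0, 0 => rfl
    | 0, j + 1 =>
      exfalso
      apply hx
      rw [Walk.mem_support_iff_exists_getVert]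
      exact ⟨j, by simpa [Walk.getVert_cons_succ] using hij.symm, by simpa using hj⟩
    | i + 1, 0 =>
      exfalso
      apply hx
      rw [Walk.mem_support_iff_exists_getVert]
      exact ⟨i, by simpa [Walk.getVert_cons_succ] using hij, by simpa using hi⟩
    | i + 1, j + 1 =>
      have := ih hq i j (by simpa using hi) (by simpa using hj)
        (by simpa [Walk.getVert_cons_succ] using hij)
      omega

private lemma mod_eq_of_zmod {Δ : ℕ} {a b : ℕ} (h : (a : ZMod Δ) = b) :
    a % Δ = b % Δ := (ZMod.natCast_eq_natCast_iff' a b Δ).mp h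

private lemma cast_label_in {Δ x : ℕ} (hΔ : 1 ≤ Δ) :
    (((Δ - x % Δ) % Δ : ℕ) : ZMod Δ) = -(x : ZMod Δ) := by
  have hle : x % Δ ≤ Δ := (Nat.mod_lt x (by omega)).le
  rw [ZMod.natCast_mod, Nat.cast_sub hle, ZMod.natCast_self, ZMod.natCast_mod]
  ring


theorem stmt4 {V : Type} (G : SimpleGraph V) (hT : G.IsTree) (r : V)
    (Δ : ℕ) (hΔ : 1 ≤ Δ) (lab : V → V → ℕ)
    (hout : ∀ a b, G.Adj a b → G.dist r b = G.dist r a + 1 →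
      lab a b = G.dist r a % Δ)
    (hin : ∀ a b, G.Adj a b → G.dist r a = G.dist r b + 1 →
      lab a b = (Δ - G.dist r a % Δ) % Δ) :
    ∀ u v : V, u ≠ v →
      (∃ p : TempPath V G.Adj lab Δ u v, p.duration ≤ G.dist u v + (Δ - 1)) ∧
      (Even Δ →
        ∃ p : TempPath V G.Adj lab Δ u v, p.duration ≤ G.dist u v + (Δ - 2)) := by
  classical
  intro u v huv
  obtain ⟨P, hP, hPl⟩ := hT.isConnected.exists_path_of_dist u v
  set n := P.length with hn
  have hn1 : 1 ≤ n := by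
    have := hT.isConnected.pos_dist_of_ne huv
    omega
  set f : ℕ → V := P.getVert with hf
  set D : ℕ → ℕ := fun i => G.dist r (f i) with hD
  have hadj : ∀ i, i < n → G.Adj (f i) (f (i+1)) := fun i hi => P.adj_getVert_succ hi
  have hnodup : ∀ i j, i ≤ n → j ≤ n → i ≠ j → f i ≠ f j := fun i j hi hj hne heq =>
    hne (path_getVert_injOn hP i j hi hj heq)
  have hstep : ∀ i, i < n → D (i+1) = D i + 1 ∨ D i = D (i+1) + 1 :=
    fun i hi => step_dichotomy hT r (hadj i hi)
  have hnomax : ∀ i, i + 1 < n → D (i+1) = D i + 1 → D (i+2) = D (i+1) + 1 := by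
    intro i hi hup
    rcases hstep (i+1) hi with h | h
    · exact h
    · exfalso
      obtain ⟨Q, hQ, huniq⟩ := unique_parent hT r (w := f (i+1))
      have h1 := huniq (f i) (hadj i (by omega)) (show D i + 1 = D (i+1) by omega)
      have h2 := huniq (f (i+2)) (hadj (i+1) hi).symm (show D (i+1+1) + 1 = D (i+1) by omega)
      exact hnodup i (i+2) (by omega) (by omega) (by omega) (h1.trans h2.symm)
  have hQex : ∃ j, j = n ∨ (j < n ∧ D (j+1) = D j + 1) := ⟨n, Or.inl rfl⟩
  set k := Nat.find hQex with hk
  have hkspec := Nat.find_spec hQex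
  have hkn : k ≤ n := Nat.find_le (Or.inl rfl)
  have hdown : ∀ i, i < k → D i = D (i+1) + 1 := by
    intro i hik
    have hmin := Nat.find_min hQex hik
    push_neg at hmin
    have hin' : i < n := by omega
    rcases hstep i hin' with h | h
    · exact absurd h (hmin.2 hin')
    · exact h
  have hupm : ∀ m, k + m < n → D (k+m+1) = D (k+m) + 1 := by
    intro m
    induction m with
    | zero =>
      intro h0
      rcases hkspec with h | h
      · omega
      · simpa using h.2
    | succ m ih =>
      intro h
      exact hnomax (k+m) (by omega) (ih (by omega))
  have hDdown : ∀ i, i ≤ k → D i + i = D 0 := by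
    intro i
    induction i with
    | zero => simp
    | succ i ih =>
      intro h
      have h1 := hdown i (by omega)
      have h2 := ih (by omega)
      omega
  have hDup : ∀ m, k + m ≤ n → D (k+m) = D k + m := by
    intro m
    induction m with
    | zero => simp
    | succ m ih =>
      intro h
      have h1 := hupm m (by omega)
      have h2 := ih (by omega)
      show D (k + m + 1) = D k + (m + 1)
      omega
  by_cases hk0 : k = 0
  -- Case 1: the path only moves away from the root
  · have hup : ∀ i, i < n → D (i+1) = D i + 1 := by
      intro i hi
      have := hupm i (by omega)
      rw [hk0, Nat.zero_add] at this
      exact this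
    have hDi : ∀ i, i ≤ n → D i = D 0 + i := by
      intro i hi
      have := hDup i (by omega)
      rw [hk0, Nat.zero_add] at this
      exact this
    have hlabel : ∀ i, i < n → (D 0 + i) % Δ = lab (f i) (f (i+1)) % Δ := by
      intro i hi
      have hlab : lab (f i) (f (i+1)) = D i % Δ := hout _ _ (hadj i hi) (hup i hi)
      rw [hlab, Nat.mod_mod_of_dvd _ dvd_rfl, hDi i (by omega)]
    set p : TempPath V G.Adj lab Δ u v :=
      { len := n, len_pos := hn1, vert := f, time := fun i => D 0 + i,
        source := P.getVert_zero, target := P.getVert_length,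
        nodup := hnodup, adj := hadj,
        label_mem := hlabel,
        strict := fun i _ => by show D 0 + i < D 0 + (i+1); omega } with hp
    have hdur : p.duration = n := by
      show D 0 + (n-1) - (D 0 + 0) + 1 = n
      omega
    exact ⟨⟨p, by omega⟩, fun _ => ⟨p, by omega⟩⟩
  -- Case 2: the path first moves toward the root
  · have hk1 : 1 ≤ k := by omega
    set c : ℕ := Δ * D 0 - D 0 with hc
    set g : ℕ := if (2 * D k + 1) % Δ = 0 then Δ else (2 * D k + 1) % Δ with hg
    have hg1 : 1 ≤ g := by
      rw [hg]; split <;> omega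
    have hgΔ : g ≤ Δ := by
      rw [hg]; split
      · exact le_rfl
      · exact (Nat.mod_lt _ (by omega)).le
    have hcc : ((c : ℕ) : ZMod Δ) = -(D 0 : ZMod Δ) := by
      have hle : D 0 ≤ Δ * D 0 := Nat.le_mul_of_pos_left _ (by omega)
      rw [hc, Nat.cast_sub hle, Nat.cast_mul, ZMod.natCast_self]
      ring
    have hgc : ((g : ℕ) : ZMod Δ) = 2 * (D k : ZMod Δ) + 1 := by
      rw [hg]
      split
      · rename_i h0
        rw [ZMod.natCast_self]
        have : (((2 * D k + 1) % Δ : ℕ) : ZMod Δ) = 2 * (D k : ZMod Δ) + 1 := by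
          rw [ZMod.natCast_mod]; push_cast; ring
        rw [h0] at this
        simpa using this
      · rw [ZMod.natCast_mod]; push_cast; ring
    have hDk0 : D k + k = D 0 := hDdown k le_rfl
    set t : ℕ → ℕ := fun i => if i < k then c + i else c + (k - 1) + g + (i - k) with ht
    have hlabel : ∀ i, i < n → t i % Δ = lab (f i) (f (i+1)) % Δ := by
      intro i hi
      by_cases hik : i < k
      · have hd := hdown i hik
        have hlab : lab (f i) (f (i+1)) = (Δ - D i % Δ) % Δ := hin _ _ (hadj i hi) hd
        have hti : t i = c + i := if_pos hik
        rw [hti, hlab]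
        apply mod_eq_of_zmod
        rw [cast_label_in hΔ]
        have hDi : ((D 0 : ℕ) : ZMod Δ) = (D i : ℕ) + (i : ℕ) := by
          exact_mod_cast congrArg (Nat.cast (R := ZMod Δ)) (hDdown i hik.le).symm
        push_cast
        rw [hcc, hDi]
        ring
      · push_neg at hik
        have hiup : D (i+1) = D i + 1 := by
          have := hupm (i - k) (by omega)
          rw [show k + (i - k) = i from by omega] at this
          exact this
        have hDi : D i = D k + (i - k) := by
          have := hDup (i - k) (by omega)
          rw [show k + (i - k) = i from by omega] at this
          exact this
        have hlab : lab (f i) (f (i+1)) = D i % Δ := hout _ _ (hadj i hi) hiup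
        have hti : t i = c + (k - 1) + g + (i - k) := if_neg (by omega)
        rw [hti, hlab]
        apply mod_eq_of_zmod
        rw [ZMod.natCast_mod]
        have e1 : ((D i : ℕ) : ZMod Δ) = (D k : ℕ) + ((i : ℕ) - (k : ℕ)) := by
          rw [hDi]
          push_cast [Nat.cast_sub hik]
          ring
        have e2 : ((D 0 : ℕ) : ZMod Δ) = (D k : ℕ) + (k : ℕ) := by
          exact_mod_cast congrArg (Nat.cast (R := ZMod Δ)) hDk0.symm
        push_cast [Nat.cast_sub hik, Nat.cast_sub hk1]
        rw [hcc, hgc, e1, e2]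
        ring
    set p : TempPath V G.Adj lab Δ u v :=
      { len := n, len_pos := hn1, vert := f, time := t,
        source := P.getVert_zero, target := P.getVert_length,
        nodup := hnodup, adj := hadj,
        label_mem := hlabel,
        strict := by
          intro i hi
          show t i < t (i+1)
          rw [ht]
          simp only
          split_ifs <;> omega } with hp
    have ht0 : t 0 = c := by simp [ht, show (0:ℕ) < k from hk1]
    have hdur : p.duration = t (n-1) - c + 1 := by
      show t (n-1) - t 0 + 1 = _
      rw [ht0]
    have hdurval : p.duration ≤ n + (g - 1) := by
      rw [hdur, ht]
      simp only
      split_ifs <;> omega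
    have hgeven : Even Δ → g ≤ Δ - 1 := by
      intro hev
      have h2 : (2 : ℕ) ∣ Δ := hev.two_dvd
      have hne : (2 * D k + 1) % Δ ≠ 0 := by
        intro h0
        have hdvd : Δ ∣ 2 * D k + 1 := Nat.dvd_of_mod_eq_zero h0
        have := h2.trans hdvd
        omega
      rw [hg, if_neg hne]
      have := Nat.mod_lt (2 * D k + 1) (show 0 < Δ by omega)
      omega
    refine ⟨⟨p, by omega⟩, fun hev => ⟨p, ?_⟩⟩
    have := hgeven hev
    omega
end

section
/- Every instance of the directed upper-bounded periodic temporal tree realization problem (DiTTR) with period Δ = 2 is feasible: the rooted labeling (labels d̂(r,a) mod 2 on edges away from the root and (2 - d̂(r,a)) mod 2 on edges toward the root) realizes the static distance exactly, i.e., the fastest temporal path duration between every pair of vertices equals their tree distance. -/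
open SimpleGraph Walk

variable {V : Type} {G : SimpleGraph V}

lemma aux_getVert_mem_support {u v : V} (p : G.Walk u v) (i : ℕ) :
    p.getVert i ∈ p.support := by
  induction p generalizing i with
  | nil => cases i <;> simp [Walk.getVert]
  | cons h q ih =>
    cases i with
    | zero => simp [Walk.getVert]
    | succ n => simp only [Walk.getVert_cons_succ, Walk.support_cons, List.mem_cons]; exact Or.inr (ih n)

lemma aux_getVert_inj {u v : V} {p : G.Walk u v} (hp : p.IsPath) :
    ∀ i j, i ≤ p.length → j ≤ p.length → p.getVert i = p.getVert j → i = j := by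
  induction p with
  | nil => intro i j hi hj _; simp at hi hj; omega
  | cons h q ih =>
    intro i j hi hj heq
    rw [Walk.cons_isPath_iff] at hp
    cases i with
    | zero => cases j with
      | zero => rfl
      | succ m =>
        exfalso
        apply hp.2
        rw [Walk.getVert_zero] at heq
        rw [Walk.getVert_cons_succ] at heq
        rw [heq]; exact aux_getVert_mem_support q m
    | succ n => cases j with
      | zero =>
        exfalso
        apply hp.2
        rw [Walk.getVert_zero] at heq
        rw [Walk.getVert_cons_succ] at heq
        rw [← heq]; exact aux_getVert_mem_support q n
      | succ m =>
        rw [Walk.getVert_cons_succ, Walk.getVert_cons_succ] at heq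
        simp only [Walk.length_cons] at hi hj
        have := ih hp.1 n m (by omega) (by omega) heq
        omega

lemma aux_path_length (hT : G.IsTree) {u v : V} {p : G.Walk u v} (hp : p.IsPath) :
    p.length = G.dist u v := by
  obtain ⟨q, hq, hlen⟩ := hT.isConnected.exists_path_of_dist u v
  have := hT.IsAcyclic.path_unique ⟨p, hp⟩ ⟨q, hq⟩
  rw [← hlen]
  exact congrArg Walk.length (congrArg Subtype.val this)

lemma aux_adj_dist (hT : G.IsTree) (r : V) {a b : V} (hab : G.Adj a b) :
    G.dist r b = G.dist r a + 1 ∨ G.dist r a = G.dist r b + 1 := by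
  classical
  obtain ⟨p, hp, hlen⟩ := hT.isConnected.exists_path_of_dist r a
  by_cases hb : b ∈ p.support
  · right
    have h1 : (p.takeUntil b hb).length = G.dist r b := aux_path_length hT (hp.takeUntil hb)
    have h2 : (p.dropUntil b hb).length = G.dist b a := aux_path_length hT (hp.dropUntil hb)
    have h3 : G.dist b a = 1 := SimpleGraph.dist_eq_one_iff_adj.mpr hab.symm
    have h4 := congrArg Walk.length (p.take_spec hb)
    rw [Walk.length_append] at h4
    omega
  · left
    have hrev : p.reverse.IsPath := hp.reverse
    have hbs : b ∉ p.reverse.support := by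
      rwa [Walk.support_reverse, List.mem_reverse]
    have hpath : (Walk.cons hab.symm p.reverse).IsPath := hrev.cons hbs
    have := aux_path_length hT hpath
    rw [Walk.length_cons, Walk.length_reverse] at this
    rw [SimpleGraph.dist_comm (u := b)] at this
    omega

/-- Every DiTTR instance with period Δ = 2 is feasible: the rooted
labeling realizes the static tree distance exactly, i.e. for every pair of
distinct vertices the fastest temporal path duration equals the tree distance,
and hence every bound D with D u v ≥ d̂(u,v) is met. -/
theorem stmt6 {V : Type} (G : SimpleGraph V) (hT : G.IsTree) (r : V)
    (lab : V → V → ℕ)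
    (hout : ∀ a b, G.Adj a b → G.dist r b = G.dist r a + 1 →
      lab a b = G.dist r a % 2)
    (hin : ∀ a b, G.Adj a b → G.dist r a = G.dist r b + 1 →
      lab a b = (2 - G.dist r a % 2) % 2)
    (D : V → V → ℕ) (hD : ∀ u v, G.dist u v ≤ D u v) :
    ∀ u v : V, u ≠ v →
      (∃ p : TempPath V G.Adj lab 2 u v, p.duration = G.dist u v) ∧
      (∀ p : TempPath V G.Adj lab 2 u v, G.dist u v ≤ p.duration) ∧
      (∃ p : TempPath V G.Adj lab 2 u v, p.duration ≤ D u v) := by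
  intro u v huv
  -- labels have the parity of the distance to the root
  have hlab : ∀ a b, G.Adj a b → lab a b % 2 = G.dist r a % 2 := by
    intro a b hab
    rcases aux_adj_dist hT r hab with h | h
    · rw [hout a b hab h]; omega
    · rw [hin a b hab h]; omega
  -- existence of an optimal temporal path
  obtain ⟨p, hp, hlen⟩ := hT.isConnected.exists_path_of_dist u v
  have hdpos : 1 ≤ G.dist u v := by
    have : G.dist u v ≠ 0 :=
      SimpleGraph.dist_ne_zero_iff_ne_and_reachable.mpr ⟨huv, hT.isConnected u v⟩
    omega
  have hpar : ∀ i, i ≤ p.length → (G.dist r u + i) % 2 = G.dist r (p.getVert i) % 2 := by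
    intro i
    induction i with
    | zero => intro _; simp [Walk.getVert_zero]
    | succ n ih =>
      intro hn
      have hadj := p.adj_getVert_succ (i := n) (by omega)
      have hihn := ih (by omega)
      rcases aux_adj_dist hT r hadj with h | h <;> omega
  have hplen : p.length = G.dist u v := hlen
  let P : TempPath V G.Adj lab 2 u v :=
    { len := G.dist u v
      len_pos := hdpos
      vert := p.getVert
      time := fun i => G.dist r u + i
      source := p.getVert_zero
      target := by rw [← hplen]; exact p.getVert_length
      nodup := by
        intro i j hi hj hij heq
        exact hij (aux_getVert_inj hp i j (by omega) (by omega) heq)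
      adj := by intro i hi; exact p.adj_getVert_succ (by omega)
      label_mem := by
        intro i hi
        have hadj := p.adj_getVert_succ (i := i) (by omega)
        rw [hlab _ _ hadj, ← hpar i (by omega)]
      strict := by intro i _; omega }
  have hPd : P.duration = G.dist u v := by
    show G.dist r u + (G.dist u v - 1) - (G.dist r u + 0) + 1 = G.dist u v
    omega
  refine ⟨⟨P, hPd⟩, ?_, ⟨P, hPd ▸ hD u v⟩⟩
  -- lower bound
  intro q
  have key : ∀ k, ∀ j, j + k = q.len → ∃ w : G.Walk (q.vert j) v, w.length = k := by
    intro k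
    induction k with
    | zero =>
      intro j hj
      have : q.vert j = v := by rw [show j = q.len by omega, q.target]
      exact ⟨Walk.nil.copy this.symm rfl, by simp⟩
    | succ n ih =>
      intro j hj
      obtain ⟨w, hw⟩ := ih (j + 1) (by omega)
      exact ⟨Walk.cons (q.adj j (by omega)) w, by simp [hw]⟩
  obtain ⟨w, hw⟩ := key q.len 0 (by omega)
  have hdist : G.dist u v ≤ q.len := by
    have := SimpleGraph.dist_le (w.copy q.source rfl)
    rwa [Walk.length_copy, hw] at this
  have ht : ∀ i, i < q.len → q.time 0 + i ≤ q.time i := by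
    intro i
    induction i with
    | zero => omega
    | succ n ih =>
      intro h
      have h1 := q.strict n h
      have h2 := ih (by omega)
      omega
  have hlp := q.len_pos
  have := ht (q.len - 1) (by omega)
  show G.dist u v ≤ q.time (q.len - 1) - q.time 0 + 1
  omega
end

section
/- Every instance of DiTTR with odd period Δ and minimum slack k satisfying Δ ≤ k + 1 is feasible, and every instance with even period Δ and Δ ≤ k + 2 is feasible, where minimum slack k means D_{u,v} ≥ d̂(u,v) + k for all pairs u ≠ v. -/
open SimpleGraph Walk

namespace Stmt7Aux

variable {V : Type} {G : SimpleGraph V}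

lemma getVert_injOn {u v : V} {p : G.Walk u v} (hp : p.IsPath) :
    ∀ i j, i ≤ p.length → j ≤ p.length → p.getVert i = p.getVert j → i = j := by
  induction p with
  | nil => intro i j hi hj _; simp at hi hj; omega
  | @cons a b c h q ih =>
    rw [SimpleGraph.Walk.cons_isPath_iff] at hp
    intro i j hi hj hij
    match i, j with
    | 0, 0 => rfl
    | 0, j+1 =>
      exfalso; apply hp.2
      rw [SimpleGraph.Walk.mem_support_iff_exists_getVert]
      refine ⟨j, ?_, ?_⟩
      · simpa using hij.symm
      · simpa using hj
    | i+1, 0 =>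
      exfalso; apply hp.2
      rw [SimpleGraph.Walk.mem_support_iff_exists_getVert]
      refine ⟨i, ?_, ?_⟩
      · simpa using hij
      · simpa using hi
    | i+1, j+1 =>
      simp only [SimpleGraph.Walk.getVert_cons_succ] at hij
      have := ih hp.1 i j (by simpa using hi) (by simpa using hj) hij
      omega

lemma isPath_concat {x y z : V} {p : G.Walk x y} (hp : p.IsPath) (h : G.Adj y z)
    (hz : z ∉ p.support) : (p.concat h).IsPath := by
  have h2 : (SimpleGraph.Walk.cons h.symm p.reverse).IsPath := by
    rw [SimpleGraph.Walk.cons_isPath_iff]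
    exact ⟨hp.reverse, by simpa using hz⟩
  have h3 := h2.reverse
  rw [SimpleGraph.Walk.reverse_cons, SimpleGraph.Walk.reverse_reverse] at h3
  exact h3

variable (hT : G.IsTree)
include hT

lemma path_length_eq_dist {a b : V} (p : G.Walk a b) (hp : p.IsPath) :
    p.length = G.dist a b := by
  obtain ⟨q, hq, hql⟩ := (hT.isConnected).exists_path_of_dist a b
  have := (hT.existsUnique_path a b).unique hp hq
  rw [this, hql]

lemma dist_le_of_mem_support {r a x : V} {p : G.Walk r a} (hp : p.IsPath)
    (hx : x ∈ p.support) : G.dist r x ≤ G.dist r a := by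
  classical
  have h1 : (p.takeUntil x hx).length = G.dist r x :=
    path_length_eq_dist hT _ (hp.takeUntil hx)
  have h2 := SimpleGraph.Walk.length_takeUntil_le p hx
  rw [h1, path_length_eq_dist hT p hp] at h2
  exact h2

lemma dist_step {r a b : V} (hab : G.Adj a b) :
    G.dist r b = G.dist r a + 1 ∨ G.dist r a = G.dist r b + 1 := by
  classical
  classical
  obtain ⟨P, hP, hPl⟩ := (hT.isConnected).exists_path_of_dist r b
  by_cases ha : a ∈ P.support
  · left
    have h1 : G.dist r b ≤ G.dist r a + 1 := by
      have := (hT.isConnected).dist_triangle (u := r) (v := a) (w := b)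
      rwa [(SimpleGraph.dist_eq_one_iff_adj).mpr hab] at this
    have h2 : (P.takeUntil a ha).length = G.dist r a :=
      path_length_eq_dist hT _ (hP.takeUntil ha)
    have h3 := SimpleGraph.Walk.take_spec P ha
    have h4 : (P.takeUntil a ha).length + (P.dropUntil a ha).length = P.length := by
      rw [← SimpleGraph.Walk.length_append, h3]
    have h5 : (P.dropUntil a ha).length ≠ 0 := by
      intro h0
      exact hab.ne (SimpleGraph.Walk.eq_of_length_eq_zero h0)
    omega
  · right
    have hQ : (P.concat hab.symm).IsPath := isPath_concat hP hab.symm ha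
    have := path_length_eq_dist hT _ hQ
    rw [SimpleGraph.Walk.length_concat, hPl] at this
    omega

lemma parent_unique {r a b w : V} (haw : G.Adj a w) (hbw : G.Adj b w)
    (ha : G.dist r a + 1 = G.dist r w) (hb : G.dist r b + 1 = G.dist r w) : a = b := by
  obtain ⟨Pa, hPa, hPal⟩ := (hT.isConnected).exists_path_of_dist r a
  obtain ⟨Pb, hPb, hPbl⟩ := (hT.isConnected).exists_path_of_dist r b
  have hwa : w ∉ Pa.support := fun hw => by
    have := dist_le_of_mem_support hT hPa hw; omega
  have hwb : w ∉ Pb.support := fun hw => by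
    have := dist_le_of_mem_support hT hPb hw; omega
  have hQa : (Pa.concat haw).IsPath := isPath_concat hPa haw hwa
  have hQb : (Pb.concat hbw).IsPath := isPath_concat hPb hbw hwb
  have heq : Pa.concat haw = Pb.concat hbw := (hT.existsUnique_path r w).unique hQa hQb
  have hone : (Pa.concat haw).getVert (G.dist r a) = a := by
    rw [SimpleGraph.Walk.concat_eq_append, SimpleGraph.Walk.getVert_append]
    simp [hPal]
  have htwo : (Pb.concat hbw).getVert (G.dist r a) = b := by
    have hab : G.dist r a = G.dist r b := by omega
    rw [SimpleGraph.Walk.concat_eq_append, SimpleGraph.Walk.getVert_append]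
    simp [hPbl, hab]
  rw [← hone, heq, htwo]

end Stmt7Aux

/-- Every DiTTR instance with odd period Δ and minimum slack k
satisfying Δ ≤ k + 1, and every instance with even period Δ and Δ ≤ k + 2, is
feasible (minimum slack k means D u v ≥ d̂(u,v) + k for all pairs u ≠ v). -/
theorem stmt7 {V : Type} (G : SimpleGraph V) (hT : G.IsTree)
    (Δ k : ℕ) (hΔ : 1 ≤ Δ)
    (hcase : (Odd Δ ∧ Δ ≤ k + 1) ∨ (Even Δ ∧ Δ ≤ k + 2))
    (D : V → V → ℕ) (hD : ∀ u v, u ≠ v → G.dist u v + k ≤ D u v) :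
    ∃ lab : V → V → ℕ, (∀ a b, lab a b < Δ) ∧
      ∀ u v : V, u ≠ v →
        ∃ p : TempPath V G.Adj lab Δ u v, p.duration ≤ D u v := by
  classical
  by_cases hV : Nonempty V
  case neg =>
    exact ⟨fun _ _ => 0, fun _ _ => hΔ, fun u v _ => absurd ⟨u⟩ hV⟩
  obtain ⟨r⟩ := hV
  refine ⟨fun a b => if G.dist r b = G.dist r a + 1 then G.dist r a % Δ
      else (G.dist r a * (Δ - 1)) % Δ,
    fun a b => ?_, ?_⟩
  · dsimp only; split_ifs <;> exact Nat.mod_lt _ hΔ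
  intro u v huv
  obtain ⟨W, hWp, hWl⟩ := (hT.isConnected).exists_path_of_dist u v
  set g : ℕ → V := W.getVert with hg
  set n := W.length with hn
  have hn1 : 1 ≤ n := by
    have := (hT.isConnected).pos_dist_of_ne huv
    omega
  have hstep : ∀ i < n, G.dist r (g (i+1)) = G.dist r (g i) + 1 ∨
      G.dist r (g i) = G.dist r (g (i+1)) + 1 :=
    fun i hi => Stmt7Aux.dist_step hT (W.adj_getVert_succ hi)
  have hinj : ∀ i j, i ≤ n → j ≤ n → g i = g j → i = j :=
    fun i j hi hj => Stmt7Aux.getVert_injOn hWp i j hi hj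
  have hmono : ∀ i, i + 1 < n → G.dist r (g (i+1)) = G.dist r (g i) + 1 →
      G.dist r (g (i+2)) = G.dist r (g (i+1)) + 1 := by
    intro i hi hdowni
    rcases hstep (i+1) hi with h | h
    · exact h
    · exfalso
      have h1 : G.Adj (g i) (g (i+1)) := W.adj_getVert_succ (by omega)
      have h2 : G.Adj (g (i+2)) (g (i+1)) := (W.adj_getVert_succ hi).symm
      have e : G.dist r (g (i+1+1)) = G.dist r (g (i+2)) := rfl
      have heq := Stmt7Aux.parent_unique hT (r := r) h1 h2
        (by omega) (by omega)
      have := hinj i (i+2) (by omega) (by omega) heq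
      omega
  set m : ℕ := if h : ∃ i, i < n ∧ G.dist r (g (i+1)) = G.dist r (g i) + 1
    then Nat.find h else n with hm
  have hmn : m ≤ n := by
    rw [hm]; split
    · next h => exact le_of_lt (Nat.find_spec h).1
    · exact le_rfl
  have hup : ∀ i < m, G.dist r (g i) = G.dist r (g (i+1)) + 1 := by
    intro i hi
    have hin : i < n := lt_of_lt_of_le hi hmn
    rcases hstep i hin with h | h
    · exfalso
      rw [hm] at hi
      split at hi
      · next hex => exact Nat.find_min hex hi ⟨hin, h⟩
      · next hex => exact hex ⟨i, hin, h⟩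
    · exact h
  have hbase : m < n → G.dist r (g (m+1)) = G.dist r (g m) + 1 := by
    intro hmlt
    by_cases hex : ∃ i, i < n ∧ G.dist r (g (i+1)) = G.dist r (g i) + 1
    · have he : m = Nat.find hex := by rw [hm, dif_pos hex]
      rw [he]; exact (Nat.find_spec hex).2
    · exfalso; rw [hm, dif_neg hex] at hmlt; omega
  have hdown0 : ∀ j, m + j < n → G.dist r (g (m + j + 1)) = G.dist r (g (m + j)) + 1 := by
    intro j
    induction j with
    | zero => intro hj; exact hbase hj
    | succ j ih =>
      intro hj
      have h1 := ih (by omega)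
      exact hmono (m + j) (by omega) h1
  have hdown : ∀ i, m ≤ i → i < n → G.dist r (g (i+1)) = G.dist r (g i) + 1 := by
    intro i hmi hin
    have h := hdown0 (i - m) (by omega)
    have hmi' : m + (i - m) = i := by omega
    rw [hmi'] at h; exact h
  have hA : ∀ i, i ≤ m → G.dist r (g i) + i = G.dist r (g 0) := by
    intro i
    induction i with
    | zero => intro _; rfl
    | succ j ih =>
      intro hj
      have h1 := hup j (by omega)
      have h2 := ih (by omega)
      omega
  have hB0 : ∀ j, m + j ≤ n → G.dist r (g (m + j)) = G.dist r (g m) + j := by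
    intro j
    induction j with
    | zero => intro _; rfl
    | succ j ih =>
      intro hj
      have h1 := ih (by omega)
      have h2 := hdown (m + j) (by omega) (by omega)
      have e : G.dist r (g (m + (j+1))) = G.dist r (g (m + j + 1)) := rfl
      omega
  have hB : ∀ i, m ≤ i → i ≤ n → G.dist r (g i) + m = G.dist r (g m) + i := by
    intro i hmi hin
    have h := hB0 (i - m) (by omega)
    have e : m + (i - m) = i := by omega
    rw [e] at h
    omega
  obtain ⟨w, hwdef⟩ : ∃ x, x = (2 * G.dist r (g m)) % Δ := ⟨_, rfl⟩
  obtain ⟨t0, ht0⟩ : ∃ x, x = G.dist r (g 0) * (Δ - 1) := ⟨_, rfl⟩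
  have hwΔ : w < Δ := hwdef ▸ Nat.mod_lt _ hΔ
  have hwk : w ≤ k := by
    rcases hcase with ⟨hodd, hk⟩ | ⟨heven, hk⟩
    · omega
    · have h2 : (2 : ℕ) ∣ Δ := heven.two_dvd
      have h3 : w % 2 = 0 := by
        rw [hwdef, Nat.mod_mod_of_dvd _ h2]
        omega
      omega
  set t : ℕ → ℕ := fun i => t0 + i + (if i < m then 0 else w) with ht
  have hΔ0 : ((Δ : ℕ) : ZMod Δ) = 0 := ZMod.natCast_self Δ
  have hlab : ∀ i, i < n → t i % Δ =
      (if G.dist r (g (i+1)) = G.dist r (g i) + 1 then G.dist r (g i) % Δ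
        else (G.dist r (g i) * (Δ - 1)) % Δ) % Δ := by
    intro i hin
    rcases Nat.lt_or_ge i m with him | him
    · have hu := hup i him
      rw [if_neg (by omega)]
      rw [← ZMod.natCast_eq_natCast_iff']
      have hAi : G.dist r (g i) + i = G.dist r (g 0) := hA i (by omega)
      have hAc : ((G.dist r (g i) : ZMod Δ) + (i : ℕ)) = ((G.dist r (g 0) : ℕ) : ZMod Δ) := by
        exact_mod_cast congrArg (Nat.cast : ℕ → ZMod Δ) hAi
      rw [ht]
      simp only [if_pos him, ht0]
      push_cast [ZMod.natCast_mod, Nat.cast_sub hΔ]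
      rw [hΔ0]
      linear_combination hAc
    · have hdn := hdown i him hin
      rw [if_pos hdn]
      rw [← ZMod.natCast_eq_natCast_iff']
      have hAm : G.dist r (g m) + m = G.dist r (g 0) := hA m le_rfl
      have hBi : G.dist r (g i) + m = G.dist r (g m) + i := hB i him (by omega)
      have hAc : ((G.dist r (g m) : ZMod Δ) + (m : ℕ)) = ((G.dist r (g 0) : ℕ) : ZMod Δ) := by
        exact_mod_cast congrArg (Nat.cast : ℕ → ZMod Δ) hAm
      have hBc : ((G.dist r (g i) : ZMod Δ) + (m : ℕ)) = (G.dist r (g m) : ZMod Δ) + (i : ℕ) := by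
        exact_mod_cast congrArg (Nat.cast : ℕ → ZMod Δ) hBi
      rw [ht]
      simp only [if_neg (by omega : ¬ i < m), ht0, hwdef]
      push_cast [ZMod.natCast_mod, Nat.cast_sub hΔ]
      rw [hΔ0]
      linear_combination hAc - hBc
  refine ⟨⟨n, hn1, g, t, W.getVert_zero, W.getVert_length,
    fun i j hi hj hne heq => hne (hinj i j hi hj heq),
    fun i hi => W.adj_getVert_succ hi, hlab, ?_⟩, ?_⟩
  · intro i hi
    simp only [ht]
    split_ifs <;> omega
  · show t (n - 1) - t 0 + 1 ≤ D u v
    have hDuv := hD u v huv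
    simp only [ht]
    rw [← hWl] at hDuv
    split_ifs <;> omega
end

section
/- Consider a bidirected tree with a labeling λ under which no waiting time is allowed on any path (i.e., the realized duration between every pair equals the tree distance). Then every branching vertex v (a vertex of total degree at least 6 in the bidirected tree, i.e., at least 3 neighbors) has a common label on all its incoming edges and a common label on all its outgoing edges, and the outgoing label equals the incoming label plus 1 modulo Δ. -/
section Aux

variable {V : Type} {G : SimpleGraph V}

private lemma succ_mod_inj {D s t : ℕ} (hs : s < D) (ht : t < D)
    (h : (s + 1) % D = (t + 1) % D) : s = t := by
  have h2 : s % D = t % D := Nat.ModEq.add_right_cancel' 1 h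
  rwa [Nat.mod_eq_of_lt hs, Nat.mod_eq_of_lt ht] at h2

private lemma mid_eq (hT : G.IsTree) {x v y m : V} (hxv : G.Adj x v) (hvy : G.Adj v y)
    (hxm : G.Adj x m) (hmy : G.Adj m y) (hxy : x ≠ y) : m = v := by
  have hp1 : (SimpleGraph.Walk.cons hxv (SimpleGraph.Walk.cons hvy SimpleGraph.Walk.nil)).IsPath := by
    simp [SimpleGraph.Walk.isPath_def, hxv.ne, hvy.ne, hxy]
  have hp2 : (SimpleGraph.Walk.cons hxm (SimpleGraph.Walk.cons hmy SimpleGraph.Walk.nil)).IsPath := by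
    simp [SimpleGraph.Walk.isPath_def, hxm.ne, hmy.ne, hxy]
  have heq := (hT.existsUnique_path x y).unique hp1 hp2
  have hsupp := congrArg SimpleGraph.Walk.support heq
  simp [SimpleGraph.Walk.support_cons] at hsupp
  exact hsupp.symm

private lemma not_adj_ends (hT : G.IsTree) {x v y : V} (hxv : G.Adj x v) (hvy : G.Adj v y)
    (hxy : x ≠ y) : ¬ G.Adj x y := by
  intro hadj
  have hp1 : (SimpleGraph.Walk.cons hxv (SimpleGraph.Walk.cons hvy SimpleGraph.Walk.nil)).IsPath := by
    simp [SimpleGraph.Walk.isPath_def, hxv.ne, hvy.ne, hxy]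
  have hp2 : (SimpleGraph.Walk.cons hadj SimpleGraph.Walk.nil).IsPath := by
    simp [SimpleGraph.Walk.isPath_def, hxy]
  have heq := (hT.existsUnique_path x y).unique hp1 hp2
  have hlen := congrArg SimpleGraph.Walk.length heq
  simp at hlen

/-- Core lemma: consecutive labels on a path through `v`. -/
private lemma core (hT : G.IsTree) {D : ℕ}
    {lab : V → V → ℕ} (hlab : ∀ a b, G.Adj a b → lab a b < D)
    (hreal : ∀ u v : V, u ≠ v →
      ∃ p : TempPath V G.Adj lab D u v, p.duration = G.dist u v)
    {x v y : V} (hxv : G.Adj x v) (hvy : G.Adj v y) (hxy : x ≠ y) :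
    lab v y = (lab x v + 1) % D := by
  have hnadj : ¬ G.Adj x y := not_adj_ends hT hxv hvy hxy
  have hle : G.dist x y ≤ 2 := by
    have := G.dist_le (SimpleGraph.Walk.cons hxv (SimpleGraph.Walk.cons hvy SimpleGraph.Walk.nil))
    simpa using this
  have hpos : 0 < G.dist x y := hT.isConnected.pos_dist_of_ne hxy
  have hne1 : G.dist x y ≠ 1 := fun h => hnadj (SimpleGraph.dist_eq_one_iff_adj.mp h)
  have hdist : G.dist x y = 2 := by omega
  obtain ⟨p, hp⟩ := hreal x y hxy
  rw [hdist] at hp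
  unfold TempPath.duration at hp
  have mono : ∀ i, i ≤ p.len - 1 → p.time 0 + i ≤ p.time i := by
    intro i hi
    induction i with
    | zero => simp
    | succ n ih =>
      have h1 : n + 1 < p.len := by have := p.len_pos; omega
      have := p.strict n h1
      have := ih (by omega)
      omega
  have hmono := mono (p.len - 1) le_rfl
  have hlen2 : p.len ≤ 2 := by have := p.len_pos; omega
  have hlen : p.len = 2 := by
    rcases Nat.lt_or_ge p.len 2 with h | h
    · exfalso
      have h1 : p.len = 1 := by have := p.len_pos; omega
      have hadj := p.adj 0 (by omega)
      rw [p.source] at hadj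
      have ht : p.vert p.len = y := p.target
      rw [h1] at ht
      rw [show (0 + 1 : ℕ) = 1 from rfl, ht] at hadj
      exact hnadj hadj
    · omega
  have hty : p.vert 2 = y := by
    have ht : p.vert p.len = y := p.target
    rwa [hlen] at ht
  have hv1 : p.vert 1 = v := by
    have ha0 := p.adj 0 (by omega)
    have ha1 := p.adj 1 (by omega)
    rw [p.source] at ha0
    rw [show (1 + 1 : ℕ) = 2 from rfl, hty] at ha1
    exact mid_eq hT hxv hvy ha0 ha1 hxy
  have hstep : p.time 1 = p.time 0 + 1 := by
    have hs := p.strict 0 (by omega)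
    have h0 : p.len - 1 = 1 := by omega
    rw [h0] at hp
    omega
  have hl0 := p.label_mem 0 (by omega)
  have hl1 := p.label_mem 1 (by omega)
  rw [p.source, show (0 + 1 : ℕ) = 1 from rfl, hv1] at hl0
  rw [hv1, show (1 + 1 : ℕ) = 2 from rfl, hty] at hl1
  rw [Nat.mod_eq_of_lt (hlab _ _ hvy)] at hl1
  calc lab v y = p.time 1 % D := hl1.symm
    _ = (p.time 0 + 1) % D := by rw [hstep]
    _ = (lab x v + 1) % D := Nat.ModEq.add_right 1 hl0

end Aux

/-- If a labeling of a bidirected tree realizes all pairwise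
distances exactly (no waiting on any path), then every branching vertex `v`
(at least 3 neighbors) has a common label on all incoming edges, a common
label on all outgoing edges, and the outgoing label equals the incoming label
plus 1 modulo Δ. -/
theorem stmt8 {V : Type} (G : SimpleGraph V) (hT : G.IsTree)
    (Δ : ℕ) (hΔ : 1 ≤ Δ)
    (lab : V → V → ℕ) (hlab : ∀ a b, G.Adj a b → lab a b < Δ)
    (hreal : ∀ u v : V, u ≠ v →
      ∃ p : TempPath V G.Adj lab Δ u v, p.duration = G.dist u v)
    (v : V)
    (hbranch : ∃ a b c : V, a ≠ b ∧ a ≠ c ∧ b ≠ c ∧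
      G.Adj a v ∧ G.Adj b v ∧ G.Adj c v) :
    ∀ w w' : V, G.Adj w v → G.Adj w' v →
      lab w v = lab w' v ∧ lab v w = lab v w' ∧
      lab v w = (lab w v + 1) % Δ := by
  obtain ⟨a, b, c, hab, hac, hbc, ha, hb, hc⟩ := hbranch
  have key : ∀ x y : V, G.Adj x v → G.Adj y v → x ≠ y →
      lab v y = (lab x v + 1) % Δ := fun x y hx hy hxy =>
    core hT hlab hreal hx hy.symm hxy
  have L1 : ∀ w : V, G.Adj w v → lab v w = (lab w v + 1) % Δ := by
    intro w hw
    obtain ⟨x, y, hxy, hxw, hyw, hx, hy⟩ :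
        ∃ x y : V, x ≠ y ∧ x ≠ w ∧ y ≠ w ∧ G.Adj x v ∧ G.Adj y v := by
      by_cases h1 : a = w
      · subst h1; exact ⟨b, c, hbc, Ne.symm hab, Ne.symm hac, hb, hc⟩
      · by_cases h2 : b = w
        · subst h2; exact ⟨a, c, hac, h1, Ne.symm hbc, ha, hc⟩
        · exact ⟨a, b, hab, h1, h2, ha, hb⟩
    have e2 : lab v w = (lab y v + 1) % Δ := key y w hy hw hyw
    have e3 : lab v x = (lab w v + 1) % Δ := key w x hw hx (Ne.symm hxw)
    have e4 : lab v x = (lab y v + 1) % Δ := key y x hy hx (Ne.symm hxy)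
    have hwy : lab w v = lab y v :=
      succ_mod_inj (hlab _ _ hw) (hlab _ _ hy) (e3.symm.trans e4)
    rw [e2, ← hwy]
  intro w w' hw hw'
  refine ⟨?_, ?_, L1 w hw⟩
  · by_cases h : w = w'
    · rw [h]
    · have e1 : lab v w' = (lab w v + 1) % Δ := key w w' hw hw' h
      have e2 : lab v w' = (lab w' v + 1) % Δ := L1 w' hw'
      exact succ_mod_inj (hlab _ _ hw) (hlab _ _ hw') (e1.symm.trans e2)
  · by_cases h : w = w'
    · rw [h]
    · obtain ⟨x, hxw, hxw', hx⟩ : ∃ x, x ≠ w ∧ x ≠ w' ∧ G.Adj x v := by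
        by_cases h1 : a ≠ w ∧ a ≠ w'
        · exact ⟨a, h1.1, h1.2, ha⟩
        · by_cases h2 : b ≠ w ∧ b ≠ w'
          · exact ⟨b, h2.1, h2.2, hb⟩
          · have ha' : a = w ∨ a = w' := by tauto
            have hb' : b = w ∨ b = w' := by tauto
            refine ⟨c, ?_, ?_, hc⟩ <;> rcases ha' with rfl | rfl <;>
              rcases hb' with rfl | rfl <;>
              first
                | exact (hab rfl).elim
                | exact Ne.symm hac
                | exact Ne.symm hbc
      rw [key x w hx hw hxw, key x w' hx hw' hxw']
end

section
/- An instance of DiTTR with D_{u,v} = d̂(u,v) for all pairs (exact realization, no waiting allowed) is realizable if and only if the tree distance between every pair of branching vertices (vertices with at least 3 neighbors) is a multiple of Δ/2, i.e., 2·d̂(y,z) ≡ 0 (mod Δ) for all branching vertices y, z. -/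
namespace Stmt9Aux
open SimpleGraph Walk

variable {V : Type} {G : SimpleGraph V}

lemma dist_getVert_le (hc : G.Connected) :
    ∀ {u v : V} (w : G.Walk u v) (i : ℕ), G.dist u (w.getVert i) ≤ i := by
  intro u v w
  induction w with
  | nil =>
    intro i
    rw [Walk.getVert_of_length_le _ (by simp)]
    simp [SimpleGraph.dist_self]
  | @cons a b c h q ih =>
    intro i
    cases i with
    | zero => simp [SimpleGraph.dist_self]
    | succ n =>
      rw [Walk.getVert_cons_succ]
      calc G.dist a (q.getVert n) ≤ G.dist a b + G.dist b (q.getVert n) := hc.dist_triangle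
        _ ≤ 1 + n := by
            have h1 : G.dist a b = 1 := SimpleGraph.dist_eq_one_iff_adj.mpr h
            have h2 := ih n
            omega
        _ = n + 1 := by omega

lemma dist_getVert_right_le :
    ∀ {u v : V} (w : G.Walk u v) (i : ℕ), G.dist (w.getVert i) v ≤ w.length - i := by
  intro u v w
  induction w with
  | nil =>
    intro i
    rw [Walk.getVert_of_length_le _ (by simp)]
    simp [SimpleGraph.dist_self]
  | @cons a b c h q ih =>
    intro i
    cases i with
    | zero =>
      simpa using SimpleGraph.dist_le (Walk.cons h q)
    | succ n =>
      rw [Walk.getVert_cons_succ]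
      have := ih n
      simp only [Walk.length_cons]
      omega

lemma geo_getVert (hc : G.Connected) {u v : V} (w : G.Walk u v)
    (hw : w.length = G.dist u v) {i : ℕ} (hi : i ≤ w.length) :
    G.dist u (w.getVert i) = i := by
  have h1 := dist_getVert_le hc w i
  have h2 := dist_getVert_right_le w i
  have h3 := hc.dist_triangle (u := u) (v := w.getVert i) (w := v)
  omega

lemma exists_geo (hc : G.Connected) (u v : V) :
    ∃ w : G.Walk u v, w.IsPath ∧ w.length = G.dist u v := by
  classical
  obtain ⟨w, hw⟩ := (hc u v).exists_walk_length_eq_dist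
  refine ⟨w.bypass, w.bypass_isPath, le_antisymm ?_ (SimpleGraph.dist_le _)⟩
  calc w.bypass.length ≤ w.length := Walk.length_bypass_le w
    _ = G.dist u v := hw

lemma adj_dist_ne (hT : G.IsTree) (r : V) {u v : V} (h : G.Adj u v) :
    G.dist r u ≠ G.dist r v := by
  have hc := hT.isConnected
  intro he
  obtain ⟨p, hp, hl⟩ := exists_geo hc r u
  have hvs : v ∉ p.support := by
    intro hv
    obtain ⟨n, hn, hnle⟩ := Walk.mem_support_iff_exists_getVert.mp hv
    have hg := geo_getVert hc p hl hnle
    rw [hn] at hg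
    have : n = p.length := by omega
    rw [this, Walk.getVert_length] at hn
    exact h.ne hn
  have hq : (p.concat h).IsPath := by
    rw [← Walk.isPath_reverse_iff, Walk.reverse_concat]
    exact hp.reverse.cons (by simpa [Walk.support_reverse] using hvs)
  obtain ⟨p', hp', hl'⟩ := exists_geo hc r v
  have heq : p.concat h = p' := (hT.existsUnique_path r v).unique hq hp'
  have : (p.concat h).length = p'.length := by rw [heq]
  rw [Walk.length_concat, hl, hl'] at this
  omega

lemma adj_dist_cases (hT : G.IsTree) (r : V) {u v : V} (h : G.Adj u v) :
    G.dist r v = G.dist r u + 1 ∨ G.dist r u = G.dist r v + 1 := by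
  have hc := hT.isConnected
  have h1 : G.dist u v = 1 := SimpleGraph.dist_eq_one_iff_adj.mpr h
  have h2 : G.dist v u = 1 := SimpleGraph.dist_eq_one_iff_adj.mpr h.symm
  have t1 := hc.dist_triangle (u := r) (v := u) (w := v)
  have t2 := hc.dist_triangle (u := r) (v := v) (w := u)
  have hne := adj_dist_ne hT r h
  omega

lemma parent_exists (hT : G.IsTree) {r y : V} (hy : y ≠ r) :
    ∃ x, G.Adj x y ∧ G.dist r x + 1 = G.dist r y := by
  have hc := hT.isConnected
  obtain ⟨p, hp, hl⟩ := exists_geo hc r y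
  have hd : 1 ≤ p.length := by
    have : G.dist r y ≠ 0 := by
      intro h0
      exact hy (hc.dist_eq_zero_iff.mp h0).symm
    omega
  refine ⟨p.getVert (p.length - 1), ?_, ?_⟩
  · have := p.adj_getVert_succ (show p.length - 1 < p.length by omega)
    rw [show p.length - 1 + 1 = p.length by omega, p.getVert_length] at this
    exact this
  · have hg := geo_getVert hc p hl (show p.length - 1 ≤ p.length by omega)
    omega

lemma parent_unique (hT : G.IsTree) {r y x z : V} (hx : G.Adj x y) (hz : G.Adj z y)
    (hdx : G.dist r x + 1 = G.dist r y) (hdz : G.dist r z + 1 = G.dist r y) : x = z := by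
  have hc := hT.isConnected
  obtain ⟨p, hp, hl⟩ := exists_geo hc r x
  obtain ⟨q, hq, hql⟩ := exists_geo hc r z
  have hyp : y ∉ p.support := by
    intro hv
    obtain ⟨n, hn, hnle⟩ := Walk.mem_support_iff_exists_getVert.mp hv
    have hg := geo_getVert hc p hl hnle
    rw [hn] at hg
    omega
  have hyq : y ∉ q.support := by
    intro hv
    obtain ⟨n, hn, hnle⟩ := Walk.mem_support_iff_exists_getVert.mp hv
    have hg := geo_getVert hc q hql hnle
    rw [hn] at hg
    omega
  have h1 : (p.concat hx).IsPath := by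
    rw [← Walk.isPath_reverse_iff, Walk.reverse_concat]
    exact hp.reverse.cons (by simpa [Walk.support_reverse] using hyp)
  have h2 : (q.concat hz).IsPath := by
    rw [← Walk.isPath_reverse_iff, Walk.reverse_concat]
    exact hq.reverse.cons (by simpa [Walk.support_reverse] using hyq)
  have heq : p.concat hx = q.concat hz := (hT.existsUnique_path r y).unique h1 h2
  have hxs : x ∈ (q.concat hz).support := by
    rw [← heq, Walk.support_concat, List.mem_append]
    exact Or.inl (Walk.end_mem_support p)
  rw [Walk.support_concat, List.mem_append] at hxs
  rcases hxs with hmem | hxy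
  · obtain ⟨n, hn, hnle⟩ := Walk.mem_support_iff_exists_getVert.mp hmem
    have hg := geo_getVert hc q hql hnle
    rw [hn] at hg
    have : n = q.length := by omega
    rw [this, Walk.getVert_length] at hn
    exact hn.symm
  · simp at hxy
    subst hxy
    omega

end Stmt9Aux
namespace Stmt9Aux
open SimpleGraph Walk

variable {V : Type} {G : SimpleGraph V}

lemma walk_of_chain : ∀ (n : ℕ) (f : ℕ → V), (∀ i, i < n → G.Adj (f i) (f (i+1))) →
    ∃ w : G.Walk (f 0) (f n), w.length = n := by
  intro n
  induction n with
  | zero => exact fun f _ => ⟨Walk.nil, rfl⟩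
  | succ m ih =>
    intro f hf
    obtain ⟨w, hw⟩ := ih f (fun i hi => hf i (by omega))
    exact ⟨w.concat (hf m (by omega)), by rw [Walk.length_concat, hw]⟩

lemma temp_exact {lab : V → V → ℕ} {Δ : ℕ} {u v : V} (hc : G.Connected)
    (p : TempPath V G.Adj lab Δ u v) (hd : p.duration = G.dist u v) :
    p.len = G.dist u v ∧ ∀ i, i ≤ p.len - 1 → p.time i = p.time 0 + i := by
  obtain ⟨w, hw⟩ := walk_of_chain p.len p.vert p.adj
  have hdle : G.dist u v ≤ p.len := by
    have h := SimpleGraph.dist_le w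
    have h2 : G.dist u v = G.dist (p.vert 0) (p.vert p.len) := by rw [p.source, p.target]
    omega
  have hmono : ∀ k j, j + k ≤ p.len - 1 → p.time j + k ≤ p.time (j + k) := by
    intro k
    induction k with
    | zero => intro j _; simp
    | succ m ih =>
      intro j hj
      have h1 := ih j (by omega)
      have h2 := p.strict (j + m) (by have := p.len_pos; omega)
      have he : j + (m + 1) = (j + m) + 1 := by omega
      rw [he]
      omega
  have hkey : p.time 0 + (p.len - 1) ≤ p.time (p.len - 1) := by
    have := hmono (p.len - 1) 0 (by omega)
    simpa using this
  have hlp := p.len_pos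
  unfold TempPath.duration at hd
  have hlen : p.len = G.dist u v := by omega
  refine ⟨hlen, fun i hi => ?_⟩
  have h1 := hmono i 0 (by omega)
  have h2 := hmono (p.len - 1 - i) i (by omega)
  have he : i + (p.len - 1 - i) = p.len - 1 := by omega
  rw [he] at h2
  simp only [Nat.zero_add] at h1
  omega

lemma through (hT : G.IsTree) {lab : V → V → ℕ} {Δ : ℕ}
    (hreal : ∀ u v : V, u ≠ v → ∃ p : TempPath V G.Adj lab Δ u v, p.duration = G.dist u v)
    {x y z : V} (hxy : G.Adj x y) (hyz : G.Adj y z) (hxz : x ≠ z) :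
    (lab y z : ZMod Δ) = (lab x y : ZMod Δ) + 1 := by
  have hc := hT.isConnected
  have hd2 : G.dist x z = 2 := by
    have hne := adj_dist_ne hT x hyz
    have h1 : G.dist x y = 1 := SimpleGraph.dist_eq_one_iff_adj.mpr hxy
    have h2 : G.dist y z = 1 := SimpleGraph.dist_eq_one_iff_adj.mpr hyz
    have hle := hc.dist_triangle (u := x) (v := y) (w := z)
    have h0 : G.dist x z ≠ 0 := fun h0 => hxz (hc.dist_eq_zero_iff.mp h0)
    omega
  obtain ⟨p, hp⟩ := hreal x z hxz
  obtain ⟨hlen, htime⟩ := temp_exact hc p hp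
  rw [hd2] at hlen
  have ha0 : G.Adj (p.vert 0) (p.vert 1) := p.adj 0 (by omega)
  have ha1 : G.Adj (p.vert 1) (p.vert 2) := p.adj 1 (by omega)
  have htgt : p.vert 2 = z := by rw [← hlen]; exact p.target
  have ha0' : G.Adj x (p.vert 1) := by
    have h := ha0; rw [p.source] at h; exact h
  have ha1' : G.Adj (p.vert 1) z := by
    have h := ha1; rw [htgt] at h; exact h
  -- middle vertex is y
  have hm : p.vert 1 = y := by
    have hw1 : (Walk.cons hxy (Walk.cons hyz Walk.nil) : G.Walk x z).IsPath := by
      simp [Walk.isPath_def, hxy.ne, hyz.ne, hxz]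
    have hw2 : (Walk.cons ha0' (Walk.cons ha1' Walk.nil) : G.Walk x z).IsPath := by
      simp [Walk.isPath_def, ha0'.ne, ha1'.ne, hxz]
    have heq := (hT.existsUnique_path x z).unique hw1 hw2
    have := congrArg (fun w : G.Walk x z => w.getVert 1) heq
    simpa using this.symm
  have hl0 := p.label_mem 0 (by omega)
  have hl1 := p.label_mem 1 (by omega)
  rw [p.source, hm] at hl0
  rw [hm] at hl1
  rw [show p.vert (1+1) = z from htgt] at hl1
  have ht1 : p.time 1 = p.time 0 + 1 := htime 1 (by omega)
  have e0 : ((p.time 0 : ℕ) : ZMod Δ) = (lab x y : ZMod Δ) :=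
    (ZMod.natCast_eq_natCast_iff' _ _ _).mpr hl0
  have e1 : ((p.time 1 : ℕ) : ZMod Δ) = (lab y z : ZMod Δ) :=
    (ZMod.natCast_eq_natCast_iff' _ _ _).mpr hl1
  rw [← e1, ht1]
  push_cast
  rw [e0]

lemma label_step (hT : G.IsTree) (Δ : ℕ) (r : V)
    (H : ∀ y : V, (∃ a b c : V, a ≠ b ∧ a ≠ c ∧ b ≠ c ∧
        G.Adj a y ∧ G.Adj b y ∧ G.Adj c y) → (2 * G.dist r y) % Δ = 0)
    {x y z : V} (hxy : G.Adj x y) (hyz : G.Adj y z) (hxz : x ≠ z) :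
    (if G.dist r z = G.dist r y + 1 then ((G.dist r y : ℕ) : ZMod Δ) else -(G.dist r y : ℕ)) =
    (if G.dist r y = G.dist r x + 1 then ((G.dist r x : ℕ) : ZMod Δ) else -(G.dist r x : ℕ)) + 1 := by
  rcases adj_dist_cases hT r hxy with h1 | h1 <;> rcases adj_dist_cases hT r hyz with h2 | h2
  · rw [if_pos h2, if_pos h1, h1]; push_cast; ring
  · exact absurd (parent_unique hT (r := r) hxy hyz.symm (by omega) (by omega)) hxz
  · -- x child of y (dist r x = dist r y + 1), z away (dist r z = dist r y + 1)
    rw [if_pos h2, if_neg (by omega)]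
    have h2d : ((2 * G.dist r y : ℕ) : ZMod Δ) = 0 := by
      by_cases hyr : y = r
      · subst hyr; simp [SimpleGraph.dist_self]
      · obtain ⟨w, hwadj, hwd⟩ := parent_exists hT hyr
        have hxw : x ≠ w := by intro h; subst h; omega
        have hzw : z ≠ w := by intro h; subst h; omega
        have := H y ⟨x, z, w, hxz, hxw, hzw, hxy, hyz.symm, hwadj⟩
        exact (ZMod.natCast_eq_zero_iff _ _).mpr (Nat.dvd_of_mod_eq_zero this)
    rw [h1]
    push_cast at h2d ⊢
    linear_combination h2d
  · rw [if_neg (by omega), if_neg (by omega), h1]; push_cast; ring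

end Stmt9Aux
namespace Stmt9Aux

variable {V : Type} {G : SimpleGraph V}

noncomputable def labZ (G : SimpleGraph V) (Δ : ℕ) (r a b : V) : ZMod Δ :=
  if G.dist r b = G.dist r a + 1 then ((G.dist r a : ℕ) : ZMod Δ) else -(G.dist r a : ℕ)

lemma labZ_step (hT : G.IsTree) (Δ : ℕ) (r : V)
    (H : ∀ y : V, (∃ a b c : V, a ≠ b ∧ a ≠ c ∧ b ≠ c ∧
        G.Adj a y ∧ G.Adj b y ∧ G.Adj c y) → (2 * G.dist r y) % Δ = 0)
    {x y z : V} (hxy : G.Adj x y) (hyz : G.Adj y z) (hxz : x ≠ z) :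
    labZ G Δ r y z = labZ G Δ r x y + 1 := by
  unfold labZ
  exact label_step hT Δ r H (x := x) (y := y) (z := z) hxy hyz hxz

lemma chain_label (hT : G.IsTree) (Δ : ℕ) (r : V)
    (H : ∀ y : V, (∃ a b c : V, a ≠ b ∧ a ≠ c ∧ b ≠ c ∧
        G.Adj a y ∧ G.Adj b y ∧ G.Adj c y) → (2 * G.dist r y) % Δ = 0)
    {u v : V} (w : G.Walk u v) (hwl : w.length = G.dist u v) :
    ∀ i, i < w.length →
      labZ G Δ r (w.getVert i) (w.getVert (i + 1)) =
        labZ G Δ r (w.getVert 0) (w.getVert 1) + (i : ℕ) := by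
  have hc := hT.isConnected
  intro i
  induction i with
  | zero => intro _; simp
  | succ n ih =>
    intro hi
    have h1 : n < w.length := by omega
    have ha1 : G.Adj (w.getVert n) (w.getVert (n + 1)) := w.adj_getVert_succ h1
    have ha2 : G.Adj (w.getVert (n + 1)) (w.getVert (n + 2)) := w.adj_getVert_succ hi
    have hne : w.getVert n ≠ w.getVert (n + 2) := by
      intro he
      have g1 := geo_getVert hc w hwl (i := n) (by omega)
      have g2 := geo_getVert hc w hwl (i := n + 2) (by omega)
      rw [he] at g1
      omega
    have := labZ_step hT Δ r H ha1 ha2 hne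
    rw [show n + 1 + 1 = n + 2 by omega, this, ih h1]
    push_cast
    ring

end Stmt9Aux


open Stmt9Aux

/-- A DiTTR instance with exact distance constraints
(D u v = d̂(u,v), i.e. no waiting allowed) is realizable iff the tree distance
between every pair of branching vertices (vertices with at least 3 neighbors)
is a multiple of Δ/2, i.e. 2·d̂(y,z) ≡ 0 (mod Δ). -/
theorem stmt9 {V : Type} (G : SimpleGraph V) (hT : G.IsTree)
    (Δ : ℕ) (hΔ : 1 ≤ Δ) :
    (∃ lab : V → V → ℕ, (∀ a b, lab a b < Δ) ∧
        ∀ u v : V, u ≠ v →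
          ∃ p : TempPath V G.Adj lab Δ u v, p.duration = G.dist u v)
    ↔ (∀ y z : V,
        (∃ a b c : V, a ≠ b ∧ a ≠ c ∧ b ≠ c ∧
          G.Adj a y ∧ G.Adj b y ∧ G.Adj c y) →
        (∃ a b c : V, a ≠ b ∧ a ≠ c ∧ b ≠ c ∧
          G.Adj a z ∧ G.Adj b z ∧ G.Adj c z) →
        (2 * G.dist y z) % Δ = 0) := by
  have hc := hT.isConnected
  constructor
  · rintro ⟨lab, hbound, hreal⟩ y z hy hz
    by_cases hyz : y = z
    · subst hyz; simp [SimpleGraph.dist_self]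
    obtain ⟨a, b, c, hab, hac, hbc, ha, hb, hcc⟩ := hy
    obtain ⟨a', b', c', hab', hac', hbc', ha', hb', hcc'⟩ := hz
    have pick : ∀ x : V, ∃ w, G.Adj w y ∧ w ≠ x ∧ w ≠ a := by
      intro x
      rcases eq_or_ne b x with rfl | hbx
      · exact ⟨c, hcc, fun h => hbc h.symm, fun h => hac h.symm⟩
      · exact ⟨b, hb, hbx, fun h => hab h.symm⟩
    have pick' : ∀ x : V, ∃ w, G.Adj w z ∧ w ≠ x ∧ w ≠ a' := by
      intro x
      rcases eq_or_ne b' x with rfl | hbx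
      · exact ⟨c', hcc', fun h => hbc' h.symm, fun h => hac' h.symm⟩
      · exact ⟨b', hb', hbx, fun h => hab' h.symm⟩
    have hin : ∀ x, G.Adj x y → (lab x y : ZMod Δ) = (lab a y : ZMod Δ) := by
      intro x hx
      rcases eq_or_ne x a with rfl | hxa
      · rfl
      obtain ⟨w, hw, hwx, hwa⟩ := pick x
      have e1 := through hT hreal hx hw.symm (fun h => hwx h.symm)
      have e2 := through hT hreal ha hw.symm (fun h => hwa h.symm)
      exact add_right_cancel (e1.symm.trans e2)
    have hout : ∀ x, G.Adj x y → (lab y x : ZMod Δ) = (lab a y : ZMod Δ) + 1 := by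
      intro x hx
      obtain ⟨w, hw, hwx, _⟩ := pick x
      have e1 := through hT hreal hw hx.symm hwx
      rw [e1, hin w hw]
    have hin' : ∀ x, G.Adj x z → (lab x z : ZMod Δ) = (lab a' z : ZMod Δ) := by
      intro x hx
      rcases eq_or_ne x a' with rfl | hxa
      · rfl
      obtain ⟨w, hw, hwx, hwa⟩ := pick' x
      have e1 := through hT hreal hx hw.symm (fun h => hwx h.symm)
      have e2 := through hT hreal ha' hw.symm (fun h => hwa h.symm)
      exact add_right_cancel (e1.symm.trans e2)
    have hout' : ∀ x, G.Adj x z → (lab z x : ZMod Δ) = (lab a' z : ZMod Δ) + 1 := by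
      intro x hx
      obtain ⟨w, hw, hwx, _⟩ := pick' x
      have e1 := through hT hreal hw hx.symm hwx
      rw [e1, hin' w hw]
    have main : ∀ (s t : V) (Ts Tt : ZMod Δ), s ≠ t →
        (∀ x, G.Adj x s → (lab s x : ZMod Δ) = Ts + 1) →
        (∀ x, G.Adj x t → (lab x t : ZMod Δ) = Tt) →
        Tt = Ts + ((G.dist s t : ℕ) : ZMod Δ) := by
      intro s t Ts Tt hst hs ht
      obtain ⟨p, hp⟩ := hreal s t hst
      obtain ⟨hlen, htime⟩ := temp_exact hc p hp
      have hd1 : 1 ≤ G.dist s t := hc.pos_dist_of_ne hst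
      have hl0 := p.label_mem 0 (by omega)
      have had0 : G.Adj (p.vert 0) (p.vert 1) := p.adj 0 (by omega)
      have had0' : G.Adj s (p.vert 1) := by
        have h := had0; rw [p.source] at h; exact h
      rw [p.source] at hl0
      have e0 : ((p.time 0 : ℕ) : ZMod Δ) = Ts + 1 := by
        rw [(ZMod.natCast_eq_natCast_iff' _ _ _).mpr hl0]
        exact hs _ had0'.symm
      have hl1 := p.label_mem (p.len - 1) (by omega)
      have hadL : G.Adj (p.vert (p.len - 1)) (p.vert (p.len - 1 + 1)) :=
        p.adj _ (by omega)
      have hvl : p.vert (p.len - 1 + 1) = t := by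
        rw [show p.len - 1 + 1 = p.len by omega]; exact p.target
      rw [hvl] at hl1 hadL
      have eL : ((p.time (p.len - 1) : ℕ) : ZMod Δ) = Tt := by
        rw [(ZMod.natCast_eq_natCast_iff' _ _ _).mpr hl1]
        exact ht _ hadL
      have htL : p.time (p.len - 1) = p.time 0 + (p.len - 1) := htime _ (by omega)
      rw [htL] at eL
      push_cast at eL
      rw [e0] at eL
      have he : (1 : ℕ) + (p.len - 1) = G.dist s t := by omega
      calc Tt = Ts + 1 + ((p.len - 1 : ℕ) : ZMod Δ) := eL.symm
        _ = Ts + (((1 + (p.len - 1) : ℕ)) : ZMod Δ) := by push_cast; ring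
        _ = Ts + ((G.dist s t : ℕ) : ZMod Δ) := by rw [he]
    have m1 := main y z (lab a y) (lab a' z) hyz hout hin'
    have m2 := main z y (lab a' z) (lab a y) (Ne.symm hyz) hout' hin
    rw [SimpleGraph.dist_comm] at m2
    have hz0 : ((2 * G.dist y z : ℕ) : ZMod Δ) = 0 := by
      push_cast
      linear_combination - m1 - m2
    have hdvd := (ZMod.natCast_eq_zero_iff _ _).mp hz0
    omega
  · intro Hbr
    classical
    haveI : NeZero Δ := ⟨by omega⟩
    obtain ⟨r, H⟩ : ∃ r : V, ∀ y : V, (∃ a b c : V, a ≠ b ∧ a ≠ c ∧ b ≠ c ∧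
        G.Adj a y ∧ G.Adj b y ∧ G.Adj c y) → (2 * G.dist r y) % Δ = 0 := by
      by_cases hex : ∃ y : V, ∃ a b c : V, a ≠ b ∧ a ≠ c ∧ b ≠ c ∧
          G.Adj a y ∧ G.Adj b y ∧ G.Adj c y
      · obtain ⟨r, hr⟩ := hex
        exact ⟨r, fun y hy => Hbr r y hr hy⟩
      · obtain ⟨r⟩ := hc.nonempty
        exact ⟨r, fun y hy => absurd ⟨y, hy⟩ hex⟩
    refine ⟨fun a b => (labZ G Δ r a b).val, fun a b => ZMod.val_lt _, fun u v huv => ?_⟩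
    obtain ⟨w, hwp, hwl⟩ := exists_geo hc u v
    have hd1 : 1 ≤ G.dist u v := hc.pos_dist_of_ne huv
    have hlen1 : 1 ≤ w.length := by omega
    have hchain := chain_label hT Δ r H w hwl
    set t0 : ℕ := (labZ G Δ r (w.getVert 0) (w.getVert 1)).val with ht0
    refine ⟨⟨w.length, hlen1, w.getVert,
      fun i => t0 + i,
      w.getVert_zero, w.getVert_length, ?_, fun i hi => w.adj_getVert_succ hi, ?_,
      fun i _ => Nat.add_lt_add_left (Nat.lt_succ_self i) t0⟩, ?_⟩
    · intro i j hi hj hij hv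
      have g1 := geo_getVert hc w hwl hi
      have g2 := geo_getVert hc w hwl hj
      rw [hv] at g1
      omega
    · intro i hi
      refine (ZMod.natCast_eq_natCast_iff' _ _ _).mp ?_
      push_cast
      rw [ZMod.natCast_rightInverse _, ZMod.natCast_rightInverse _, hchain i hi]
    · show t0 + (w.length - 1) - (t0 + 0) + 1 = G.dist u v
      omega
end

section
/- Let G=(V,E) be an undirected graph and Δ ≥ 3. Construct a star G' with center u and leaves V, and set D_{v₁,v₂} = Δ for every edge {v₁,v₂} ∈ E and D = ∞ otherwise. Then a labeling λ of the star edges satisfies all constraints D (with respect to fastest strict temporal path durations in the Δ-periodic undirected temporal graph) if and only if λ(u,v₁) ≠ λ(u,v₂) for every edge {v₁,v₂} ∈ E. Consequently G' with D is realizable if and only if G is Δ-colorable. -/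
/-- Adjacency of the star with center `none` and leaves `some v`. -/
def starAdj {V : Type} : Option V → Option V → Prop :=
  fun x y => (x = none ∧ y ≠ none) ∨ (y = none ∧ x ≠ none)

/-- The (undirected) label of the star edge between the center and leaf `v`
is `lab v`, used in both directions. -/
def starLab {V : Type} (lab : V → ℕ) : Option V → Option V → ℕ :=
  fun x y =>
    match x, y with
    | some v, _ => lab v
    | none, some v => lab v
    | none, none => 0


lemma star_path_shape {V : Type} {lab : V → ℕ} {Δ : ℕ} {v₁ v₂ : V}
    (p : TempPath (Option V) starAdj (starLab lab) Δ (some v₁) (some v₂)) :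
    p.len = 2 ∧ p.vert 1 = none := by
  have h0 := p.source
  have hlen := p.len_pos
  have a0 := p.adj 0 hlen
  have h1 : p.vert 1 = none := by
    rcases a0 with ⟨ha, _⟩ | ⟨ha, hb⟩
    · rw [h0] at ha; exact absurd ha (by simp)
    · exact ha
  have hlen2 : 2 ≤ p.len := by
    by_contra h
    have he : p.len = 1 := by omega
    have ht := p.target
    rw [he, h1] at ht
    exact absurd ht (by simp)
  have a1 := p.adj 1 (by omega)
  have h2 : p.vert 2 ≠ none := by
    rcases a1 with ⟨_, hb⟩ | ⟨ha, hb⟩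
    · exact hb
    · rw [h1] at hb; exact absurd rfl hb
  have hlen3 : p.len = 2 := by
    by_contra h
    have h3 : 3 ≤ p.len := by omega
    have a2 := p.adj 2 (by omega)
    have h3n : p.vert 3 = none := by
      rcases a2 with ⟨ha, _⟩ | ⟨ha, _⟩
      · exact absurd ha h2
      · exact ha
    exact p.nodup 1 3 (by omega) (by omega) (by omega) (h1.trans h3n.symm)
  exact ⟨hlen3, h1⟩

lemma star_path_times {V : Type} {lab : V → ℕ} {Δ : ℕ} {v₁ v₂ : V}
    (p : TempPath (Option V) starAdj (starLab lab) Δ (some v₁) (some v₂)) :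
    p.time 0 % Δ = lab v₁ % Δ ∧ p.time 1 % Δ = lab v₂ % Δ ∧
      p.time 0 < p.time 1 ∧ p.duration = p.time 1 - p.time 0 + 1 := by
  obtain ⟨hl, h1⟩ := star_path_shape p
  have hm0 := p.label_mem 0 (by omega)
  have hm1 := p.label_mem 1 (by omega)
  have ht := p.target
  rw [hl] at ht
  rw [p.source, h1] at hm0
  rw [h1, ht] at hm1
  refine ⟨hm0, hm1, p.strict 0 (by omega), ?_⟩
  unfold TempPath.duration
  rw [hl]

lemma star_path_exists {V : Type} (lab : V → ℕ) (Δ : ℕ) (hΔ : 3 ≤ Δ)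
    (v₁ v₂ : V) (hne : v₁ ≠ v₂) (h1 : lab v₁ < Δ) (h2 : lab v₂ < Δ)
    (hlab : lab v₁ ≠ lab v₂) :
    ∃ p : TempPath (Option V) starAdj (starLab lab) Δ (some v₁) (some v₂),
      p.duration ≤ Δ := by
  set t₁ : ℕ := if lab v₁ < lab v₂ then lab v₂ else lab v₂ + Δ with ht₁
  have htgt : lab v₁ < t₁ := by
    rw [ht₁]; split <;> omega
  have htmod : t₁ % Δ = lab v₂ % Δ := by
    rw [ht₁]; split
    · rfl
    · exact Nat.add_mod_right _ _
  refine ⟨⟨2, by omega,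
    fun n => match n with | 0 => some v₁ | 1 => none | _ => some v₂,
    fun n => match n with | 0 => lab v₁ | _ => t₁,
    rfl, rfl, ?_, ?_, ?_, ?_⟩, ?_⟩
  · intro i j hi hj hij
    interval_cases i <;> interval_cases j <;> simp_all <;>
      exact fun h => hne h.symm
  · intro i hi
    interval_cases i
    · right; exact ⟨rfl, Option.some_ne_none v₁⟩
    · left; exact ⟨rfl, Option.some_ne_none v₂⟩
  · intro i hi
    interval_cases i
    · rfl
    · exact htmod
  · intro i hi
    have hi0 : i = 0 := by omega
    subst hi0
    exact htgt
  · show t₁ - lab v₁ + 1 ≤ Δ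
    rw [ht₁]; split <;> omega

/-- For a graph G and Δ ≥ 3, on the star with center u and the
vertices of G as leaves, with constraints D v₁ v₂ = Δ for edges of G (and ∞
otherwise), a labeling of the star edges satisfies all constraints iff
adjacent vertices of G get distinct labels; consequently the star instance is
realizable iff G is Δ-colorable. -/
theorem stmt11 {V : Type} (G : SimpleGraph V) (Δ : ℕ) (hΔ : 3 ≤ Δ) :
    (∀ lab : V → ℕ, (∀ v, lab v < Δ) →
      ((∀ v₁ v₂ : V, G.Adj v₁ v₂ →
          ∃ p : TempPath (Option V) starAdj (starLab lab) Δ (some v₁) (some v₂),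
            p.duration ≤ Δ)
        ↔ (∀ v₁ v₂ : V, G.Adj v₁ v₂ → lab v₁ ≠ lab v₂)))
    ∧ ((∃ lab : V → ℕ, (∀ v, lab v < Δ) ∧
          ∀ v₁ v₂ : V, G.Adj v₁ v₂ →
            ∃ p : TempPath (Option V) starAdj (starLab lab) Δ (some v₁) (some v₂),
              p.duration ≤ Δ)
        ↔ G.Colorable Δ) := by
  constructor
  · intro lab hlt
    constructor
    · intro h v₁ v₂ hadj heq
      obtain ⟨p, hp⟩ := h v₁ v₂ hadj
      obtain ⟨hm0, hm1, hlt01, hdur⟩ := star_path_times p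
      rw [heq] at hm0
      have hdvd : Δ ∣ p.time 1 - p.time 0 :=
        (Nat.modEq_iff_dvd' hlt01.le).mp (hm0.trans hm1.symm)
      have : Δ ≤ p.time 1 - p.time 0 := Nat.le_of_dvd (by omega) hdvd
      omega
    · intro h v₁ v₂ hadj
      exact star_path_exists lab Δ hΔ v₁ v₂ (G.ne_of_adj hadj) (hlt v₁)
        (hlt v₂) (h v₁ v₂ hadj)
  · constructor
    · rintro ⟨lab, hlt, h⟩
      refine ⟨SimpleGraph.Coloring.mk (fun v => ⟨lab v, hlt v⟩) ?_⟩
      intro v₁ v₂ hadj heq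
      obtain ⟨p, hp⟩ := h v₁ v₂ hadj
      obtain ⟨hm0, hm1, hlt01, hdur⟩ := star_path_times p
      have heq' : lab v₁ = lab v₂ := congrArg Fin.val heq
      rw [heq'] at hm0
      have hdvd : Δ ∣ p.time 1 - p.time 0 :=
        (Nat.modEq_iff_dvd' hlt01.le).mp (hm0.trans hm1.symm)
      have : Δ ≤ p.time 1 - p.time 0 := Nat.le_of_dvd (by omega) hdvd
      omega
    · rintro ⟨C⟩
      refine ⟨fun v => (C v : ℕ), fun v => (C v).isLt, ?_⟩
      intro v₁ v₂ hadj
      refine star_path_exists _ Δ hΔ v₁ v₂ (G.ne_of_adj hadj) (C v₁).isLt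
        (C v₂).isLt ?_
      exact fun he => C.valid hadj (Fin.ext he)
end

section
/- Let Δ = 2 and consider a directed graph G whose underlying structure is a bidirected cycle of odd length with bidirected trees attached, with constraints D_{u,v} ∈ {d̂(u,v), ∞}. Build the auxiliary undirected graph G' whose vertices are the directed edges of G, with an auxiliary edge between (x,y) and (y,z) whenever both lie on a common shortest path that must be realized with zero waiting (D equal to static distance). Then the instance is feasible if and only if G' is bipartite; in particular feasibility is decidable in polynomial time. -/
section Helpers

open SimpleGraph

variable {V : Type}

private lemma adjDistLe {G : SimpleGraph V} {a b : V} (h : G.Adj a b) : G.dist a b ≤ 1 := by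
  simpa using SimpleGraph.dist_le h.toWalk

private lemma chainDistLe {G : SimpleGraph V} (hconn : G.Connected) (f : ℕ → V) (n : ℕ)
    (hadj : ∀ i, i < n → G.Adj (f i) (f (i + 1))) :
    ∀ i, i ≤ n → G.dist (f 0) (f i) ≤ i := by
  intro i
  induction i with
  | zero => simp
  | succ i ih =>
    intro h
    have h1 := ih (by omega)
    have h2 : G.dist (f 0) (f (i + 1)) ≤ G.dist (f 0) (f i) + G.dist (f i) (f (i + 1)) :=
      hconn.dist_triangle
    have h3 : G.dist (f i) (f (i + 1)) ≤ 1 := adjDistLe (hadj i (by omega))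
    omega

private lemma chainDistEq {G : SimpleGraph V} (hconn : G.Connected) {u v : V} (f : ℕ → V) (n : ℕ)
    (hadj : ∀ i, i < n → G.Adj (f i) (f (i + 1))) (h0 : f 0 = u) (hn : f n = v)
    (hd : G.dist u v = n) :
    ∀ i, i ≤ n → G.dist u (f i) = i ∧ G.dist (f i) v = n - i := by
  intro i hi
  have hfwd : G.dist u (f i) ≤ i := by
    have := chainDistLe hconn f n hadj i hi
    rwa [h0] at this
  have hbwd : G.dist (f i) v ≤ n - i := by
    have hadj' : ∀ j, j < n → G.Adj (f (n - j)) (f (n - (j + 1))) := by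
      intro j hj
      have he : n - j = (n - (j + 1)) + 1 := by omega
      rw [he]
      exact (hadj (n - (j + 1)) (by omega)).symm
    have := chainDistLe hconn (fun j => f (n - j)) n hadj' (n - i) (by omega)
    simp only [Nat.sub_zero, Nat.sub_sub_self hi] at this
    rw [hn] at this
    rwa [SimpleGraph.dist_comm]
  have htri : G.dist u v ≤ G.dist u (f i) + G.dist (f i) v := hconn.dist_triangle
  omega

private lemma chainReachable {G : SimpleGraph V} (f : ℕ → V) (n : ℕ)
    (hadj : ∀ i, i < n → G.Adj (f i) (f (i + 1))) : G.Reachable (f 0) (f n) := by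
  induction n with
  | zero => exact Reachable.refl _
  | succ n ih =>
    exact (ih (fun i hi => hadj i (by omega))).trans (hadj n (by omega)).reachable

private lemma chainColor {G : SimpleGraph V} (c : V → Bool)
    (hc : ∀ a b, G.Adj a b → c a ≠ c b) (f : ℕ → V) (n : ℕ)
    (hadj : ∀ i, i < n → G.Adj (f i) (f (i + 1))) (hn : n % 2 = 1) :
    c (f 0) ≠ c (f n) := by
  have step : ∀ i, i < n → c (f (i + 1)) = !(c (f i)) := by
    intro i hi
    have := hc _ _ (hadj i hi)
    cases h1 : c (f i) <;> cases h2 : c (f (i + 1)) <;> simp_all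
  have main : ∀ i, i ≤ n → c (f i) = if i % 2 = 0 then c (f 0) else !(c (f 0)) := by
    intro i
    induction i with
    | zero => simp
    | succ i ih =>
      intro h
      rw [step i (by omega), ih (by omega)]
      by_cases hp : i % 2 = 0
      · rw [if_pos hp, if_neg (by omega)]
      · rw [if_neg hp, if_pos (by omega), Bool.not_not]
  have := main n le_rfl
  rw [if_neg (by omega)] at this
  rw [this]
  simp

private lemma cardLeOfConnected [Fintype V] [DecidableEq V] {G : SimpleGraph V}
    (hconn : G.Connected) (r : V) (E' : Finset (Sym2 V))
    (hE : ∀ a b : V, G.Adj a b → G.dist r b + 1 = G.dist r a → s(a, b) ∈ E') :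
    Fintype.card V ≤ E'.card + 1 := by
  have hsel : ∀ a : V, ∃ b : V, a ≠ r → G.Adj a b ∧ G.dist r b + 1 = G.dist r a := by
    intro a
    by_cases ha : a = r
    · exact ⟨a, fun h => absurd ha h⟩
    · have hpos : 0 < G.dist r a := hconn.pos_dist_of_ne (Ne.symm ha)
      obtain ⟨p, hp⟩ := hconn.exists_walk_length_eq_dist r a
      set d := G.dist r a with hdd
      refine ⟨p.getVert (d - 1), fun _ => ⟨?_, ?_⟩⟩
      · have := p.adj_getVert_succ (i := d - 1) (by omega)
        rw [show d - 1 + 1 = d by omega, show p.getVert d = a by rw [← hp]; exact p.getVert_length]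
          at this
        exact this.symm
      · have hle : G.dist r (p.getVert (d - 1)) ≤ d - 1 := by
          have := chainDistLe hconn p.getVert p.length
            (fun i hi => p.adj_getVert_succ hi) (d - 1) (by omega)
          rwa [p.getVert_zero] at this
        have hge : G.dist r a ≤ G.dist r (p.getVert (d - 1)) + 1 := by
          have t1 : G.dist r a ≤ G.dist r (p.getVert (d - 1)) + G.dist (p.getVert (d - 1)) a :=
            hconn.dist_triangle
          have t2 : G.dist (p.getVert (d - 1)) a ≤ 1 := by
            apply adjDistLe
            have := p.adj_getVert_succ (i := d - 1) (by omega)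
            rwa [show d - 1 + 1 = d by omega,
              show p.getVert d = a by rw [← hp]; exact p.getVert_length] at this
          omega
        omega
  choose pred hpred using hsel
  have hinj : Set.InjOn (fun a => s(a, pred a)) (Finset.univ.erase r) := by
    intro a ha b hb hab
    simp only [Finset.coe_erase, Set.mem_diff, Set.mem_singleton_iff] at ha hb
    have ha' : a ≠ r := ha.2
    have hb' : b ≠ r := hb.2
    have hda := (hpred a ha').2
    have hdb := (hpred b hb').2
    simp only [Sym2.eq_iff] at hab
    rcases hab with ⟨h1, h2⟩ | ⟨h1, h2⟩
    · exact h1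
    · rw [← h1] at hdb
      rw [h2] at hda
      exfalso; omega
  have hmaps : ∀ a ∈ Finset.univ.erase r, s(a, pred a) ∈ E' := by
    intro a ha
    have ha' : a ≠ r := (Finset.mem_erase.mp ha).1
    exact hE a (pred a) (hpred a ha').1 (hpred a ha').2
  have := Finset.card_le_card_of_injOn _ hmaps hinj
  rw [Finset.card_erase_of_mem (Finset.mem_univ r), Finset.card_univ] at this
  omega

private lemma boolIfNe : ∀ x y : Bool, x ≠ y →
    (if x then (1 : Fin 2) else 0) ≠ (if y then (1 : Fin 2) else 0) := by decide

private lemma boolIfNatNe : ∀ x y : Bool, x ≠ y →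
    (if x then (1 : ℕ) else 0) ≠ (if y then (1 : ℕ) else 0) := by decide

private lemma uniqueMid [Fintype V] [DecidableEq V] {G : SimpleGraph V} [DecidableRel G.Adj]
    (hconn : G.Connected) (hcard : G.edgeFinset.card = Fintype.card V)
    (hodd : ¬ G.Colorable 2) {u v w w' : V}
    (hk : G.dist u w = G.dist u w')
    (hsum : G.dist u w + G.dist w v = G.dist u v)
    (hsum' : G.dist u w' + G.dist w' v = G.dist u v) : w = w' := by
  by_contra hne
  set k := G.dist u w with hkdef
  set d := G.dist u v with hddef
  have hkd : k ≤ d := by omega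
  obtain ⟨pA, hpA⟩ := hconn.exists_walk_length_eq_dist u w
  obtain ⟨pB, hpB⟩ := hconn.exists_walk_length_eq_dist w v
  obtain ⟨pA', hpA'⟩ := hconn.exists_walk_length_eq_dist u w'
  obtain ⟨pB', hpB'⟩ := hconn.exists_walk_length_eq_dist w' v
  rw [← hk] at hpA'
  set WA := pA.append pB with hWA
  set WB := pA'.append pB' with hWB
  have hWAlen : WA.length = d := by
    rw [hWA, Walk.length_append]; omega
  have hWBlen : WB.length = d := by
    rw [hWB, Walk.length_append]; omega
  set FA : ℕ → V := WA.getVert with hFA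
  set FB : ℕ → V := WB.getVert with hFB
  have hadjA : ∀ i, i < d → G.Adj (FA i) (FA (i + 1)) := by
    intro i hi; exact WA.adj_getVert_succ (by omega)
  have hadjB : ∀ i, i < d → G.Adj (FB i) (FB (i + 1)) := by
    intro i hi; exact WB.adj_getVert_succ (by omega)
  have hFAk : FA k = w := by
    rw [hFA, hWA, Walk.getVert_append, hpA, ← hkdef]
    simp
  have hFBk : FB k = w' := by
    rw [hFB, hWB, Walk.getVert_append, hpA']
    simp
  have hFAd : FA d = v := by rw [hFA, ← hWAlen]; exact WA.getVert_length
  have hFBd : FB d = v := by rw [hFB, ← hWBlen]; exact WB.getVert_length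
  have hdA := chainDistEq hconn FA d hadjA WA.getVert_zero hFAd hddef.symm
  have hdB := chainDistEq hconn FB d hadjB WB.getVert_zero hFBd hddef.symm
  have hex : ∃ i, FA i ≠ FB i := ⟨k, by rw [hFAk, hFBk]; exact hne⟩
  set m := Nat.find hex with hmdef
  have hmspec : FA m ≠ FB m := Nat.find_spec hex
  have hmle : m ≤ k := Nat.find_min' hex (by rw [hFAk, hFBk]; exact hne)
  have hmpos : 0 < m := by
    rcases Nat.eq_zero_or_pos m with h | h
    · exfalso; apply hmspec; rw [h, hFA, hFB, WA.getVert_zero, WB.getVert_zero]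
    · exact h
  have hprev : FA (m - 1) = FB (m - 1) := by
    by_contra hc
    exact Nat.find_min hex (m := m - 1) (by omega) hc
  have hex2 : ∃ t, FA (m + t) = FB (m + t) := ⟨d - m, by
    rw [show m + (d - m) = d by omega, hFAd, hFBd]⟩
  set tq := Nat.find hex2 with htqdef
  have hjspec : FA (m + tq) = FB (m + tq) := Nat.find_spec hex2
  have htqle : tq ≤ d - m := Nat.find_min' hex2 (by
    rw [show m + (d - m) = d by omega, hFAd, hFBd])
  have htqpos : 0 < tq := by
    rcases Nat.eq_zero_or_pos tq with h | h
    · exfalso; apply hmspec; simpa [h] using hjspec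
    · exact h
  set j := m + tq with hjdef
  have hjd : j ≤ d := by omega
  have hj : FA j = FB j := hjspec
  have hadjε : G.Adj (FA (m - 1)) (FA m) := by
    have := hadjA (m - 1) (by omega)
    rwa [show m - 1 + 1 = m by omega] at this
  set ε : Sym2 V := s(FA (m - 1), FA m) with hεdef
  set G' := G.deleteEdges {ε} with hG'def
  set N := 2 * (j - m) + 1 with hNdef
  set g : ℕ → V := fun t => if t ≤ j - m then FA (m + t) else FB (2 * j - m - t) with hgdef
  have hg0 : g 0 = FA m := by simp [hgdef]
  have hgN : g N = FA (m - 1) := by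
    rw [hgdef]
    simp only
    rw [if_neg (by omega), show 2 * j - m - N = m - 1 by omega, hprev]
  have hgadj : ∀ t, t < N → G'.Adj (g t) (g (t + 1)) := by
    intro t ht
    by_cases hta : t + 1 ≤ j - m
    · have hgt : g t = FA (m + t) := by rw [hgdef]; simp only; rw [if_pos (by omega)]
      have hgt1 : g (t + 1) = FA (m + t + 1) := by
        rw [hgdef]; simp only; rw [if_pos hta, ← Nat.add_assoc]
      rw [hgt, hgt1, hG'def, deleteEdges_adj]
      refine ⟨hadjA (m + t) (by omega), ?_⟩
      simp only [Set.mem_singleton_iff, hεdef, Sym2.eq_iff]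
      rintro (⟨h1, h2⟩ | ⟨h1, h2⟩)
      · have e1 := (hdA (m + t) (by omega)).1
        have e2 := (hdA (m - 1) (by omega)).1
        rw [h1] at e1
        omega
      · have e1 := (hdA (m + t) (by omega)).1
        have e2 := (hdA m (by omega)).1
        have e3 := (hdA (m + t + 1) (by omega)).1
        have e4 := (hdA (m - 1) (by omega)).1
        rw [h1] at e1
        rw [h2] at e3
        omega
    · set s := 2 * j - m - t with hsdef
      have hsb : m ≤ s ∧ s ≤ j := by omega
      have hgt : g t = FB s := by
        rcases Nat.lt_or_ge (j - m) t with h | h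
        · rw [hgdef]; simp only; rw [if_neg (by omega)]
        · have hteq : t = j - m := by omega
          rw [hgdef]; simp only; rw [if_pos (by omega),
            show m + t = j by omega, hj, show s = j by omega]
      have hgt1 : g (t + 1) = FB (s - 1) := by
        rw [hgdef]; simp only; rw [if_neg (by omega), show 2 * j - m - (t + 1) = s - 1 by omega]
      rw [hgt, hgt1, hG'def, deleteEdges_adj]
      have hadjs : G.Adj (FB (s - 1)) (FB s) := by
        have := hadjB (s - 1) (by omega)
        rwa [show s - 1 + 1 = s by omega] at this
      refine ⟨hadjs.symm, ?_⟩
      simp only [Set.mem_singleton_iff, hεdef, Sym2.eq_iff]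
      rw [hprev]
      rintro (⟨h1, h2⟩ | ⟨h1, h2⟩)
      · have e1 := (hdB s (by omega)).1
        have e2 := (hdB (m - 1) (by omega)).1
        rw [h1] at e1
        omega
      · have hs1 : FB (s - 1) = FB (m - 1) := h2
        have e1 := (hdB (s - 1) (by omega)).1
        have e2 := (hdB (m - 1) (by omega)).1
        rw [hs1] at e1
        have hsm : s = m := by omega
        rw [hsm] at h1
        exact hmspec h1.symm
  have hreach : G'.Reachable (FA m) (FA (m - 1)) := by
    have := chainReachable (G := G') g N hgadj
    rwa [hg0, hgN] at this
  have hkey : ∀ a b : V, G.Adj a b → G'.Reachable a b := by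
    intro a b hab
    by_cases habε : s(a, b) = ε
    · rw [hεdef, Sym2.eq_iff] at habε
      rcases habε with ⟨h1, h2⟩ | ⟨h1, h2⟩
      · rw [h1, h2]; exact hreach.symm
      · rw [h1, h2]; exact hreach
    · exact (SimpleGraph.deleteEdges_adj.mpr ⟨hab, by simpa using habε⟩).reachable
  have hG'conn : G'.Connected := by
    haveI : Nonempty V := ⟨u⟩
    apply SimpleGraph.Connected.mk
    intro a b
    obtain ⟨p⟩ := hconn a b
    induction p with
    | nil => exact Reachable.refl _
    | cons h p ih => exact (hkey _ _ h).trans ih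
  set c : V → Bool := fun x => decide (G'.dist u x % 2 = 1) with hcdef
  have hproper : ∀ a b : V, G'.Adj a b → c a ≠ c b := by
    intro a b hab
    have hne2 : G'.dist u a ≠ G'.dist u b := by
      intro heq
      have habG : G.Adj a b := (SimpleGraph.deleteEdges_adj.mp hab).1
      have habε : s(a, b) ≠ ε := by
        have := (SimpleGraph.deleteEdges_adj.mp hab).2
        simpa using this
      have hE : ∀ x y : V, G'.Adj x y → G'.dist u y + 1 = G'.dist u x →
          s(x, y) ∈ (G.edgeFinset.erase ε).erase s(a, b) := by
        intro x y hxy hd2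
        rw [Finset.mem_erase, Finset.mem_erase]
        refine ⟨?_, ?_, mem_edgeFinset.mpr ((SimpleGraph.deleteEdges_adj.mp hxy).1)⟩
        · intro hxyab
          rw [Sym2.eq_iff] at hxyab
          rcases hxyab with ⟨h1, h2⟩ | ⟨h1, h2⟩ <;> rw [h1, h2] at hd2 <;> omega
        · have := (SimpleGraph.deleteEdges_adj.mp hxy).2
          simpa using this
      have hcle := cardLeOfConnected hG'conn u _ hE
      have hc1 : ε ∈ G.edgeFinset := mem_edgeFinset.mpr hadjε
      have hc2 : s(a, b) ∈ G.edgeFinset.erase ε :=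
        Finset.mem_erase.mpr ⟨habε, mem_edgeFinset.mpr habG⟩
      rw [Finset.card_erase_of_mem hc2, Finset.card_erase_of_mem hc1, hcard] at hcle
      have hcard2 : 2 ≤ Fintype.card V := by
        have h2 : ({a, b} : Finset V).card = 2 := Finset.card_pair hab.ne
        have := Finset.card_le_univ ({a, b} : Finset V)
        omega
      omega
    have h1 : G'.dist u b ≤ G'.dist u a + 1 := by
      have t1 : G'.dist u b ≤ G'.dist u a + G'.dist a b := hG'conn.dist_triangle
      have t2 : G'.dist a b ≤ 1 := adjDistLe hab
      omega
    have h2 : G'.dist u a ≤ G'.dist u b + 1 := by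
      have t1 : G'.dist u a ≤ G'.dist u b + G'.dist b a := hG'conn.dist_triangle
      have t2 : G'.dist b a ≤ 1 := adjDistLe hab.symm
      omega
    simp only [hcdef, ne_eq, decide_eq_decide]
    omega
  have hok : ∀ a b : V, G.Adj a b → c a ≠ c b := by
    intro a b hab
    by_cases hab2 : s(a, b) = ε
    · have hodd2 : c (FA m) ≠ c (FA (m - 1)) := by
        have := chainColor (G := G') c hproper g N hgadj (by omega)
        rwa [hg0, hgN] at this
      rw [hεdef, Sym2.eq_iff] at hab2
      rcases hab2 with ⟨h1, h2⟩ | ⟨h1, h2⟩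
      · rw [h1, h2]; exact hodd2.symm
      · rw [h1, h2]; exact hodd2
    · exact hproper a b (SimpleGraph.deleteEdges_adj.mpr ⟨hab, by simpa using hab2⟩)
  exact hodd ⟨Coloring.mk (fun x => if c x then (1 : Fin 2) else 0)
    (fun {a b} hab => boolIfNe _ _ (hok a b hab))⟩

end Helpers

/-- Let Δ = 2 and let the underlying undirected graph H be
connected with exactly one cycle (|E| = |V|) which is odd (H not 2-colorable),
i.e. a bidirected odd cycle with trees attached, and let the constraints
satisfy D u v ∈ {d̂(u,v), ∞}. Build the auxiliary graph on directed edges,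
joining (x,y) and (y,z) whenever they are consecutive on a common shortest
path between a pair constrained to zero waiting (D = static distance). Then
the instance is feasible iff the auxiliary graph is bipartite (admits a
proper 2-coloring). -/
theorem stmt13 {V : Type} [Fintype V] [DecidableEq V]
    (H : SimpleGraph V) [DecidableRel H.Adj]
    (hconn : H.Connected)
    (hcard : H.edgeFinset.card = Fintype.card V)
    (hodd : ¬ H.Colorable 2)
    (D : V → V → WithTop ℕ)
    (hD : ∀ u v : V, D u v = (H.dist u v : WithTop ℕ) ∨ D u v = ⊤) :
    (∃ lab : V → V → ℕ, (∀ a b, lab a b < 2) ∧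
        ∀ u v : V, u ≠ v →
          ∃ p : TempPath V H.Adj lab 2 u v, (p.duration : WithTop ℕ) ≤ D u v)
    ↔ (∃ c : V × V → Bool, ∀ e f : V × V,
        (H.Adj e.1 e.2 ∧ H.Adj f.1 f.2 ∧ e.2 = f.1 ∧ e.1 ≠ f.2 ∧
          ∃ u v : V, D u v = (H.dist u v : WithTop ℕ) ∧
            H.dist u e.2 = H.dist u e.1 + 1 ∧
            H.dist u f.2 = H.dist u e.2 + 1 ∧
            H.dist u e.1 + 2 + H.dist f.2 v = H.dist u v) →
        c e ≠ c f) := by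
  constructor
  · -- feasibility implies 2-colorability of the auxiliary graph
    rintro ⟨lab, hlab, hfeas⟩
    refine ⟨fun e => decide (lab e.1 e.2 = 1), ?_⟩
    rintro e f ⟨hadje, hadjf, hef, hnef, u, v, hDuv, h1, h2, h3⟩
    set k := H.dist u e.1 with hk
    set d := H.dist u v with hd
    have hadjf' : H.Adj e.2 f.2 := by rw [hef]; exact hadjf
    have huv : u ≠ v := by
      intro h
      rw [h, SimpleGraph.dist_self] at hd
      omega
    obtain ⟨p, hdur⟩ := hfeas u v huv
    rw [hDuv] at hdur
    have hdur' : p.duration ≤ d := by exact_mod_cast hdur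
    set n := p.len with hn
    have hadjp : ∀ i, i < n → H.Adj (p.vert i) (p.vert (i + 1)) := p.adj
    have hlen0 : 1 ≤ n := p.len_pos
    have hdlen : d ≤ n := by
      have := chainDistLe hconn p.vert n hadjp n le_rfl
      rw [p.source, p.target, ← hd] at this
      exact this
    have hmono : ∀ i t, i + t ≤ n - 1 → p.time i + t ≤ p.time (i + t) := by
      intro i t
      induction t with
      | zero => simp
      | succ t ih =>
        intro h
        have ha1 := ih (by omega)
        have ha2 : p.time (i + t) < p.time (i + t + 1) := p.strict _ (by omega)
        show p.time i + (t + 1) ≤ p.time (i + t + 1)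
        omega
    have htot : p.time 0 + (n - 1) ≤ p.time (n - 1) := by
      have := hmono 0 (n - 1) (by omega)
      simpa using this
    have hdureq : p.duration = p.time (n - 1) - p.time 0 + 1 := rfl
    have hnd : n ≤ d := by omega
    have hdn : n = d := le_antisymm hnd hdlen
    have hvd := chainDistEq hconn p.vert n hadjp p.source p.target (by rw [← hd, hdn])
    have htime : ∀ i, i + 1 ≤ n - 1 → p.time (i + 1) = p.time i + 1 := by
      intro i hi
      have a1 := hmono 0 i (by omega)
      have a2 := hmono (i + 1) (n - 1 - (i + 1)) (by omega)
      rw [show i + 1 + (n - 1 - (i + 1)) = n - 1 by omega] at a2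
      have a3 := p.strict i (by omega)
      simp only [Nat.zero_add] at a1
      omega
    have hkd : k + 2 ≤ d := by omega
    have he1v : H.dist e.1 v = d - k := by
      have t1 : H.dist e.2 v ≤ H.dist e.2 f.2 + H.dist f.2 v := hconn.dist_triangle
      have t2 : H.dist e.2 f.2 ≤ 1 := adjDistLe hadjf'
      have t3 : H.dist e.1 v ≤ H.dist e.1 e.2 + H.dist e.2 v := hconn.dist_triangle
      have t4 : H.dist e.1 e.2 ≤ 1 := adjDistLe hadje
      have t5 : H.dist u v ≤ H.dist u e.1 + H.dist e.1 v := hconn.dist_triangle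
      rw [← hd, ← hk] at t5
      omega
    have he2v : H.dist e.2 v = d - (k + 1) := by
      have t1 : H.dist e.2 v ≤ H.dist e.2 f.2 + H.dist f.2 v := hconn.dist_triangle
      have t2 : H.dist e.2 f.2 ≤ 1 := adjDistLe hadjf'
      have t5 : H.dist u v ≤ H.dist u e.2 + H.dist e.2 v := hconn.dist_triangle
      rw [← hd, h1] at t5
      omega
    have hf2v : H.dist f.2 v = d - (k + 2) := by omega
    have hduf2 : H.dist u f.2 = k + 2 := by omega
    have hv1 : p.vert k = e.1 := by
      apply uniqueMid hconn hcard hodd (u := u) (v := v)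
      · rw [(hvd k (by omega)).1, hk]
      · rw [(hvd k (by omega)).1, (hvd k (by omega)).2, ← hd]
        omega
      · rw [← hk, he1v, ← hd]
        omega
    have hv2 : p.vert (k + 1) = e.2 := by
      apply uniqueMid hconn hcard hodd (u := u) (v := v)
      · rw [(hvd (k + 1) (by omega)).1, h1]
      · rw [(hvd (k + 1) (by omega)).1, (hvd (k + 1) (by omega)).2, ← hd]
        omega
      · rw [h1, he2v, ← hd]
        omega
    have hv3 : p.vert (k + 2) = f.2 := by
      apply uniqueMid hconn hcard hodd (u := u) (v := v)
      · rw [(hvd (k + 2) (by omega)).1, hduf2]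
      · rw [(hvd (k + 2) (by omega)).1, (hvd (k + 2) (by omega)).2, ← hd]
        omega
      · rw [hduf2, hf2v, ← hd]
        omega
    have lm1 := p.label_mem k (by omega)
    have lm2 := p.label_mem (k + 1) (by omega)
    have ht1 := htime k (by omega)
    rw [hv1, hv2] at lm1
    rw [show k + 1 + 1 = k + 2 from rfl, hv2, hv3] at lm2
    have hb1 := hlab e.1 e.2
    have hb2 := hlab e.2 f.2
    rw [hef] at lm2 hb2
    simp only [ne_eq, decide_eq_decide]
    omega
  · -- 2-colorability of the auxiliary graph implies feasibility
    rintro ⟨c, hc⟩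
    refine ⟨fun a b => if c (a, b) then 1 else 0, fun a b => by dsimp only; split <;> omega, ?_⟩
    intro u v huv
    set d := H.dist u v with hd
    have hdpos : 0 < d := hconn.pos_dist_of_ne huv
    obtain ⟨p, hp⟩ := hconn.exists_walk_length_eq_dist u v
    rw [← hd] at hp
    set f : ℕ → V := p.getVert with hf
    have hadj : ∀ i, i < d → H.Adj (f i) (f (i + 1)) := by
      intro i hi; exact p.adj_getVert_succ (by omega)
    have hfd : f d = v := by rw [hf, ← hp]; exact p.getVert_length
    have hdist := chainDistEq hconn f d hadj p.getVert_zero hfd hd.symm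
    have hnodup : ∀ i j, i ≤ d → j ≤ d → i ≠ j → f i ≠ f j := by
      intro i j hi hj hij heq
      have e1 := (hdist i hi).1
      have e2 := (hdist j hj).1
      rw [heq] at e1
      omega
    set L : ℕ → ℕ := fun i => if c (f i, f (i + 1)) then 1 else 0 with hL
    have hLlt : ∀ i, L i < 2 := by
      intro i; rw [hL]; dsimp only; split <;> omega
    rcases hD u v with hDuv | hDuv
    · -- zero-waiting constraint: labels alternate along the unique shortest path
      have halt : ∀ i, i + 2 ≤ d → c (f i, f (i + 1)) ≠ c (f (i + 1), f (i + 2)) := by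
        intro i hi
        apply hc
        refine ⟨hadj i (by omega), hadj (i + 1) (by omega), rfl, ?_, u, v, hDuv, ?_, ?_, ?_⟩
        · exact hnodup i (i + 2) (by omega) (by omega) (by omega)
        · rw [(hdist i (by omega)).1, (hdist (i + 1) (by omega)).1]
        · rw [(hdist (i + 1) (by omega)).1, (hdist (i + 2) (by omega)).1]
        · rw [(hdist i (by omega)).1, (hdist (i + 2) (by omega)).2, ← hd]
          omega
      have hpar : ∀ i, i < d → L i % 2 = (L 0 + i) % 2 := by
        intro i
        induction i with
        | zero => intro _; simp
        | succ i ih =>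
          intro h
          have hh1 := ih (by omega)
          have hh2 : L i ≠ L (i + 1) := boolIfNatNe _ _ (halt i (by omega))
          have hl1 := hLlt i
          have hl2 := hLlt (i + 1)
          omega
      refine ⟨⟨d, hdpos, f, fun i => L 0 + i, p.getVert_zero, hfd, hnodup, hadj, ?_, ?_⟩, ?_⟩
      · intro i hi
        exact (hpar i hi).symm
      · intro i _
        show L 0 + i < L 0 + (i + 1)
        omega
      · show ((L 0 + (d - 1) - (L 0 + 0) + 1 : ℕ) : WithTop ℕ) ≤ D u v
        rw [hDuv, ← hd]
        exact_mod_cast (by omega : L 0 + (d - 1) - (L 0 + 0) + 1 ≤ d)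
    · -- unconstrained pair: waiting allowed
      refine ⟨⟨d, hdpos, f, fun i => 2 * i + L i, p.getVert_zero, hfd, hnodup, hadj, ?_, ?_⟩, ?_⟩
      · intro i hi
        show (2 * i + L i) % 2 = L i % 2
        omega
      · intro i _
        have := hLlt i
        have := hLlt (i + 1)
        show 2 * i + L i < 2 * (i + 1) + L (i + 1)
        omega
      · rw [hDuv]
        exact le_top
end

section
/- In the gadget for odd Δ and slack k = 0 (a bidirected path 3, 4, ..., 3+⌈Δ/2⌉+1 with two extra leaves 1, 2 attached to vertex 3, constraints D_{1,2}=D_{2,1}=2 and D between the leaves and the far endpoint equal to the static distance): in every feasible labeling, no waiting occurs anywhere, vertex 3 has a fixed arrival/departure schedule, and the labels on the middle edge satisfy λ(3+⌊Δ/2⌋, 4+⌊Δ/2⌋) = λ(4+⌊Δ/2⌋, 3+⌊Δ/2⌋) = ⌊Δ/2⌋ + λ(3,4) (mod Δ). In particular the two antiparallel labels of that edge are forced to be equal, for every odd Δ ≥ 3. -/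
/-- The bidirected gadget graph for odd Δ and slack k = 0: leaves 1, 2 attached
to vertex 3, and the bidirected path 3 – 4 – ⋯ – (4 + ⌊Δ/2⌋). -/
def gadgetAdj (Δ : ℕ) : ℕ → ℕ → Prop := fun x y =>
  (x = 1 ∧ y = 3) ∨ (x = 3 ∧ y = 1) ∨ (x = 2 ∧ y = 3) ∨ (x = 3 ∧ y = 2) ∨
  (3 ≤ x ∧ x ≤ 3 + Δ / 2 ∧ y = x + 1) ∨ (3 ≤ y ∧ y ≤ 3 + Δ / 2 ∧ x = y + 1)

section Generic
variable {V : Type} {A : V → V → Prop} {lab : V → V → ℕ} {Δ : ℕ} {u v : V}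

lemma TempPath.time_mono (p : TempPath V A lab Δ u v) :
    ∀ j, j ≤ p.len - 1 → ∀ i, i ≤ j → p.time i + (j - i) ≤ p.time j := by
  intro j
  induction j with
  | zero => intro _ i hi; interval_cases i; simp
  | succ n ih =>
    intro hj i hi
    have hp := p.len_pos
    rcases Nat.eq_or_lt_of_le hi with rfl | hlt
    · simp
    · have h1 := ih (by omega) i (by omega)
      have h2 := p.strict n (by omega)
      omega

lemma TempPath.len_le_duration (p : TempPath V A lab Δ u v) :
    p.len ≤ p.duration := by
  have h := p.time_mono (p.len - 1) le_rfl 0 (Nat.zero_le _)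
  have hp := p.len_pos
  unfold TempPath.duration
  omega

lemma TempPath.time_forced (p : TempPath V A lab Δ u v) (h : p.duration ≤ p.len) :
    ∀ i, i ≤ p.len - 1 → p.time i = p.time 0 + i := by
  intro i hi
  have h1 := p.time_mono i hi 0 (Nat.zero_le _)
  have h2 := p.time_mono (p.len - 1) le_rfl i (by omega)
  have h3 := p.time_mono (p.len - 1) le_rfl 0 (Nat.zero_le _)
  have hp := p.len_pos
  unfold TempPath.duration at h
  omega

end Generic

lemma path_12 (Δ : ℕ) (hΔ : 3 ≤ Δ) {lab : ℕ → ℕ → ℕ}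
    (p : TempPath ℕ (gadgetAdj Δ) lab Δ 1 2) (hd : p.duration ≤ 2) :
    p.len = 2 ∧ p.vert 0 = 1 ∧ p.vert 1 = 3 ∧ p.vert 2 = 2 := by
  have hlen : p.len ≤ 2 := le_trans p.len_le_duration hd
  have hpos := p.len_pos
  have h0 := p.source
  have hlen2 : p.len = 2 := by
    rcases Nat.lt_or_ge p.len 2 with h | h
    · exfalso
      have hl1 : p.len = 1 := by omega
      have ha : gadgetAdj Δ (p.vert 0) (p.vert 1) := p.adj 0 (by omega)
      have ht := p.target
      rw [hl1] at ht
      rw [h0, ht] at ha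
      simp only [gadgetAdj] at ha
      omega
    · omega
  have ha : gadgetAdj Δ (p.vert 0) (p.vert 1) := p.adj 0 (by omega)
  rw [h0] at ha
  simp only [gadgetAdj] at ha
  have hv1 : p.vert 1 = 3 := by omega
  have ht := p.target
  rw [hlen2] at ht
  exact ⟨hlen2, h0, hv1, ht⟩

lemma path_1m (Δ : ℕ) (hΔ : 3 ≤ Δ) {lab : ℕ → ℕ → ℕ}
    (p : TempPath ℕ (gadgetAdj Δ) lab Δ 1 (4 + Δ / 2)) (hd : p.duration ≤ 2 + Δ / 2) :
    p.len = 2 + Δ / 2 ∧ ∀ i, i ≤ p.len → p.vert i = if i = 0 then 1 else 2 + i := by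
  have hm1 : 1 ≤ Δ / 2 := by omega
  have hlen : p.len ≤ 2 + Δ / 2 := le_trans p.len_le_duration hd
  have hpos := p.len_pos
  have hv : ∀ i, i ≤ p.len → p.vert i = if i = 0 then 1 else 2 + i := by
    intro i
    induction i using Nat.strong_induction_on with
    | _ i ih =>
      intro hi
      rcases Nat.lt_or_ge i 2 with hi2 | hi2
      · interval_cases i
        · simpa using p.source
        · have ha : gadgetAdj Δ (p.vert 0) (p.vert 1) := p.adj 0 (by omega)
          rw [p.source] at ha
          simp only [gadgetAdj] at ha
          rw [if_neg (by omega)]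
          omega
      · obtain ⟨j, rfl⟩ : ∃ j, i = j + 2 := ⟨i - 2, by omega⟩
        have hj1 : p.vert (j + 1) = 2 + (j + 1) := by
          have := ih (j + 1) (by omega) (by omega)
          rwa [if_neg (by omega)] at this
        have ha : gadgetAdj Δ (p.vert (j + 1)) (p.vert (j + 2)) := p.adj (j + 1) (by omega)
        rw [hj1] at ha
        simp only [gadgetAdj] at ha
        rw [if_neg (by omega)]
        rcases Nat.eq_zero_or_pos j with rfl | hj
        · -- vertex 3, exclude going to 1 and 2
          simp only [Nat.zero_add] at ha ⊢
          have hnd0 : p.vert 2 ≠ p.vert 0 := p.nodup 2 0 (by omega) (by omega) (by omega)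
          rw [p.source] at hnd0
          have hne2 : p.vert 2 ≠ 2 := by
            intro h2
            rcases Nat.lt_or_ge 2 p.len with hlt | hge
            · have ha2 : gadgetAdj Δ (p.vert 2) (p.vert 3) := p.adj 2 hlt
              rw [h2] at ha2
              simp only [gadgetAdj] at ha2
              have hnd : p.vert 3 ≠ p.vert 1 := p.nodup 3 1 (by omega) (by omega) (by omega)
              have hv1 : p.vert 1 = 3 := by simpa using hj1
              rw [hv1] at hnd
              omega
            · have hl2 : p.len = 2 := by omega
              have ht := p.target
              rw [hl2, h2] at ht
              omega
          omega
        · have hj0 : p.vert j = 2 + j := by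
            have := ih j (by omega) (by omega)
            rwa [if_neg (by omega)] at this
          have hnd : p.vert (j + 2) ≠ p.vert j := p.nodup (j + 2) j (by omega) (by omega) (by omega)
          rw [hj0] at hnd
          omega
  refine ⟨?_, hv⟩
  have h2 := hv p.len le_rfl
  rw [p.target, if_neg (by omega)] at h2
  omega

lemma path_m2 (Δ : ℕ) (hΔ : 3 ≤ Δ) {lab : ℕ → ℕ → ℕ}
    (p : TempPath ℕ (gadgetAdj Δ) lab Δ (4 + Δ / 2) 2) (hd : p.duration ≤ 2 + Δ / 2) :
    p.len = 2 + Δ / 2 ∧ ∀ i, i ≤ p.len →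
      p.vert i = if i ≤ 1 + Δ / 2 then 4 + Δ / 2 - i else 2 := by
  have hm1 : 1 ≤ Δ / 2 := by omega
  have hlen : p.len ≤ 2 + Δ / 2 := le_trans p.len_le_duration hd
  have hpos := p.len_pos
  have hv : ∀ i, i ≤ p.len → p.vert i = if i ≤ 1 + Δ / 2 then 4 + Δ / 2 - i else 2 := by
    intro i
    induction i using Nat.strong_induction_on with
    | _ i ih =>
      intro hi
      rcases Nat.lt_or_ge i 2 with hi2 | hi2
      · interval_cases i
        · rw [if_pos (by omega)]
          simpa using p.source
        · have ha : gadgetAdj Δ (p.vert 0) (p.vert 1) := p.adj 0 (by omega)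
          rw [p.source] at ha
          simp only [gadgetAdj] at ha
          rw [if_pos (by omega)]
          omega
      · obtain ⟨j, rfl⟩ : ∃ j, i = j + 2 := ⟨i - 2, by omega⟩
        have hj1 : p.vert (j + 1) = 4 + Δ / 2 - (j + 1) := by
          have := ih (j + 1) (by omega) (by omega)
          rwa [if_pos (by omega)] at this
        have hj0 : p.vert j = 4 + Δ / 2 - j := by
          have := ih j (by omega) (by omega)
          rwa [if_pos (by omega)] at this
        by_cases hle : j + 1 ≤ Δ / 2
        · -- interior of the line: x = 4 + Δ/2 - (j+1) ≥ 4
          have ha : gadgetAdj Δ (p.vert (j + 1)) (p.vert (j + 2)) := p.adj (j + 1) (by omega)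
          rw [hj1] at ha
          simp only [gadgetAdj] at ha
          have hnd : p.vert (j + 2) ≠ p.vert j := p.nodup (j + 2) j (by omega) (by omega) (by omega)
          rw [hj0] at hnd
          rw [if_pos (by omega)]
          omega
        · -- j = Δ/2, so j + 2 = 2 + Δ/2 = p.len and the target pins the vertex
          have hj : j = Δ / 2 := by omega
          have hlen2 : j + 2 = p.len := by omega
          have ht := p.target
          rw [← hlen2] at ht
          rw [if_neg (by omega)]
          exact ht
  refine ⟨?_, hv⟩
  have h2 := hv p.len le_rfl
  rw [p.target] at h2
  by_cases h : p.len ≤ 1 + Δ / 2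
  · rw [if_pos h] at h2; omega
  · omega

lemma addc {Δ x y : ℕ} (h : x % Δ = y % Δ) (k : ℕ) : (x + k) % Δ = (y + k) % Δ :=
  Nat.ModEq.add_right k h

/-- In the odd-Δ, k = 0 gadget with constraints D₁₂ = D₂₁ = 2 and
constraints equal to the static distance 2 + ⌊Δ/2⌋ between the leaves 1, 2 and
the far endpoint 4 + ⌊Δ/2⌋ (in both directions), every feasible Δ-periodic
labeling forces the two antiparallel labels of the middle edge
(3 + ⌊Δ/2⌋, 4 + ⌊Δ/2⌋) to be equal, with common value (⌊Δ/2⌋ + λ(3,4)) mod Δ. -/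
theorem stmt15 (Δ : ℕ) (hΔ : 3 ≤ Δ) (hodd : Odd Δ)
    (lab : ℕ → ℕ → ℕ) (hlab : ∀ a b, lab a b < Δ)
    (h12 : ∃ p : TempPath ℕ (gadgetAdj Δ) lab Δ 1 2, p.duration ≤ 2)
    (h21 : ∃ p : TempPath ℕ (gadgetAdj Δ) lab Δ 2 1, p.duration ≤ 2)
    (h1m : ∃ p : TempPath ℕ (gadgetAdj Δ) lab Δ 1 (4 + Δ / 2),
      p.duration ≤ 2 + Δ / 2)
    (hm1 : ∃ p : TempPath ℕ (gadgetAdj Δ) lab Δ (4 + Δ / 2) 1,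
      p.duration ≤ 2 + Δ / 2)
    (h2m : ∃ p : TempPath ℕ (gadgetAdj Δ) lab Δ 2 (4 + Δ / 2),
      p.duration ≤ 2 + Δ / 2)
    (hm2 : ∃ p : TempPath ℕ (gadgetAdj Δ) lab Δ (4 + Δ / 2) 2,
      p.duration ≤ 2 + Δ / 2) :
    lab (3 + Δ / 2) (4 + Δ / 2) = lab (4 + Δ / 2) (3 + Δ / 2) ∧
    lab (3 + Δ / 2) (4 + Δ / 2) = (Δ / 2 + lab 3 4) % Δ := by
  have hm1' : 1 ≤ Δ / 2 := by omega
  have hΔ2 : Δ = 2 * (Δ / 2) + 1 := by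
    obtain ⟨k, hk⟩ := hodd; omega
  -- facts from the path 1 → 2
  obtain ⟨q, hq⟩ := h12
  obtain ⟨hqlen, hq0, hq1, hq2⟩ := path_12 Δ hΔ q hq
  have hqt : ∀ i, i ≤ q.len - 1 → q.time i = q.time 0 + i :=
    q.time_forced (by rw [hqlen]; exact hq)
  have g1 : q.time 0 % Δ = lab 1 3 % Δ := by
    have := q.label_mem 0 (by omega)
    rwa [hq0, show q.vert (0 + 1) = 3 from hq1] at this
  have g2 : (q.time 0 + 1) % Δ = lab 3 2 % Δ := by
    have := q.label_mem 1 (by omega)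
    rwa [hq1, show q.vert (1 + 1) = 2 from hq2, hqt 1 (by omega)] at this
  -- facts from the path 1 → 4 + Δ/2
  obtain ⟨p, hp⟩ := h1m
  obtain ⟨hplen, hpv⟩ := path_1m Δ hΔ p hp
  have hpt : ∀ i, i ≤ p.len - 1 → p.time i = p.time 0 + i :=
    p.time_forced (by rw [hplen]; exact hp)
  have hpv0 : p.vert 0 = 1 := by simpa using hpv 0 (by omega)
  have hpv1 : p.vert 1 = 3 := by
    have := hpv 1 (by omega); rwa [if_neg (by omega)] at this
  have hpv2 : p.vert 2 = 4 := by
    have := hpv 2 (by omega); rwa [if_neg (by omega)] at this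
  have hpvm1 : p.vert (1 + Δ / 2) = 3 + Δ / 2 := by
    have := hpv (1 + Δ / 2) (by omega)
    rw [if_neg (by omega)] at this
    omega
  have hpvm2 : p.vert (1 + Δ / 2 + 1) = 4 + Δ / 2 := by
    have := hpv (1 + Δ / 2 + 1) (by omega)
    rw [if_neg (by omega)] at this
    omega
  have f1 : p.time 0 % Δ = lab 1 3 % Δ := by
    have := p.label_mem 0 (by omega)
    rwa [hpv0, show p.vert (0 + 1) = 3 from hpv1] at this
  have f2 : (p.time 0 + 1) % Δ = lab 3 4 % Δ := by
    have := p.label_mem 1 (by omega)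
    rwa [hpv1, show p.vert (1 + 1) = 4 from hpv2, hpt 1 (by omega)] at this
  have f3 : (p.time 0 + (1 + Δ / 2)) % Δ = lab (3 + Δ / 2) (4 + Δ / 2) % Δ := by
    have := p.label_mem (1 + Δ / 2) (by omega)
    rwa [hpvm1, hpvm2, hpt (1 + Δ / 2) (by omega)] at this
  -- facts from the path 4 + Δ/2 → 2
  obtain ⟨r, hr⟩ := hm2
  obtain ⟨hrlen, hrv⟩ := path_m2 Δ hΔ r hr
  have hrt : ∀ i, i ≤ r.len - 1 → r.time i = r.time 0 + i :=
    r.time_forced (by rw [hrlen]; exact hr)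
  have hrv0 : r.vert 0 = 4 + Δ / 2 := by
    have := hrv 0 (by omega); rwa [if_pos (by omega)] at this
  have hrv1 : r.vert 1 = 3 + Δ / 2 := by
    have := hrv 1 (by omega)
    rw [if_pos (by omega)] at this
    omega
  have hrvm1 : r.vert (1 + Δ / 2) = 3 := by
    have := hrv (1 + Δ / 2) (by omega)
    rw [if_pos (by omega)] at this
    omega
  have hrvm2 : r.vert (1 + Δ / 2 + 1) = 2 := by
    have := hrv (1 + Δ / 2 + 1) (by omega)
    rwa [if_neg (by omega)] at this
  have k1 : r.time 0 % Δ = lab (4 + Δ / 2) (3 + Δ / 2) % Δ := by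
    have := r.label_mem 0 (by omega)
    rwa [hrv0, show r.vert (0 + 1) = 3 + Δ / 2 from hrv1] at this
  have k2 : (r.time 0 + (1 + Δ / 2)) % Δ = lab 3 2 % Δ := by
    have := r.label_mem (1 + Δ / 2) (by omega)
    rwa [hrvm1, hrvm2, hrt (1 + Δ / 2) (by omega)] at this
  -- modular arithmetic
  set t := p.time 0
  set s := q.time 0
  set w := r.time 0
  -- E1 : c ≡ lab 3 4 + Δ/2
  have E1 : lab (3 + Δ / 2) (4 + Δ / 2) % Δ = (lab 3 4 + Δ / 2) % Δ := by
    have h := addc f2 (Δ / 2)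
    rw [show t + 1 + Δ / 2 = t + (1 + Δ / 2) by omega] at h
    rw [← f3, h]
  -- E2 : lab 3 4 ≡ lab 3 2
  have E2 : lab 3 4 % Δ = lab 3 2 % Δ := by
    have h1 : (t + 1) % Δ = (s + 1) % Δ := addc (f1.trans g1.symm) 1
    rw [← f2, h1, g2]
  -- E3 : lab 3 2 ≡ lab (4+Δ/2)(3+Δ/2) + (1 + Δ/2)
  have E3 : lab 3 2 % Δ = (lab (4 + Δ / 2) (3 + Δ / 2) + (1 + Δ / 2)) % Δ := by
    rw [← k2, addc k1 (1 + Δ / 2)]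
  have main : lab (3 + Δ / 2) (4 + Δ / 2) % Δ = lab (4 + Δ / 2) (3 + Δ / 2) % Δ := by
    have h1 : lab (3 + Δ / 2) (4 + Δ / 2) % Δ = (lab 3 2 + Δ / 2) % Δ := by
      rw [E1]; exact addc E2 (Δ / 2)
    have h2 := addc E3 (Δ / 2)
    rw [h1, h2, show lab (4 + Δ / 2) (3 + Δ / 2) + (1 + Δ / 2) + Δ / 2
        = lab (4 + Δ / 2) (3 + Δ / 2) + Δ by omega]
    exact Nat.add_mod_right _ _
  have hc := Nat.mod_eq_of_lt (hlab (3 + Δ / 2) (4 + Δ / 2))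
  have hd' := Nat.mod_eq_of_lt (hlab (4 + Δ / 2) (3 + Δ / 2))
  constructor
  · rw [← hc, ← hd', main]
  · rw [← hc, E1, Nat.add_comm]
end

section
/- Suppose for every undirected edge there exists a feasible DiTTR gadget forcing λ(a,b) = λ(b,a) on a designated antiparallel edge pair while admitting, for each value c ∈ {0,...,Δ-1}, a feasible labeling with λ(a,b) = λ(b,a) = c (by shifting all labels of one feasible solution by c modulo Δ). Then the undirected problem Δ-k-TTR polynomial-time reduces to the directed problem Δ-k-DiTTR: an instance (G, D, Δ) of TTR is feasible iff the directed instance obtained by bidirecting G and attaching a disjoint copy of the gadget to each edge (with D extended consistently) is feasible. -/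
open SimpleGraph
/-- Index type for the undirected edges of G: ordered pairs with smaller first
endpoint. -/
def EdgeIdx {V : Type} [LinearOrder V] (G : SimpleGraph V) : Type :=
  {q : V × V // G.Adj q.1 q.2 ∧ q.1 < q.2}

/-- Vertex set of the combined instance: original tree vertices together with,
for each tree edge, a disjoint copy of the internal gadget vertices. -/
def CV {V : Type} [LinearOrder V] (G : SimpleGraph V) (W : Type)
    (ga gb : W) : Type :=
  V ⊕ (EdgeIdx G × {w : W // w ≠ ga ∧ w ≠ gb})

/-- Embedding of gadget copy `e` into the combined vertex set: the designated
gadget vertices `ga`, `gb` are identified with the two endpoints of the tree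
edge `e`. -/
def emb {V : Type} [LinearOrder V] {G : SimpleGraph V} {W : Type}
    [DecidableEq W] (ga gb : W) (e : EdgeIdx G) (w : W) : CV G W ga gb :=
  if h1 : w = ga then Sum.inl e.1.1
  else if h2 : w = gb then Sum.inl e.1.2
  else Sum.inr (e, ⟨w, h1, h2⟩)

/-- Adjacency of the combined (bidirected) instance: the bidirected tree edges
plus, for each tree edge, the edges of the attached gadget copy. -/
def CAdj {V : Type} [LinearOrder V] {W : Type} [DecidableEq W]
    (G : SimpleGraph V) (GW : SimpleGraph W) (ga gb : W) :
    CV G W ga gb → CV G W ga gb → Prop := fun x y =>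
  (∃ u v : V, G.Adj u v ∧ x = Sum.inl u ∧ y = Sum.inl v) ∨
  (∃ (e : EdgeIdx G) (w w' : W), GW.Adj w w' ∧
    x = emb ga gb e w ∧ y = emb ga gb e w')

def mkWalk {X : Type} (H : SimpleGraph X) :
    (L : ℕ) → (s : ℕ → X) → (∀ i, i < L → H.Adj (s i) (s (i+1))) → H.Walk (s 0) (s L)
  | 0, _, _ => SimpleGraph.Walk.nil
  | (L+1), s, h => SimpleGraph.Walk.cons (h 0 (Nat.succ_pos L))
      (mkWalk H L (fun i => s (i+1)) (fun i hi => h (i+1) (Nat.succ_lt_succ hi)))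

lemma mkWalk_length {X : Type} (H : SimpleGraph X) (L : ℕ) (s : ℕ → X) (h) :
    (mkWalk H L s h).length = L := by
  induction L generalizing s with
  | zero => rfl
  | succ L ih => simp [mkWalk, ih]

lemma mkWalk_support {X : Type} (H : SimpleGraph X) (L : ℕ) (s : ℕ → X) (h) :
    (mkWalk H L s h).support = (List.range (L+1)).map s := by
  induction L generalizing s with
  | zero => simp [mkWalk, List.range_succ]
  | succ L ih =>
      rw [List.range_succ_eq_map]
      simp [mkWalk, ih, List.map_map, Function.comp_def]

lemma tree_path_len {X : Type} {H : SimpleGraph X} (hH : H.IsAcyclic) {a b : X}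
    (hab : H.Adj a b) (L : ℕ) (s : ℕ → X) (h0 : s 0 = a) (hL : s L = b)
    (hadj : ∀ i, i < L → H.Adj (s i) (s (i+1)))
    (hinj : ∀ i j, i ≤ L → j ≤ L → i ≠ j → s i ≠ s j) : L = 1 := by
  have hab' : H.Adj (s 0) (s L) := by rw [h0, hL]; exact hab
  have hnd : ((List.range (L+1)).map s).Nodup := by
    refine List.Nodup.map_on ?_ List.nodup_range
    intro i hi j hj hij
    by_contra hne
    exact hinj i j (by simpa using Nat.lt_succ_iff.mp (List.mem_range.mp hi))
      (by simpa using Nat.lt_succ_iff.mp (List.mem_range.mp hj)) hne hij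
  have hpath : (mkWalk H L s hadj).IsPath := by
    rw [SimpleGraph.Walk.isPath_def, mkWalk_support]; exact hnd
  have := (isAcyclic_iff_path_unique.mp hH) (SimpleGraph.Path.singleton hab') ⟨mkWalk H L s hadj, hpath⟩
  have hlen := congrArg (fun p : H.Path (s 0) (s L) => p.1.length) this
  simpa [SimpleGraph.Path.singleton, mkWalk_length] using hlen.symm

lemma run_lo (P : ℕ → Prop) (i : ℕ) (h0 : ¬ P 0) (hi : P i) :
    ∃ lo, lo < i ∧ ¬ P lo ∧ ∀ j, lo < j → j ≤ i → P j := by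
  classical
  set lo := Nat.findGreatest (fun j => ¬ P j) i with hlo
  have hnot : ¬ P lo := Nat.findGreatest_spec (P := fun j => ¬ P j) (Nat.zero_le i) h0
  have hle : lo ≤ i := Nat.findGreatest_le i
  have hlt : lo < i := lt_of_le_of_ne hle (fun h => hnot (h ▸ hi))
  refine ⟨lo, hlt, hnot, fun j hj1 hj2 => ?_⟩
  have := Nat.findGreatest_is_greatest (P := fun j => ¬ P j) hj1 hj2
  exact not_not.mp this

lemma run_hi (P : ℕ → Prop) (i N : ℕ) (hiN : i ≤ N) (hN : ¬ P N) (hi : P i) :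
    ∃ h, i < h ∧ h ≤ N ∧ ¬ P h ∧ ∀ j, i ≤ j → j < h → P j := by
  classical
  have hex : ∃ d, ¬ P (i + d) := ⟨N - i, by rwa [Nat.add_sub_cancel' hiN]⟩
  have hd0 : ¬ P (i + Nat.find hex) := Nat.find_spec hex
  have hpos : 0 < Nat.find hex := by
    rcases Nat.eq_zero_or_pos (Nat.find hex) with h | h
    · exact absurd (by simpa [h] using hd0) (not_not.mpr hi)
    · exact h
  refine ⟨i + Nat.find hex, by omega, ?_, hd0, ?_⟩
  · by_contra hcon
    push_neg at hcon
    have hlt : N - i < Nat.find hex := by omega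
    have := Nat.find_min hex hlt
    rw [Nat.add_sub_cancel' hiN] at this
    exact this hN
  · intro j hj1 hj2
    have hlt : j - i < Nat.find hex := by omega
    have := Nat.find_min hex hlt
    rw [Nat.add_sub_cancel' hj1] at this
    exact not_not.mp this


section CVlemmas
variable {V W : Type} [LinearOrder V] [DecidableEq W] {G : SimpleGraph V}
  {GW : SimpleGraph W} {ga gb : W}

lemma e_ne (e : EdgeIdx G) : e.1.1 ≠ e.1.2 := ne_of_lt e.2.2

lemma emb_eq_ga (e : EdgeIdx G) : emb (G := G) ga gb e ga = Sum.inl e.1.1 := by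
  simp [emb]; rfl

lemma emb_eq_gb (hg : ga ≠ gb) (e : EdgeIdx G) :
    emb (G := G) ga gb e gb = Sum.inl e.1.2 := by
  simp [emb, hg.symm]; rfl

lemma emb_eq_int (e : EdgeIdx G) (z : {w : W // w ≠ ga ∧ w ≠ gb}) :
    emb (G := G) ga gb e z.1 = Sum.inr (e, z) := by
  simp [emb, z.2.1, z.2.2]; rfl

/-- Retraction from the combined vertex set back to gadget vertices. -/
def toW (e : EdgeIdx G) (ga gb : W) : CV G W ga gb → W
  | Sum.inl u => if u = e.1.1 then ga else gb
  | Sum.inr p => p.2.1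

lemma toW_emb (hg : ga ≠ gb) (e : EdgeIdx G) (w : W) :
    toW e ga gb (emb (G := G) ga gb e w) = w := by
  by_cases h1 : w = ga
  · subst h1; rw [emb_eq_ga]; simp [toW]
  by_cases h2 : w = gb
  · subst h2; rw [emb_eq_gb hg]; simp [toW, (e_ne e).symm]
  · rw [emb_eq_int e ⟨w, h1, h2⟩]; rfl

lemma emb_inj (hg : ga ≠ gb) (e : EdgeIdx G) :
    Function.Injective (emb (G := G) ga gb e) := fun w w' h => by
  rw [← toW_emb (G := G) hg e w, ← toW_emb (G := G) hg e w', h]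

lemma emb_eq_inl {e : EdgeIdx G} {w : W} {u : V} (hg : ga ≠ gb)
    (h : emb (G := G) ga gb e w = Sum.inl u) :
    (w = ga ∧ u = e.1.1) ∨ (w = gb ∧ u = e.1.2) := by
  by_cases h1 : w = ga
  · subst h1; rw [emb_eq_ga] at h; exact Or.inl ⟨rfl, (Sum.inl.inj h).symm⟩
  by_cases h2 : w = gb
  · subst h2; rw [emb_eq_gb hg] at h; exact Or.inr ⟨rfl, (Sum.inl.inj h).symm⟩
  · rw [emb_eq_int e ⟨w, h1, h2⟩] at h; exact absurd h Sum.inr_ne_inl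

lemma emb_eq_inr {e : EdgeIdx G} {w : W} {p : EdgeIdx G × {w : W // w ≠ ga ∧ w ≠ gb}}
    (h : emb (G := G) ga gb e w = Sum.inr p) : p.1 = e ∧ w = p.2.1 := by
  obtain ⟨p1, p2⟩ := p
  by_cases h1 : w = ga
  · subst h1; rw [emb_eq_ga] at h; exact absurd h Sum.inl_ne_inr
  by_cases h2 : w = gb
  · subst h2; rw [emb_eq_gb (fun h' => h1 h'.symm)] at h; exact absurd h Sum.inl_ne_inr
  · rw [emb_eq_int e ⟨w, h1, h2⟩] at h
    have h := Prod.mk.inj (Sum.inr.inj h)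
    exact ⟨h.1.symm, by rw [← h.2]⟩

lemma adj_of_mem {w w' : W} (hab : GW.Adj ga gb) (hne : w ≠ w')
    (hw : w = ga ∨ w = gb) (hw' : w' = ga ∨ w' = gb) : GW.Adj w w' := by
  rcases hw with h | h <;> rcases hw' with h' | h' <;> subst h <;> subst h' <;>
    first | exact absurd rfl hne | exact hab | exact hab.symm

lemma cadj_inl_inl {u v : V} (hg : ga ≠ gb)
    (h : CAdj G GW ga gb (Sum.inl u) (Sum.inl v)) : G.Adj u v := by
  rcases h with ⟨u', v', hadj, h1, h2⟩ | ⟨e, w, w', hadj, h1, h2⟩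
  · rw [Sum.inl.inj h1, Sum.inl.inj h2]; exact hadj
  · rcases emb_eq_inl hg h1.symm with ⟨hw, hu⟩ | ⟨hw, hu⟩ <;>
      rcases emb_eq_inl hg h2.symm with ⟨hw', hu'⟩ | ⟨hw', hu'⟩ <;>
        subst hu <;> subst hu' <;> subst hw <;> subst hw'
    · exact absurd hadj (GW.loopless.irrefl _)
    · exact e.2.1
    · exact e.2.1.symm
    · exact absurd hadj (GW.loopless.irrefl _)

lemma cadj_emb {e : EdgeIdx G} {w w' : W} (hab : GW.Adj ga gb) (hne : w ≠ w')
    (h : CAdj G GW ga gb (emb ga gb e w) (emb ga gb e w')) : GW.Adj w w' := by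
  have hg : ga ≠ gb := hab.ne
  rcases h with ⟨u, v, hadj, h1, h2⟩ | ⟨e', w2, w2', hadj, h1, h2⟩
  · rcases emb_eq_inl hg h1 with ⟨hw, _⟩ | ⟨hw, _⟩ <;>
      rcases emb_eq_inl hg h2 with ⟨hw', _⟩ | ⟨hw', _⟩ <;>
        exact adj_of_mem hab hne (by tauto) (by tauto)
  · by_cases he : e' = e
    · subst he
      rw [emb_inj hg e' h1, emb_inj hg e' h2]
      exact hadj
    · have key : ∀ a b : W, emb (G := G) ga gb e a = emb ga gb e' b →
          a = ga ∨ a = gb := by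
        intro a b hcon
        cases hcv : emb (G := G) ga gb e' b with
        | inl u =>
            rcases emb_eq_inl hg (hcon.trans hcv) with ⟨h', _⟩ | ⟨h', _⟩
            · exact Or.inl h'
            · exact Or.inr h'
        | inr p =>
            have hp1 := (emb_eq_inr (hcon.trans hcv)).1
            have hp2 := (emb_eq_inr hcv).1
            exact absurd (hp2.symm.trans hp1) he
      exact adj_of_mem hab hne (key w w2 h1) (key w' w2' h2)

end CVlemmas

section Runs
variable {V W : Type} [LinearOrder V] [DecidableEq W] {G : SimpleGraph V}
  {GW : SimpleGraph W} {ga gb : W}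

/-- Any combined edge into an `e`-internal vertex comes from inside copy `e`. -/
lemma cadj_inr_left {x : CV G W ga gb} {p : EdgeIdx G × {w : W // w ≠ ga ∧ w ≠ gb}}
    (hg : ga ≠ gb) (h : CAdj G GW ga gb x (Sum.inr p)) :
    ∃ w1, x = emb ga gb p.1 w1 ∧ GW.Adj w1 p.2.1 := by
  rcases h with ⟨u, v, hadj, h1, h2⟩ | ⟨e', w2, w2', hadj, h1, h2⟩
  · exact absurd h2 (by simp)
  · obtain ⟨he, hw⟩ := emb_eq_inr h2.symm
    subst he
    exact ⟨w2, h1, hw ▸ hadj⟩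

lemma cadj_inr_right {y : CV G W ga gb} {p : EdgeIdx G × {w : W // w ≠ ga ∧ w ≠ gb}}
    (hg : ga ≠ gb) (h : CAdj G GW ga gb (Sum.inr p) y) :
    ∃ w2, y = emb ga gb p.1 w2 ∧ GW.Adj p.2.1 w2 := by
  rcases h with ⟨u, v, hadj, h1, h2⟩ | ⟨e', w2, w2', hadj, h1, h2⟩
  · exact absurd h1 (by simp)
  · obtain ⟨he, hw⟩ := emb_eq_inr h1.symm
    subst he
    exact ⟨w2', h2, hw ▸ hadj⟩

/-- No interior vertex of gadget copy `e` occurs on a path whose endpoints are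
not interior to copy `e`. -/
lemma no_inr {len : ℕ} {vert : ℕ → CV G W ga gb}
    (hGWa : GW.IsAcyclic) (hab : GW.Adj ga gb)
    (hnodup : ∀ i j, i ≤ len → j ≤ len → i ≠ j → vert i ≠ vert j)
    (hadj : ∀ i, i < len → CAdj G GW ga gb (vert i) (vert (i+1)))
    (e : EdgeIdx G)
    (h0 : ¬ ∃ z, vert 0 = Sum.inr (e, z))
    (hN : ¬ ∃ z, vert len = Sum.inr (e, z)) :
    ∀ i ≤ len, ¬ ∃ z, vert i = Sum.inr (e, z) := by
  have hg : ga ≠ gb := hab.ne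
  intro i hilen hiP
  set P : ℕ → Prop := fun j => ∃ z, vert j = Sum.inr (e, z) with hP
  have hiltlen : i < len := lt_of_le_of_ne hilen (fun h => hN (h ▸ hiP))
  obtain ⟨lo, hlo1, hlo2, hlo3⟩ := run_lo P i h0 hiP
  obtain ⟨hi', hhi1, hhi2, hhi3, hhi4⟩ := run_hi P i len hilen hN hiP
  have hmid : ∀ j, lo < j → j < hi' → P j := by
    intro j hj1 hj2
    rcases le_or_gt j i with h | h
    · exact hlo3 j hj1 h
    · exact hhi4 j h.le hj2
  set L := hi' - lo with hL
  have hL2 : 2 ≤ L := by omega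
  set s : ℕ → W := fun m => toW e ga gb (vert (lo + m)) with hs
  -- each vertex on [lo, hi'] is the embedding of its retraction
  have hemb : ∀ m ≤ L, vert (lo + m) = emb ga gb e (s m) := by
    intro m hm
    rcases Nat.eq_zero_or_pos m with rfl | hmpos
    · -- boundary lo
      obtain ⟨z1, hz1⟩ := hmid (lo + 1) (by omega) (by omega)
      have hadjlo := hadj lo (by omega)
      rw [hz1] at hadjlo
      obtain ⟨w1, hw1, -⟩ := cadj_inr_left hg hadjlo
      simp only [hs, Nat.add_zero]
      rw [hw1, toW_emb hg]
    rcases eq_or_lt_of_le hm with rfl | hmlt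
    · -- boundary hi'
      obtain ⟨z2, hz2⟩ := hmid (hi' - 1) (by omega) (by omega)
      have hadjhi := hadj (hi' - 1) (by omega)
      rw [hz2] at hadjhi
      have hstep : hi' - 1 + 1 = hi' := by omega
      rw [hstep] at hadjhi
      obtain ⟨w2, hw2, -⟩ := cadj_inr_right hg hadjhi
      have hlom : lo + L = hi' := by omega
      simp only [hs]
      rw [hlom, hw2, toW_emb hg]
    · -- interior
      obtain ⟨z, hz⟩ := hmid (lo + m) (by omega) (by omega)
      simp only [hs]
      rw [hz]
      show Sum.inr (e, z) = emb ga gb e z.1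
      exact (emb_eq_int e z).symm
  have hends : ∀ m, m = 0 ∨ m = L → s m = ga ∨ s m = gb := by
    intro m hm
    by_contra hcon
    push_neg at hcon
    have : vert (lo + m) = Sum.inr (e, ⟨s m, hcon.1, hcon.2⟩) := by
      rw [hemb m (by rcases hm with rfl | rfl <;> omega)]
      exact (emb_eq_int e ⟨s m, hcon.1, hcon.2⟩).symm ▸ rfl
    rcases hm with rfl | rfl
    · exact hlo2 ⟨_, by simpa using this⟩
    · have : P hi' := ⟨_, by rw [← show lo + L = hi' by omega]; exact this⟩
      exact hhi3 this
  have hsinj : ∀ m m', m ≤ L → m' ≤ L → m ≠ m' → s m ≠ s m' := by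
    intro m m' hm hm' hne heq
    exact hnodup (lo + m) (lo + m') (by omega) (by omega) (by omega)
      (by rw [hemb m hm, hemb m' hm', heq])
  have hadj' : ∀ m, m < L → GW.Adj (s m) (s (m+1)) := by
    intro m hm
    have hc : CAdj G GW ga gb (emb ga gb e (s m)) (emb ga gb e (s (m+1))) := by
      rw [← hemb m (by omega), ← hemb (m+1) (by omega), ← Nat.add_assoc]
      exact hadj (lo + m) (by omega)
    exact cadj_emb hab (hsinj m (m+1) (by omega) (by omega) (by omega)) hc
  have habs : GW.Adj (s 0) (s L) :=
    adj_of_mem hab (hsinj 0 L (by omega) (by omega) (by omega))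
      (hends 0 (Or.inl rfl)) (hends L (Or.inr rfl))
  have := tree_path_len hGWa habs L s rfl rfl hadj' hsinj
  omega

end Runs

section Runs2
variable {V W : Type} [LinearOrder V] [DecidableEq W] {G : SimpleGraph V}
  {GW : SimpleGraph W} {ga gb : W}

/-- Retraction to original tree vertices. -/
def toV (d : V) (ga gb : W) : CV G W ga gb → V
  | Sum.inl u => u
  | Sum.inr _ => d

lemma no_badV {len : ℕ} {vert : ℕ → CV G W ga gb}
    (hGa : G.IsAcyclic) (hab : GW.Adj ga gb)
    (hnodup : ∀ i j, i ≤ len → j ≤ len → i ≠ j → vert i ≠ vert j)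
    (hadj : ∀ i, i < len → CAdj G GW ga gb (vert i) (vert (i+1)))
    (e : EdgeIdx G)
    (hcopy : ∀ i ≤ len, (∃ u, vert i = Sum.inl u) ∨ ∃ z, vert i = Sum.inr (e, z))
    (h0 : ∀ u, vert 0 = Sum.inl u → u = e.1.1 ∨ u = e.1.2)
    (hN : ∀ u, vert len = Sum.inl u → u = e.1.1 ∨ u = e.1.2) :
    ∀ i ≤ len, ∀ u, vert i = Sum.inl u → u = e.1.1 ∨ u = e.1.2 := by
  have hg : ga ≠ gb := hab.ne
  intro i hilen u hvi
  by_contra hcon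
  push_neg at hcon
  set P : ℕ → Prop := fun j => ∃ c, vert j = Sum.inl c ∧ c ≠ e.1.1 ∧ c ≠ e.1.2 with hP
  have hP0 : ¬ P 0 := by
    rintro ⟨c, hc, h1, h2⟩
    rcases h0 c hc with rfl | rfl <;> simp_all
  have hPN : ¬ P len := by
    rintro ⟨c, hc, h1, h2⟩
    rcases hN c hc with rfl | rfl <;> simp_all
  have hPi : P i := ⟨u, hvi, hcon.1, hcon.2⟩
  have hiltlen : i < len := lt_of_le_of_ne hilen (fun h => hPN (h ▸ hPi))
  obtain ⟨lo, hlo1, hlo2, hlo3⟩ := run_lo P i hP0 hPi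
  obtain ⟨hi', hhi1, hhi2, hhi3, hhi4⟩ := run_hi P i len hilen hPN hPi
  have hmid : ∀ j, lo < j → j < hi' → P j := by
    intro j hj1 hj2
    rcases le_or_gt j i with h | h
    · exact hlo3 j hj1 h
    · exact hhi4 j h.le hj2
  set L := hi' - lo with hL
  have hL2 : 2 ≤ L := by omega
  -- boundary lo is an endpoint of e
  have hblo : ∃ u0, vert lo = Sum.inl u0 ∧ (u0 = e.1.1 ∨ u0 = e.1.2) := by
    obtain ⟨c1, hc1, hc11, hc12⟩ := hmid (lo + 1) (by omega) (by omega)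
    rcases hcopy lo (by omega) with ⟨u0, hu0⟩ | ⟨z, hz⟩
    · refine ⟨u0, hu0, ?_⟩
      by_contra hcc
      push_neg at hcc
      exact hlo2 ⟨u0, hu0, hcc.1, hcc.2⟩
    · exfalso
      have hadjlo := hadj lo (by omega)
      rw [hz] at hadjlo
      obtain ⟨w2, hw2, -⟩ := cadj_inr_right hg hadjlo
      rw [hc1] at hw2
      rcases emb_eq_inl hg hw2.symm with ⟨-, hcy⟩ | ⟨-, hcy⟩
      · exact hc11 hcy
      · exact hc12 hcy
  have hbhi : ∃ u1, vert hi' = Sum.inl u1 ∧ (u1 = e.1.1 ∨ u1 = e.1.2) := by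
    obtain ⟨c2, hc2, hc21, hc22⟩ := hmid (hi' - 1) (by omega) (by omega)
    rcases hcopy hi' (by omega) with ⟨u1, hu1⟩ | ⟨z, hz⟩
    · refine ⟨u1, hu1, ?_⟩
      by_contra hcc
      push_neg at hcc
      exact hhi3 ⟨u1, hu1, hcc.1, hcc.2⟩
    · exfalso
      have hadjhi := hadj (hi' - 1) (by omega)
      have hstep : hi' - 1 + 1 = hi' := by omega
      rw [hstep, hz] at hadjhi
      obtain ⟨w1, hw1, -⟩ := cadj_inr_left hg hadjhi
      rw [hc2] at hw1
      rcases emb_eq_inl hg hw1.symm with ⟨-, hcy⟩ | ⟨-, hcy⟩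
      · exact hc21 hcy
      · exact hc22 hcy
  obtain ⟨u0, hu0, hu0e⟩ := hblo
  obtain ⟨u1, hu1, hu1e⟩ := hbhi
  set t : ℕ → V := fun m => toV e.1.1 ga gb (vert (lo + m)) with ht
  have hembV : ∀ m ≤ L, vert (lo + m) = Sum.inl (t m) := by
    intro m hm
    rcases Nat.eq_zero_or_pos m with rfl | hmpos
    · simp only [ht, Nat.add_zero]
      rw [hu0]
      rfl
    rcases eq_or_lt_of_le hm with rfl | hmlt
    · have hlom : lo + L = hi' := by omega
      simp only [ht]
      rw [hlom, hu1]
      rfl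
    · obtain ⟨c, hc, -, -⟩ := hmid (lo + m) (by omega) (by omega)
      simp only [ht]
      rw [hc]
      rfl
  have htinj : ∀ m m', m ≤ L → m' ≤ L → m ≠ m' → t m ≠ t m' := by
    intro m m' hm hm' hne heq
    exact hnodup (lo + m) (lo + m') (by omega) (by omega) (by omega)
      (by rw [hembV m hm, hembV m' hm', heq])
  have hadj' : ∀ m, m < L → G.Adj (t m) (t (m+1)) := by
    intro m hm
    have hc : CAdj G GW ga gb (Sum.inl (t m)) (Sum.inl (t (m+1))) := by
      rw [← hembV m (by omega), ← hembV (m+1) (by omega), ← Nat.add_assoc]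
      exact hadj (lo + m) (by omega)
    exact cadj_inl_inl hg hc
  have ht0 : t 0 = u0 := by
    simp only [ht, Nat.add_zero]
    rw [hu0]
    rfl
  have htL : t L = u1 := by
    have hlom : lo + L = hi' := by omega
    simp only [ht]
    rw [hlom, hu1]
    rfl
  have habs : G.Adj (t 0) (t L) := by
    have hne : t 0 ≠ t L := htinj 0 L (by omega) (by omega) (by omega)
    rw [ht0, htL] at hne ⊢
    rcases hu0e with rfl | rfl <;> rcases hu1e with rfl | rfl <;>
      first | exact absurd rfl hne | exact e.2.1 | exact e.2.1.symm
  have := tree_path_len hGa habs L t rfl rfl hadj' htinj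
  omega

lemma copy_closed {len : ℕ} {vert : ℕ → CV G W ga gb}
    (hGa : G.IsAcyclic) (hGWa : GW.IsAcyclic) (hab : GW.Adj ga gb)
    (hnodup : ∀ i j, i ≤ len → j ≤ len → i ≠ j → vert i ≠ vert j)
    (hadj : ∀ i, i < len → CAdj G GW ga gb (vert i) (vert (i+1)))
    (e : EdgeIdx G) (x y : W)
    (h0 : vert 0 = emb ga gb e x) (hN : vert len = emb ga gb e y) :
    ∀ i ≤ len, vert i = emb ga gb e (toW e ga gb (vert i)) := by
  have hg : ga ≠ gb := hab.ne
  have hcopy : ∀ i ≤ len, (∃ u, vert i = Sum.inl u) ∨ ∃ z, vert i = Sum.inr (e, z) := by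
    intro i hi
    rcases hv : vert i with u | ⟨p1, p2⟩
    · exact Or.inl ⟨u, rfl⟩
    · by_cases hp : p1 = e
      · subst hp; exact Or.inr ⟨p2, rfl⟩
      · exfalso
        refine no_inr hGWa hab hnodup hadj p1 ?_ ?_ i hi ⟨p2, hv⟩
        · rintro ⟨z, hz⟩
          rw [h0] at hz
          exact hp (emb_eq_inr hz).1
        · rintro ⟨z, hz⟩
          rw [hN] at hz
          exact hp (emb_eq_inr hz).1
  have hend0 : ∀ u, vert 0 = Sum.inl u → u = e.1.1 ∨ u = e.1.2 := by
    intro u hu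
    rw [h0] at hu
    rcases emb_eq_inl hg hu with ⟨-, rfl⟩ | ⟨-, rfl⟩
    · exact Or.inl rfl
    · exact Or.inr rfl
  have hendN : ∀ u, vert len = Sum.inl u → u = e.1.1 ∨ u = e.1.2 := by
    intro u hu
    rw [hN] at hu
    rcases emb_eq_inl hg hu with ⟨-, rfl⟩ | ⟨-, rfl⟩
    · exact Or.inl rfl
    · exact Or.inr rfl
  have hbad := no_badV hGa hab hnodup hadj e hcopy hend0 hendN
  intro i hi
  rcases hcopy i hi with ⟨u, hu⟩ | ⟨z, hz⟩
  · rcases hbad i hi u hu with rfl | rfl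
    · rw [hu]
      show Sum.inl e.1.1 = emb ga gb e (toW e ga gb (Sum.inl e.1.1))
      have : toW (G := G) e ga gb (Sum.inl e.1.1) = ga := by simp [toW]
      rw [this, emb_eq_ga]
    · rw [hu]
      show Sum.inl e.1.2 = emb ga gb e (toW e ga gb (Sum.inl e.1.2))
      have : toW (G := G) e ga gb (Sum.inl e.1.2) = gb := by simp [toW, (e_ne e).symm]
      rw [this, emb_eq_gb hg]
  · rw [hz]
    show Sum.inr (e, z) = emb ga gb e (toW e ga gb (Sum.inr (e, z)))
    have : toW (G := G) e ga gb (Sum.inr (e, z)) = z.1 := rfl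
    rw [this, emb_eq_int]

end Runs2

section Proj
variable {V W : Type} [LinearOrder V] [DecidableEq W] {G : SimpleGraph V}
  {GW : SimpleGraph W} {ga gb : W}

/-- Generic relabeling of a temporal path when labels agree on edges. -/
lemma relabel {X : Type} {A : X → X → Prop} {lab1 lab2 : X → X → ℕ} {Δ : ℕ}
    {u v : X} (h : ∀ a b, A a b → lab1 a b = lab2 a b)
    (p : TempPath X A lab1 Δ u v) :
    ∃ q : TempPath X A lab2 Δ u v, q.duration = p.duration :=
  ⟨{ p with label_mem := fun i hi =>
      (p.label_mem i hi).trans (by rw [h _ _ (p.adj i hi)]) }, rfl⟩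

/-- Generic lifting of a temporal path along an injective map. -/
lemma lift_path {X Y : Type} {A : X → X → Prop} {A' : Y → Y → Prop}
    {lab1 : X → X → ℕ} {lab2 : Y → Y → ℕ} {Δ : ℕ} {u v : X}
    (f : X → Y) (hf : Function.Injective f)
    (hA : ∀ a b, A a b → A' (f a) (f b))
    (hlab : ∀ a b, A a b → lab1 a b = lab2 (f a) (f b))
    (p : TempPath X A lab1 Δ u v) :
    ∃ q : TempPath Y A' lab2 Δ (f u) (f v), q.duration = p.duration :=
  ⟨{ len := p.len, len_pos := p.len_pos, vert := fun i => f (p.vert i),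
     time := p.time,
     source := by show f (p.vert 0) = f u; rw [p.source],
     target := by show f (p.vert p.len) = f v; rw [p.target],
     nodup := fun i j hi hj hij h => p.nodup i j hi hj hij (hf h),
     adj := fun i hi => hA _ _ (p.adj i hi),
     label_mem := fun i hi => (p.label_mem i hi).trans
       (by rw [hlab _ _ (p.adj i hi)]),
     strict := p.strict }, rfl⟩

/-- Project a combined temporal path between two vertices of gadget copy `e`
back to a gadget temporal path. -/
lemma project_gadget (hGa : G.IsAcyclic) (hGWa : GW.IsAcyclic) (hab : GW.Adj ga gb)
    {lab' : CV G W ga gb → CV G W ga gb → ℕ} {Δ : ℕ} (e : EdgeIdx G) (x y : W)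
    (p : TempPath (CV G W ga gb) (CAdj G GW ga gb) lab' Δ
      (emb ga gb e x) (emb ga gb e y)) :
    ∃ q : TempPath W GW.Adj
        (fun w w' => lab' (emb ga gb e w) (emb ga gb e w')) Δ x y,
      q.duration = p.duration := by
  have hg : ga ≠ gb := hab.ne
  have hkey : ∀ i ≤ p.len, p.vert i = emb ga gb e (toW e ga gb (p.vert i)) :=
    copy_closed hGa hGWa hab p.nodup p.adj e x y p.source p.target
  refine ⟨{ len := p.len, len_pos := p.len_pos,
              vert := fun i => toW e ga gb (p.vert i), time := p.time,
              source := by show toW e ga gb (p.vert 0) = x; rw [p.source, toW_emb hg],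
              target := by show toW e ga gb (p.vert p.len) = y; rw [p.target, toW_emb hg],
              nodup := fun i j hi hj hij h => p.nodup i j hi hj hij
                (by rw [hkey i hi, hkey j hj]; exact congrArg _ h),
              adj := ?_, label_mem := ?_, strict := p.strict }, rfl⟩
  · intro i hi
    show GW.Adj (toW e ga gb (p.vert i)) (toW e ga gb (p.vert (i+1)))
    refine cadj_emb (e := e) hab ?_ ?_
    · intro h
      exact p.nodup i (i+1) (by omega) (by omega) (by omega)
        (by rw [hkey i (by omega), hkey (i+1) (by omega)]; exact congrArg _ h)
    · rw [← hkey i (by omega), ← hkey (i+1) (by omega)]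
      exact p.adj i hi
  · intro i hi
    show p.time i % Δ = lab' (emb ga gb e (toW e ga gb (p.vert i)))
      (emb ga gb e (toW e ga gb (p.vert (i+1)))) % Δ
    rw [← hkey i (by omega), ← hkey (i+1) (by omega)]
    exact p.label_mem i hi

/-- Project a combined temporal path between two original tree vertices back
to a tree temporal path. -/
lemma project_tree (hGa : G.IsAcyclic) (hGWa : GW.IsAcyclic) (hab : GW.Adj ga gb)
    {lab' : CV G W ga gb → CV G W ga gb → ℕ} {Δ : ℕ} (u v : V)
    (p : TempPath (CV G W ga gb) (CAdj G GW ga gb) lab' Δ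
      (Sum.inl u) (Sum.inl v)) :
    ∃ q : TempPath V G.Adj
        (fun a b => lab' (Sum.inl a) (Sum.inl b)) Δ u v,
      q.duration = p.duration := by
  have hg : ga ≠ gb := hab.ne
  have hkey : ∀ i ≤ p.len, p.vert i = Sum.inl (toV u ga gb (p.vert i)) := by
    intro i hi
    rcases hv : p.vert i with c | ⟨p1, p2⟩
    · rfl
    · exfalso
      refine no_inr hGWa hab p.nodup p.adj p1 ?_ ?_ i hi ⟨p2, hv⟩
      · rintro ⟨z, hz⟩
        rw [p.source] at hz
        exact absurd hz (by simp)
      · rintro ⟨z, hz⟩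
        rw [p.target] at hz
        exact absurd hz (by simp)
  refine ⟨{ len := p.len, len_pos := p.len_pos,
              vert := fun i => toV u ga gb (p.vert i), time := p.time,
              source := by show toV u ga gb (p.vert 0) = u; rw [p.source]; rfl,
              target := by show toV u ga gb (p.vert p.len) = v; rw [p.target]; rfl,
              nodup := fun i j hi hj hij h => p.nodup i j hi hj hij
                (by rw [hkey i hi, hkey j hj]; exact congrArg _ h),
              adj := ?_, label_mem := ?_, strict := p.strict }, rfl⟩
  · intro i hi
    show G.Adj (toV u ga gb (p.vert i)) (toV u ga gb (p.vert (i+1)))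
    refine cadj_inl_inl (GW := GW) hg ?_
    rw [← hkey i (by omega), ← hkey (i+1) (by omega)]
    exact p.adj i hi
  · intro i hi
    show p.time i % Δ = lab' (Sum.inl (toV u ga gb (p.vert i)))
      (Sum.inl (toV u ga gb (p.vert (i+1)))) % Δ
    rw [← hkey i (by omega), ← hkey (i+1) (by omega)]
    exact p.label_mem i hi

end Proj

section Main
variable {V W : Type} [LinearOrder V] [DecidableEq W] {G : SimpleGraph V}
  {GW : SimpleGraph W} {ga gb : W}

instance : DecidableEq (EdgeIdx G) := by unfold EdgeIdx; infer_instance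

/-- The combined labeling built from a tree labeling and per-copy gadget
labelings. -/
def clab (ka kb : W) (lab : V → V → ℕ) (labg : EdgeIdx G → W → W → ℕ) :
    CV G W ka kb → CV G W ka kb → ℕ
  | Sum.inl u, Sum.inl v => lab u v
  | Sum.inl u, Sum.inr (e, z) =>
      if u = e.1.1 then labg e ka z.1 else if u = e.1.2 then labg e kb z.1 else 0
  | Sum.inr (e, z), Sum.inl v =>
      if v = e.1.1 then labg e z.1 ka else if v = e.1.2 then labg e z.1 kb else 0
  | Sum.inr (e, z), Sum.inr (e', z') => if e = e' then labg e z.1 z'.1 else 0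

lemma clab_lt {lab : V → V → ℕ} {labg : EdgeIdx G → W → W → ℕ} {Δ : ℕ}
    (hΔ : 1 ≤ Δ) (hlab : ∀ a b, lab a b < Δ) (hlabg : ∀ e x y, labg e x y < Δ) :
    ∀ x y : CV G W ga gb, clab ga gb lab labg x y < Δ := by
  intro x y
  rcases x with u | ⟨e, z⟩ <;> rcases y with v | ⟨e', z'⟩ <;>
    simp only [clab] <;> (try split_ifs) <;>
    first | exact hlab _ _ | exact hlabg _ _ _ | omega

lemma clab_emb (hg : ga ≠ gb) {lab : V → V → ℕ} {labg : EdgeIdx G → W → W → ℕ}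
    (hsymm : ∀ a b, lab a b = lab b a)
    (hga : ∀ e : EdgeIdx G, labg e ga gb = lab e.1.1 e.1.2)
    (hgb : ∀ e : EdgeIdx G, labg e gb ga = lab e.1.1 e.1.2)
    (e : EdgeIdx G) {w w' : W} (hne : w ≠ w') :
    clab ga gb lab labg (emb ga gb e w) (emb ga gb e w') = labg e w w' := by
  have tri : ∀ a : W, a = ga ∨ a = gb ∨ (a ≠ ga ∧ a ≠ gb) := by tauto
  rcases tri w with hw | hw | ⟨hw1, hw2⟩ <;>
    rcases tri w' with hw' | hw' | ⟨hw1', hw2'⟩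
  · exact absurd (hw.trans hw'.symm) hne
  · rw [hw, hw', emb_eq_ga, emb_eq_gb hg]
    show lab e.1.1 e.1.2 = labg e ga gb
    exact (hga e).symm
  · have h3 : emb (G := G) ga gb e w' = Sum.inr (e, ⟨w', hw1', hw2'⟩) :=
      emb_eq_int e ⟨w', hw1', hw2'⟩
    rw [hw, emb_eq_ga, h3]
    simp [clab]
  · rw [hw, hw', emb_eq_gb hg, emb_eq_ga]
    show lab e.1.2 e.1.1 = labg e gb ga
    rw [hsymm]
    exact (hgb e).symm
  · exact absurd (hw.trans hw'.symm) hne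
  · have h3 : emb (G := G) ga gb e w' = Sum.inr (e, ⟨w', hw1', hw2'⟩) :=
      emb_eq_int e ⟨w', hw1', hw2'⟩
    rw [hw, emb_eq_gb hg, h3]
    simp [clab, (e_ne e).symm]
  · have h3 : emb (G := G) ga gb e w = Sum.inr (e, ⟨w, hw1, hw2⟩) :=
      emb_eq_int e ⟨w, hw1, hw2⟩
    rw [h3, hw', emb_eq_ga]
    simp [clab]
  · have h3 : emb (G := G) ga gb e w = Sum.inr (e, ⟨w, hw1, hw2⟩) :=
      emb_eq_int e ⟨w, hw1, hw2⟩
    rw [h3, hw', emb_eq_gb hg]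
    simp [clab, (e_ne e).symm]
  · have h3 : emb (G := G) ga gb e w = Sum.inr (e, ⟨w, hw1, hw2⟩) :=
      emb_eq_int e ⟨w, hw1, hw2⟩
    have h4 : emb (G := G) ga gb e w' = Sum.inr (e, ⟨w', hw1', hw2'⟩) :=
      emb_eq_int e ⟨w', hw1', hw2'⟩
    rw [h3, h4]
    simp [clab]

end Main
/-- Suppose there is a DiTTR gadget (a bidirected tree GW with
bound function Dg, where `Dg x y = none` means no constraint) containing an
antiparallel edge pair (ga, gb) such that every feasible labeling satisfies
λ(ga,gb) = λ(gb,ga), while for each value c ∈ {0,…,Δ-1} some feasible labeling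
attains λ(ga,gb) = λ(gb,ga) = c. Then the undirected instance (G, D, Δ) of
Δ-k-TTR is feasible iff the directed instance obtained by bidirecting G and
attaching a disjoint gadget copy to each tree edge (with bounds extended
consistently) is feasible. -/
theorem stmt17 {V W : Type} [LinearOrder V] [DecidableEq W]
    (G : SimpleGraph V) (hG : G.IsTree)
    (Δ k : ℕ) (hΔ : 1 ≤ Δ)
    (D : V → V → ℕ) (hD : ∀ u v : V, u ≠ v → G.dist u v + k ≤ D u v)
    (GW : SimpleGraph W) (hGW : GW.IsTree)
    (ga gb : W) (hab : GW.Adj ga gb)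
    (Dg : W → W → Option ℕ)
    (hshift : ∀ c < Δ, ∃ labg : W → W → ℕ, (∀ x y, labg x y < Δ) ∧
      labg ga gb = c ∧ labg gb ga = c ∧
      ∀ x y m, Dg x y = some m → x ≠ y →
        ∃ p : TempPath W GW.Adj labg Δ x y, p.duration ≤ m)
    (hforce : ∀ labg : W → W → ℕ, (∀ x y, labg x y < Δ) →
      (∀ x y m, Dg x y = some m → x ≠ y →
        ∃ p : TempPath W GW.Adj labg Δ x y, p.duration ≤ m) →
      labg ga gb = labg gb ga) :
    ((∃ lab : V → V → ℕ, (∀ a b, lab a b < Δ) ∧ (∀ a b, lab a b = lab b a) ∧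
        ∀ u v : V, u ≠ v →
          ∃ p : TempPath V G.Adj lab Δ u v, p.duration ≤ D u v)
      ↔
     (∃ lab : CV G W ga gb → CV G W ga gb → ℕ, (∀ x y, lab x y < Δ) ∧
        (∀ u v : V, u ≠ v →
          ∃ p : TempPath (CV G W ga gb) (CAdj G GW ga gb) lab Δ
              (Sum.inl u) (Sum.inl v), p.duration ≤ D u v) ∧
        (∀ (e : EdgeIdx G) (x y : W) (m : ℕ), Dg x y = some m →
          emb ga gb e x ≠ emb ga gb e y →
          ∃ p : TempPath (CV G W ga gb) (CAdj G GW ga gb) lab Δ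
              (emb ga gb e x) (emb ga gb e y), p.duration ≤ m))) := by
  classical
  have hg : ga ≠ gb := hab.ne
  constructor
  · rintro ⟨lab, hlt, hsymm, hpath⟩
    have hch : ∀ e : EdgeIdx G, ∃ lg : W → W → ℕ, (∀ x y, lg x y < Δ) ∧
        lg ga gb = lab e.1.1 e.1.2 ∧ lg gb ga = lab e.1.1 e.1.2 ∧
        ∀ x y m, Dg x y = some m → x ≠ y →
          ∃ p : TempPath W GW.Adj lg Δ x y, p.duration ≤ m :=
      fun e => hshift _ (hlt _ _)
    choose labg hlabglt hga' hgb' hfeas using hch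
    refine ⟨clab ga gb lab labg, clab_lt hΔ hlt hlabglt, ?_, ?_⟩
    · intro u v huv
      obtain ⟨p, hp⟩ := hpath u v huv
      obtain ⟨q, hq⟩ := lift_path (A := G.Adj) (A' := CAdj G GW ga gb)
        (lab2 := clab ga gb lab labg)
        (fun a : V => (Sum.inl a : CV G W ga gb)) (fun a b h => Sum.inl.inj h)
        (fun a b h => Or.inl ⟨a, b, h, rfl, rfl⟩)
        (fun a b _ => rfl) p
      exact ⟨q, by rw [hq]; exact hp⟩
    · intro e x y m hDg hne
      have hxy : x ≠ y := fun h => hne (by rw [h])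
      obtain ⟨p, hp⟩ := hfeas e x y m hDg hxy
      obtain ⟨q, hq⟩ := lift_path (A' := CAdj G GW ga gb)
        (lab2 := clab ga gb lab labg)
        (emb ga gb e) (emb_inj hg e)
        (fun a b h => Or.inr ⟨e, a, b, h, rfl, rfl⟩)
        (fun a b h => (clab_emb hg hsymm hga' hgb' e h.ne).symm) p
      exact ⟨q, by rw [hq]; exact hp⟩
  · rintro ⟨lab', hlt', htree, hgad⟩
    have hfeasR : ∀ e : EdgeIdx G, ∀ x y m, Dg x y = some m → x ≠ y →
        ∃ p : TempPath W GW.Adj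
          (fun w w' => lab' (emb ga gb e w) (emb ga gb e w')) Δ x y,
          p.duration ≤ m := by
      intro e x y m hDg hxy
      obtain ⟨p, hp⟩ := hgad e x y m hDg (fun h => hxy (emb_inj hg e h))
      obtain ⟨q, hq⟩ := project_gadget hG.IsAcyclic hGW.IsAcyclic hab e x y p
      exact ⟨q, by rw [hq]; exact hp⟩
    have hforce' : ∀ e : EdgeIdx G,
        lab' (Sum.inl e.1.1) (Sum.inl e.1.2) = lab' (Sum.inl e.1.2) (Sum.inl e.1.1) := by
      intro e
      have h1 := hforce (fun w w' => lab' (emb ga gb e w) (emb ga gb e w'))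
        (fun _ _ => hlt' _ _) (hfeasR e)
      simp only [emb_eq_ga, emb_eq_gb hg] at h1
      exact h1
    refine ⟨fun a b => if _ : G.Adj a b then lab' (Sum.inl a) (Sum.inl b) else 0,
      ?_, ?_, ?_⟩
    · intro a b
      dsimp only
      split_ifs
      exacts [hlt' _ _, hΔ]
    · intro a b
      by_cases h : G.Adj a b
      · simp only [dif_pos h, dif_pos h.symm]
        rcases lt_trichotomy a b with hlt2 | heq | hgt
        · exact hforce' ⟨(a, b), h, hlt2⟩
        · exact absurd heq h.ne
        · exact (hforce' ⟨(b, a), h.symm, hgt⟩).symm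
      · simp only [dif_neg h, dif_neg (fun h' : G.Adj b a => h h'.symm)]
    · intro u v huv
      obtain ⟨p, hp⟩ := htree u v huv
      obtain ⟨q, hq⟩ := project_tree hG.IsAcyclic hGW.IsAcyclic hab u v p
      obtain ⟨r, hr⟩ := relabel (A := G.Adj)
        (lab1 := fun a b => lab' (Sum.inl a) (Sum.inl b))
        (lab2 := fun a b => if _ : G.Adj a b then lab' (Sum.inl a) (Sum.inl b) else 0)
        (fun a b hadj => by simp only [dif_pos hadj]) q
      exact ⟨r, by rw [hr, hq]; exact hp⟩
end

section
/- In the Δ = 4, k = 0 gadget (bidirected path 3–4–5–6 with leaves 1, 2 attached to 3 and leaves 7, 8 attached to 6, with constraints D_{1,2}=D_{2,1}=D_{7,8}=D_{8,7}=2, D_{5,7}=D_{4,1}=2, D_{8,4}=D_{2,5}=3, D_{8,1}=D_{2,7}=6): every feasible 4-periodic labeling satisfies λ(4,5) = λ(5,4); moreover a feasible labeling exists, and with the normalization λ(8,6)=1 the forced value is λ(4,5) = λ(5,4) = 3. -/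
/-- One orientation of the undirected edges of the Δ = 4, k = 0 gadget:
leaves 1, 2 at vertex 3, path 3 – 4 – 5 – 6, leaves 7, 8 at vertex 6. -/
def g4AdjHalf : ℕ → ℕ → Prop := fun x y =>
  (x = 1 ∧ y = 3) ∨ (x = 2 ∧ y = 3) ∨ (x = 3 ∧ y = 4) ∨ (x = 4 ∧ y = 5) ∨
  (x = 5 ∧ y = 6) ∨ (x = 6 ∧ y = 7) ∨ (x = 6 ∧ y = 8)

/-- The bidirected adjacency of the Δ = 4, k = 0 gadget. -/
def g4Adj : ℕ → ℕ → Prop := fun x y => g4AdjHalf x y ∨ g4AdjHalf y x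

/-- Satisfaction of the gadget's constraints D₁₂ = D₂₁ = D₇₈ = D₈₇ = 2,
D₅₇ = D₄₁ = 2, D₈₄ = D₂₅ = 3, D₈₁ = D₂₇ = 6 by a 4-periodic labeling. -/
def Sat4 (lab : ℕ → ℕ → ℕ) : Prop :=
  (∃ p : TempPath ℕ g4Adj lab 4 1 2, p.duration ≤ 2) ∧
  (∃ p : TempPath ℕ g4Adj lab 4 2 1, p.duration ≤ 2) ∧
  (∃ p : TempPath ℕ g4Adj lab 4 7 8, p.duration ≤ 2) ∧
  (∃ p : TempPath ℕ g4Adj lab 4 8 7, p.duration ≤ 2) ∧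
  (∃ p : TempPath ℕ g4Adj lab 4 5 7, p.duration ≤ 2) ∧
  (∃ p : TempPath ℕ g4Adj lab 4 4 1, p.duration ≤ 2) ∧
  (∃ p : TempPath ℕ g4Adj lab 4 8 4, p.duration ≤ 3) ∧
  (∃ p : TempPath ℕ g4Adj lab 4 2 5, p.duration ≤ 3) ∧
  (∃ p : TempPath ℕ g4Adj lab 4 8 1, p.duration ≤ 6) ∧
  (∃ p : TempPath ℕ g4Adj lab 4 2 7, p.duration ≤ 6)

lemma len_le_dur {V : Type} {A : V → V → Prop} {lab : V → V → ℕ} {Δ : ℕ}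
    {u v : V} (p : TempPath V A lab Δ u v) : p.len ≤ p.duration := by
  have mono : ∀ i, i < p.len → p.time 0 + i ≤ p.time i := by
    intro i
    induction i with
    | zero => intro _; omega
    | succ n ih =>
      intro h
      have h1 := p.strict n h
      have h2 := ih (by omega)
      omega
  have h1 := p.len_pos
  have h2 := mono (p.len - 1) (by omega)
  unfold TempPath.duration
  omega

lemma g4_symm {x y : ℕ} (h : g4Adj x y) : g4Adj y x := h.symm

lemma g4_cases {x y : ℕ} (h : g4Adj x y) :
    (x = 1 ∧ y = 3) ∨ (x = 2 ∧ y = 3) ∨ (x = 3 ∧ y = 4) ∨ (x = 4 ∧ y = 5) ∨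
    (x = 5 ∧ y = 6) ∨ (x = 6 ∧ y = 7) ∨ (x = 6 ∧ y = 8) ∨
    (x = 3 ∧ y = 1) ∨ (x = 3 ∧ y = 2) ∨ (x = 4 ∧ y = 3) ∨ (x = 5 ∧ y = 4) ∨
    (x = 6 ∧ y = 5) ∨ (x = 7 ∧ y = 6) ∨ (x = 8 ∧ y = 6) := by
  simp only [g4Adj, g4AdjHalf] at h
  rcases h with (h|h|h|h|h|h|h)|(h|h|h|h|h|h|h) <;> obtain ⟨rfl, rfl⟩ := h <;> norm_num

lemma nbr1 {y : ℕ} (h : g4Adj 1 y) : y = 3 := by have := g4_cases h; omega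
lemma nbr2 {y : ℕ} (h : g4Adj 2 y) : y = 3 := by have := g4_cases h; omega
lemma nbr3 {y : ℕ} (h : g4Adj 3 y) : y = 1 ∨ y = 2 ∨ y = 4 := by have := g4_cases h; omega
lemma nbr4 {y : ℕ} (h : g4Adj 4 y) : y = 3 ∨ y = 5 := by have := g4_cases h; omega
lemma nbr5 {y : ℕ} (h : g4Adj 5 y) : y = 4 ∨ y = 6 := by have := g4_cases h; omega
lemma nbr6 {y : ℕ} (h : g4Adj 6 y) : y = 5 ∨ y = 7 ∨ y = 8 := by have := g4_cases h; omega
lemma nbr7 {y : ℕ} (h : g4Adj 7 y) : y = 6 := by have := g4_cases h; omega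
lemma nbr8 {y : ℕ} (h : g4Adj 8 y) : y = 6 := by have := g4_cases h; omega

/-- Extraction for a two-edge constraint with forced middle vertex. -/
lemma two_step {lab : ℕ → ℕ → ℕ} {x y m : ℕ}
    (p : TempPath ℕ g4Adj lab 4 x y) (hp : p.duration ≤ 2)
    (hb : ∀ a b, lab a b < 4)
    (hxy : ¬ g4Adj x y)
    (hm : ∀ z, g4Adj x z → g4Adj z y → z = m) :
    lab m y % 4 = (lab x m + 1) % 4 := by
  have hl := len_le_dur p
  have h1 := p.len_pos
  have hv0 := p.source
  have hvn := p.target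
  have hcase : p.len = 1 ∨ p.len = 2 := by omega
  unfold TempPath.duration at hp
  rcases hcase with hn | hn
  · rw [hn] at hvn
    have a0 : g4Adj (p.vert 0) (p.vert 1) := p.adj 0 (by omega)
    rw [hv0, hvn] at a0
    exact absurd a0 hxy
  · rw [hn] at hvn hp
    norm_num at hp
    have a0 : g4Adj (p.vert 0) (p.vert 1) := p.adj 0 (by omega)
    have a1 : g4Adj (p.vert 1) (p.vert 2) := p.adj 1 (by omega)
    rw [hv0] at a0
    rw [hvn] at a1
    have hv1 : p.vert 1 = m := hm _ a0 a1
    have l0 : p.time 0 % 4 = lab (p.vert 0) (p.vert 1) % 4 := p.label_mem 0 (by omega)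
    have l1 : p.time 1 % 4 = lab (p.vert 1) (p.vert 2) % 4 := p.label_mem 1 (by omega)
    rw [hv0, hv1] at l0
    rw [hv1, hvn] at l1
    have s0 : p.time 0 < p.time 1 := p.strict 0 (by omega)
    have b1 := hb x m
    have b2 := hb m y
    omega

lemma keyC7 (lab : ℕ → ℕ → ℕ) (hb : ∀ a b, lab a b < 4)
    (p84 : TempPath ℕ g4Adj lab 4 8 4) (h84 : p84.duration ≤ 3) :
    lab 6 5 % 4 = (lab 8 6 + 1) % 4 ∧ lab 5 4 % 4 = (lab 8 6 + 2) % 4 := by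
  have hl := len_le_dur p84
  have h1 := p84.len_pos
  have hv0 := p84.source
  have hvn := p84.target
  have hcase : p84.len = 1 ∨ p84.len = 2 ∨ p84.len = 3 := by omega
  unfold TempPath.duration at h84
  rcases hcase with hn | hn | hn
  · rw [hn] at hvn
    have a0 : g4Adj (p84.vert 0) (p84.vert 1) := p84.adj 0 (by omega)
    rw [hv0, hvn] at a0
    have := nbr8 a0; omega
  · rw [hn] at hvn
    have a0 : g4Adj (p84.vert 0) (p84.vert 1) := p84.adj 0 (by omega)
    have a1 : g4Adj (p84.vert 1) (p84.vert 2) := p84.adj 1 (by omega)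
    rw [hv0] at a0
    rw [hvn] at a1
    rw [nbr8 a0] at a1
    have := nbr6 a1; omega
  · rw [hn] at hvn h84
    norm_num at h84
    have a0 : g4Adj (p84.vert 0) (p84.vert 1) := p84.adj 0 (by omega)
    have a1 : g4Adj (p84.vert 1) (p84.vert 2) := p84.adj 1 (by omega)
    have a2 : g4Adj (p84.vert 2) (p84.vert 3) := p84.adj 2 (by omega)
    rw [hv0] at a0
    rw [hvn] at a2
    have hv1 : p84.vert 1 = 6 := nbr8 a0
    rw [hv1] at a1
    have hv2 : p84.vert 2 = 5 := by
      have x1 := nbr6 a1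
      have x2 := nbr4 (g4_symm a2)
      omega
    have l0 : p84.time 0 % 4 = lab (p84.vert 0) (p84.vert 1) % 4 := p84.label_mem 0 (by omega)
    have l1 : p84.time 1 % 4 = lab (p84.vert 1) (p84.vert 2) % 4 := p84.label_mem 1 (by omega)
    have l2 : p84.time 2 % 4 = lab (p84.vert 2) (p84.vert 3) % 4 := p84.label_mem 2 (by omega)
    rw [hv0, hv1] at l0
    rw [hv1, hv2] at l1
    rw [hv2, hvn] at l2
    have s0 : p84.time 0 < p84.time 1 := p84.strict 0 (by omega)
    have s1 : p84.time 1 < p84.time 2 := p84.strict 1 (by omega)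
    have b1 := hb 8 6
    have b2 := hb 6 5
    have b3 := hb 5 4
    omega
lemma keyC8 (lab : ℕ → ℕ → ℕ) (hb : ∀ a b, lab a b < 4)
    (p25 : TempPath ℕ g4Adj lab 4 2 5) (h25 : p25.duration ≤ 3) :
    lab 3 4 % 4 = (lab 2 3 + 1) % 4 ∧ lab 4 5 % 4 = (lab 2 3 + 2) % 4 := by
  have hl := len_le_dur p25
  have h1 := p25.len_pos
  have hv0 := p25.source
  have hvn := p25.target
  have hcase : p25.len = 1 ∨ p25.len = 2 ∨ p25.len = 3 := by omega
  unfold TempPath.duration at h25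
  rcases hcase with hn | hn | hn
  · rw [hn] at hvn
    have a0 : g4Adj (p25.vert 0) (p25.vert 1) := p25.adj 0 (by omega)
    rw [hv0, hvn] at a0
    have := nbr2 a0; omega
  · rw [hn] at hvn
    have a0 : g4Adj (p25.vert 0) (p25.vert 1) := p25.adj 0 (by omega)
    have a1 : g4Adj (p25.vert 1) (p25.vert 2) := p25.adj 1 (by omega)
    rw [hv0] at a0
    rw [hvn] at a1
    rw [nbr2 a0] at a1
    have := nbr3 a1; omega
  · rw [hn] at hvn h25
    norm_num at h25
    have a0 : g4Adj (p25.vert 0) (p25.vert 1) := p25.adj 0 (by omega)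
    have a1 : g4Adj (p25.vert 1) (p25.vert 2) := p25.adj 1 (by omega)
    have a2 : g4Adj (p25.vert 2) (p25.vert 3) := p25.adj 2 (by omega)
    rw [hv0] at a0
    rw [hvn] at a2
    have hv1 : p25.vert 1 = 3 := nbr2 a0
    rw [hv1] at a1
    have hv2 : p25.vert 2 = 4 := by
      have x1 := nbr3 a1
      have x2 := nbr5 (g4_symm a2)
      omega
    have l0 : p25.time 0 % 4 = lab (p25.vert 0) (p25.vert 1) % 4 := p25.label_mem 0 (by omega)
    have l1 : p25.time 1 % 4 = lab (p25.vert 1) (p25.vert 2) % 4 := p25.label_mem 1 (by omega)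
    have l2 : p25.time 2 % 4 = lab (p25.vert 2) (p25.vert 3) % 4 := p25.label_mem 2 (by omega)
    rw [hv0, hv1] at l0
    rw [hv1, hv2] at l1
    rw [hv2, hvn] at l2
    have s0 : p25.time 0 < p25.time 1 := p25.strict 0 (by omega)
    have s1 : p25.time 1 < p25.time 2 := p25.strict 1 (by omega)
    have b1 := hb 2 3
    have b2 := hb 3 4
    have b3 := hb 4 5
    omega
lemma keyC9 (lab : ℕ → ℕ → ℕ) (hb : ∀ a b, lab a b < 4)
    (p81 : TempPath ℕ g4Adj lab 4 8 1) (h81 : p81.duration ≤ 6) :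
    lab 4 3 = (lab 5 4 + 1) % 4 ∨ lab 4 3 = (lab 5 4 + 2) % 4 := by
  have hl := len_le_dur p81
  have h1 := p81.len_pos
  have hv0 := p81.source
  have hvn := p81.target
  have hcase : p81.len = 1 ∨ p81.len = 2 ∨ p81.len = 3 ∨ p81.len = 4 ∨
      p81.len = 5 ∨ p81.len = 6 := by omega
  unfold TempPath.duration at h81
  rcases hcase with hn | hn | hn | hn | hn | hn
  · rw [hn] at hvn
    have a0 : g4Adj (p81.vert 0) (p81.vert 1) := p81.adj 0 (by omega)
    rw [hv0, hvn] at a0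
    have := nbr8 a0; omega
  · rw [hn] at hvn
    have a0 : g4Adj (p81.vert 0) (p81.vert 1) := p81.adj 0 (by omega)
    have a1 : g4Adj (p81.vert 1) (p81.vert 2) := p81.adj 1 (by omega)
    rw [hv0] at a0
    rw [hvn] at a1
    rw [nbr8 a0] at a1
    have := nbr6 a1; omega
  · rw [hn] at hvn
    have a0 : g4Adj (p81.vert 0) (p81.vert 1) := p81.adj 0 (by omega)
    have a1 : g4Adj (p81.vert 1) (p81.vert 2) := p81.adj 1 (by omega)
    have a2 : g4Adj (p81.vert 2) (p81.vert 3) := p81.adj 2 (by omega)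
    rw [hv0] at a0
    rw [hvn] at a2
    rw [nbr8 a0] at a1
    have x1 := nbr6 a1
    have x2 := nbr1 (g4_symm a2)
    omega
  · rw [hn] at hvn
    have a0 : g4Adj (p81.vert 0) (p81.vert 1) := p81.adj 0 (by omega)
    have a1 : g4Adj (p81.vert 1) (p81.vert 2) := p81.adj 1 (by omega)
    have a2 : g4Adj (p81.vert 2) (p81.vert 3) := p81.adj 2 (by omega)
    have a3 : g4Adj (p81.vert 3) (p81.vert 4) := p81.adj 3 (by omega)
    rw [hv0] at a0
    rw [hvn] at a3
    rw [nbr8 a0] at a1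
    rw [nbr1 (g4_symm a3)] at a2
    have x1 := nbr6 a1
    have x2 := nbr3 (g4_symm a2)
    omega
  · -- the real case: 8,6,5,4,3,1
    rw [hn] at hvn h81
    norm_num at h81
    have a0 : g4Adj (p81.vert 0) (p81.vert 1) := p81.adj 0 (by omega)
    have a1 : g4Adj (p81.vert 1) (p81.vert 2) := p81.adj 1 (by omega)
    have a2 : g4Adj (p81.vert 2) (p81.vert 3) := p81.adj 2 (by omega)
    have a3 : g4Adj (p81.vert 3) (p81.vert 4) := p81.adj 3 (by omega)
    have a4 : g4Adj (p81.vert 4) (p81.vert 5) := p81.adj 4 (by omega)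
    rw [hv0] at a0
    rw [hvn] at a4
    have hv1 : p81.vert 1 = 6 := nbr8 a0
    have hv4 : p81.vert 4 = 3 := nbr1 (g4_symm a4)
    rw [hv1] at a1
    rw [hv4] at a3
    have nd02 : p81.vert 0 ≠ p81.vert 2 := p81.nodup 0 2 (by omega) (by omega) (by omega)
    have nd35 : p81.vert 3 ≠ p81.vert 5 := p81.nodup 3 5 (by omega) (by omega) (by omega)
    rw [hv0] at nd02
    rw [hvn] at nd35
    have x1 := nbr6 a1
    have x2 := nbr3 (g4_symm a3)
    have x3 := g4_cases a2
    have hv23 : p81.vert 2 = 5 ∧ p81.vert 3 = 4 := by omega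
    obtain ⟨hv2, hv3⟩ := hv23
    have l2 : p81.time 2 % 4 = lab (p81.vert 2) (p81.vert 3) % 4 := p81.label_mem 2 (by omega)
    have l3 : p81.time 3 % 4 = lab (p81.vert 3) (p81.vert 4) % 4 := p81.label_mem 3 (by omega)
    rw [hv2, hv3] at l2
    rw [hv3, hv4] at l3
    have s0 : p81.time 0 < p81.time 1 := p81.strict 0 (by omega)
    have s1 : p81.time 1 < p81.time 2 := p81.strict 1 (by omega)
    have s2 : p81.time 2 < p81.time 3 := p81.strict 2 (by omega)
    have s3 : p81.time 3 < p81.time 4 := p81.strict 3 (by omega)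
    have b1 := hb 5 4
    have b2 := hb 4 3
    omega
  · rw [hn] at hvn
    have a0 : g4Adj (p81.vert 0) (p81.vert 1) := p81.adj 0 (by omega)
    have a1 : g4Adj (p81.vert 1) (p81.vert 2) := p81.adj 1 (by omega)
    have a2 : g4Adj (p81.vert 2) (p81.vert 3) := p81.adj 2 (by omega)
    have a3 : g4Adj (p81.vert 3) (p81.vert 4) := p81.adj 3 (by omega)
    have a4 : g4Adj (p81.vert 4) (p81.vert 5) := p81.adj 4 (by omega)
    have a5 : g4Adj (p81.vert 5) (p81.vert 6) := p81.adj 5 (by omega)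
    rw [hv0] at a0
    rw [hvn] at a5
    have hv1 : p81.vert 1 = 6 := nbr8 a0
    have hv5 : p81.vert 5 = 3 := nbr1 (g4_symm a5)
    rw [hv1] at a1
    rw [hv5] at a4
    have nd02 : p81.vert 0 ≠ p81.vert 2 := p81.nodup 0 2 (by omega) (by omega) (by omega)
    have nd13 : p81.vert 1 ≠ p81.vert 3 := p81.nodup 1 3 (by omega) (by omega) (by omega)
    have nd46 : p81.vert 4 ≠ p81.vert 6 := p81.nodup 4 6 (by omega) (by omega) (by omega)
    rw [hv0] at nd02
    rw [hv1] at nd13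
    rw [hvn] at nd46
    have x1 := nbr6 a1
    have x2 := nbr3 (g4_symm a4)
    have x3 := g4_cases a2
    have x4 := g4_cases a3
    omega
lemma keyC10 (lab : ℕ → ℕ → ℕ) (hb : ∀ a b, lab a b < 4)
    (p27 : TempPath ℕ g4Adj lab 4 2 7) (h27 : p27.duration ≤ 6) :
    lab 5 6 = (lab 4 5 + 1) % 4 ∨ lab 5 6 = (lab 4 5 + 2) % 4 := by
  have hl := len_le_dur p27
  have h1 := p27.len_pos
  have hv0 := p27.source
  have hvn := p27.target
  have hcase : p27.len = 1 ∨ p27.len = 2 ∨ p27.len = 3 ∨ p27.len = 4 ∨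
      p27.len = 5 ∨ p27.len = 6 := by omega
  unfold TempPath.duration at h27
  rcases hcase with hn | hn | hn | hn | hn | hn
  · rw [hn] at hvn
    have a0 : g4Adj (p27.vert 0) (p27.vert 1) := p27.adj 0 (by omega)
    rw [hv0, hvn] at a0
    have := nbr2 a0; omega
  · rw [hn] at hvn
    have a0 : g4Adj (p27.vert 0) (p27.vert 1) := p27.adj 0 (by omega)
    have a1 : g4Adj (p27.vert 1) (p27.vert 2) := p27.adj 1 (by omega)
    rw [hv0] at a0
    rw [hvn] at a1
    rw [nbr2 a0] at a1
    have := nbr3 a1; omega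
  · rw [hn] at hvn
    have a0 : g4Adj (p27.vert 0) (p27.vert 1) := p27.adj 0 (by omega)
    have a1 : g4Adj (p27.vert 1) (p27.vert 2) := p27.adj 1 (by omega)
    have a2 : g4Adj (p27.vert 2) (p27.vert 3) := p27.adj 2 (by omega)
    rw [hv0] at a0
    rw [hvn] at a2
    rw [nbr2 a0] at a1
    have x1 := nbr3 a1
    have x2 := nbr7 (g4_symm a2)
    omega
  · rw [hn] at hvn
    have a0 : g4Adj (p27.vert 0) (p27.vert 1) := p27.adj 0 (by omega)
    have a1 : g4Adj (p27.vert 1) (p27.vert 2) := p27.adj 1 (by omega)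
    have a2 : g4Adj (p27.vert 2) (p27.vert 3) := p27.adj 2 (by omega)
    have a3 : g4Adj (p27.vert 3) (p27.vert 4) := p27.adj 3 (by omega)
    rw [hv0] at a0
    rw [hvn] at a3
    rw [nbr2 a0] at a1
    rw [nbr7 (g4_symm a3)] at a2
    have x1 := nbr3 a1
    have x2 := nbr6 (g4_symm a2)
    omega
  · -- the real case: 2,3,4,5,6,7
    rw [hn] at hvn h27
    norm_num at h27
    have a0 : g4Adj (p27.vert 0) (p27.vert 1) := p27.adj 0 (by omega)
    have a1 : g4Adj (p27.vert 1) (p27.vert 2) := p27.adj 1 (by omega)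
    have a2 : g4Adj (p27.vert 2) (p27.vert 3) := p27.adj 2 (by omega)
    have a3 : g4Adj (p27.vert 3) (p27.vert 4) := p27.adj 3 (by omega)
    have a4 : g4Adj (p27.vert 4) (p27.vert 5) := p27.adj 4 (by omega)
    rw [hv0] at a0
    rw [hvn] at a4
    have hv1 : p27.vert 1 = 3 := nbr2 a0
    have hv4 : p27.vert 4 = 6 := nbr7 (g4_symm a4)
    rw [hv1] at a1
    rw [hv4] at a3
    have nd02 : p27.vert 0 ≠ p27.vert 2 := p27.nodup 0 2 (by omega) (by omega) (by omega)
    have nd35 : p27.vert 3 ≠ p27.vert 5 := p27.nodup 3 5 (by omega) (by omega) (by omega)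
    rw [hv0] at nd02
    rw [hvn] at nd35
    have x1 := nbr3 a1
    have x2 := nbr6 (g4_symm a3)
    have x3 := g4_cases a2
    have hv23 : p27.vert 2 = 4 ∧ p27.vert 3 = 5 := by omega
    obtain ⟨hv2, hv3⟩ := hv23
    have l2 : p27.time 2 % 4 = lab (p27.vert 2) (p27.vert 3) % 4 := p27.label_mem 2 (by omega)
    have l3 : p27.time 3 % 4 = lab (p27.vert 3) (p27.vert 4) % 4 := p27.label_mem 3 (by omega)
    rw [hv2, hv3] at l2
    rw [hv3, hv4] at l3
    have s0 : p27.time 0 < p27.time 1 := p27.strict 0 (by omega)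
    have s1 : p27.time 1 < p27.time 2 := p27.strict 1 (by omega)
    have s2 : p27.time 2 < p27.time 3 := p27.strict 2 (by omega)
    have s3 : p27.time 3 < p27.time 4 := p27.strict 3 (by omega)
    have b1 := hb 4 5
    have b2 := hb 5 6
    omega
  · rw [hn] at hvn
    have a0 : g4Adj (p27.vert 0) (p27.vert 1) := p27.adj 0 (by omega)
    have a1 : g4Adj (p27.vert 1) (p27.vert 2) := p27.adj 1 (by omega)
    have a2 : g4Adj (p27.vert 2) (p27.vert 3) := p27.adj 2 (by omega)
    have a3 : g4Adj (p27.vert 3) (p27.vert 4) := p27.adj 3 (by omega)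
    have a4 : g4Adj (p27.vert 4) (p27.vert 5) := p27.adj 4 (by omega)
    have a5 : g4Adj (p27.vert 5) (p27.vert 6) := p27.adj 5 (by omega)
    rw [hv0] at a0
    rw [hvn] at a5
    have hv1 : p27.vert 1 = 3 := nbr2 a0
    have hv5 : p27.vert 5 = 6 := nbr7 (g4_symm a5)
    rw [hv1] at a1
    rw [hv5] at a4
    have nd02 : p27.vert 0 ≠ p27.vert 2 := p27.nodup 0 2 (by omega) (by omega) (by omega)
    have nd13 : p27.vert 1 ≠ p27.vert 3 := p27.nodup 1 3 (by omega) (by omega) (by omega)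
    rw [hv0] at nd02
    rw [hv1] at nd13
    have x1 := nbr3 a1
    have x2 := nbr6 (g4_symm a4)
    have x3 := g4_cases a2
    have x4 := g4_cases a3
    omega

lemma key (lab : ℕ → ℕ → ℕ) (hb : ∀ a b, lab a b < 4) (hs : Sat4 lab) :
    lab 3 2 = (lab 1 3 + 1) % 4 ∧
    lab 3 1 = (lab 2 3 + 1) % 4 ∧
    lab 6 8 = (lab 7 6 + 1) % 4 ∧
    lab 6 7 = (lab 8 6 + 1) % 4 ∧
    lab 6 7 = (lab 5 6 + 1) % 4 ∧
    lab 3 1 = (lab 4 3 + 1) % 4 ∧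
    (lab 6 5 = (lab 8 6 + 1) % 4 ∧ lab 5 4 = (lab 8 6 + 2) % 4) ∧
    (lab 3 4 = (lab 2 3 + 1) % 4 ∧ lab 4 5 = (lab 2 3 + 2) % 4) ∧
    (lab 4 3 = (lab 5 4 + 1) % 4 ∨ lab 4 3 = (lab 5 4 + 2) % 4) ∧
    (lab 5 6 = (lab 4 5 + 1) % 4 ∨ lab 5 6 = (lab 4 5 + 2) % 4) := by
  obtain ⟨⟨p12, h12⟩, ⟨p21, h21⟩, ⟨p78, h78⟩, ⟨p87, h87⟩, ⟨p57, h57⟩, ⟨p41, h41⟩,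
    ⟨p84, h84⟩, ⟨p25, h25⟩, ⟨p81, h81⟩, ⟨p27, h27⟩⟩ := hs
  have C1 : lab 3 2 % 4 = (lab 1 3 + 1) % 4 :=
    two_step p12 h12 hb (fun h => by have := nbr1 h; omega)
      (fun z h1 _ => nbr1 h1)
  have C2 : lab 3 1 % 4 = (lab 2 3 + 1) % 4 :=
    two_step p21 h21 hb (fun h => by have := nbr2 h; omega)
      (fun z h1 _ => nbr2 h1)
  have C3 : lab 6 8 % 4 = (lab 7 6 + 1) % 4 :=
    two_step p78 h78 hb (fun h => by have := nbr7 h; omega)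
      (fun z h1 _ => nbr7 h1)
  have C4 : lab 6 7 % 4 = (lab 8 6 + 1) % 4 :=
    two_step p87 h87 hb (fun h => by have := nbr8 h; omega)
      (fun z h1 _ => nbr8 h1)
  have C5 : lab 6 7 % 4 = (lab 5 6 + 1) % 4 :=
    two_step p57 h57 hb (fun h => by have := nbr5 h; omega)
      (fun z _ h2 => nbr7 (g4_symm h2))
  have C6 : lab 3 1 % 4 = (lab 4 3 + 1) % 4 :=
    two_step p41 h41 hb (fun h => by have := nbr4 h; omega)
      (fun z _ h2 => nbr1 (g4_symm h2))
  have C7 := keyC7 lab hb p84 h84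
  have C8 := keyC8 lab hb p25 h25
  have C9 := keyC9 lab hb p81 h81
  have C10 := keyC10 lab hb p27 h27
  have b1 := hb 3 2
  have b2 := hb 3 1
  have b3 := hb 6 8
  have b4 := hb 6 7
  have b5 := hb 6 5
  have b6 := hb 5 4
  have b7 := hb 3 4
  have b8 := hb 4 5
  exact ⟨by omega, by omega, by omega, by omega, by omega, by omega,
    ⟨by omega, by omega⟩, ⟨by omega, by omega⟩, C9, C10⟩

def labEx (a b : ℕ) : ℕ :=
  (if a = 1 ∧ b = 3 then 1 else if a = 3 ∧ b = 2 then 2 else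
   if a = 2 ∧ b = 3 then 1 else if a = 3 ∧ b = 1 then 2 else
   if a = 3 ∧ b = 4 then 2 else if a = 4 ∧ b = 3 then 1 else
   if a = 4 ∧ b = 5 then 3 else if a = 5 ∧ b = 4 then 3 else
   if a = 5 ∧ b = 6 then 1 else if a = 6 ∧ b = 5 then 2 else
   if a = 6 ∧ b = 7 then 2 else if a = 7 ∧ b = 6 then 1 else
   if a = 6 ∧ b = 8 then 2 else if a = 8 ∧ b = 6 then 1 else 0) % 4

lemma labEx_lt : ∀ a b, labEx a b < 4 := fun _ _ => Nat.mod_lt _ (by norm_num)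

def mkP (vs ts : List ℕ) (n : ℕ) (hn : 1 ≤ n) (u v : ℕ)
    (hs : vs.getD 0 0 = u) (ht : vs.getD n 0 = v)
    (hnd : ∀ i j, i ≤ n → j ≤ n → i ≠ j → vs.getD i 0 ≠ vs.getD j 0)
    (hadj : ∀ i, i < n → g4Adj (vs.getD i 0) (vs.getD (i + 1) 0))
    (hlm : ∀ i, i < n → ts.getD i 0 % 4 = labEx (vs.getD i 0) (vs.getD (i + 1) 0) % 4)
    (hst : ∀ i, i + 1 < n → ts.getD i 0 < ts.getD (i + 1) 0) :
    TempPath ℕ g4Adj labEx 4 u v :=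
  ⟨n, hn, fun i => vs.getD i 0, fun i => ts.getD i 0, hs, ht, hnd, hadj, hlm, hst⟩

lemma satEx : Sat4 labEx := by
  refine ⟨⟨mkP [1,3,2] [1,2] 2 (by norm_num) 1 2 rfl rfl ?_ ?_ (by decide) ?_, ?_⟩,
    ⟨mkP [2,3,1] [1,2] 2 (by norm_num) 2 1 rfl rfl ?_ ?_ (by decide) ?_, ?_⟩,
    ⟨mkP [7,6,8] [1,2] 2 (by norm_num) 7 8 rfl rfl ?_ ?_ (by decide) ?_, ?_⟩,
    ⟨mkP [8,6,7] [1,2] 2 (by norm_num) 8 7 rfl rfl ?_ ?_ (by decide) ?_, ?_⟩,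
    ⟨mkP [5,6,7] [1,2] 2 (by norm_num) 5 7 rfl rfl ?_ ?_ (by decide) ?_, ?_⟩,
    ⟨mkP [4,3,1] [1,2] 2 (by norm_num) 4 1 rfl rfl ?_ ?_ (by decide) ?_, ?_⟩,
    ⟨mkP [8,6,5,4] [1,2,3] 3 (by norm_num) 8 4 rfl rfl ?_ ?_ (by decide) ?_, ?_⟩,
    ⟨mkP [2,3,4,5] [1,2,3] 3 (by norm_num) 2 5 rfl rfl ?_ ?_ (by decide) ?_, ?_⟩,
    ⟨mkP [8,6,5,4,3,1] [1,2,3,5,6] 5 (by norm_num) 8 1 rfl rfl ?_ ?_ (by decide) ?_, ?_⟩,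
    ⟨mkP [2,3,4,5,6,7] [1,2,3,5,6] 5 (by norm_num) 2 7 rfl rfl ?_ ?_ (by decide) ?_, ?_⟩⟩ <;>
  first
    | (intro i j hi hj hne
       interval_cases i <;> interval_cases j <;> simp_all [List.getD])
    | (intro i hi
       have hi2 : i ≤ 4 := by omega
       interval_cases i <;>
         first
           | decide
           | omega
           | simp [g4Adj, g4AdjHalf, List.getD])
    | decide

/-- In the Δ = 4, k = 0 gadget, every feasible 4-periodic
labeling satisfies λ(4,5) = λ(5,4); a feasible labeling exists; and under the
normalization λ(8,6) = 1 the forced value is λ(4,5) = λ(5,4) = 3. -/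
theorem stmt19 :
    (∀ lab : ℕ → ℕ → ℕ, (∀ a b, lab a b < 4) → Sat4 lab →
      lab 4 5 = lab 5 4) ∧
    (∃ lab : ℕ → ℕ → ℕ, (∀ a b, lab a b < 4) ∧ Sat4 lab) ∧
    (∀ lab : ℕ → ℕ → ℕ, (∀ a b, lab a b < 4) → Sat4 lab → lab 8 6 = 1 →
      lab 4 5 = 3 ∧ lab 5 4 = 3) := by
  refine ⟨?_, ⟨labEx, labEx_lt, satEx⟩, ?_⟩
  · intro lab hb hs
    obtain ⟨C1, C2, C3, C4, C5, C6, ⟨C7a, C7b⟩, ⟨C8a, C8b⟩, C9, C10⟩ := key lab hb hs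
    have b1 := hb 2 3
    have b2 := hb 4 3
    have b3 := hb 8 6
    have b4 := hb 5 6
    have b5 := hb 4 5
    have b6 := hb 5 4
    have b7 := hb 6 7
    have b8 := hb 3 1
    omega
  · intro lab hb hs h86
    obtain ⟨C1, C2, C3, C4, C5, C6, ⟨C7a, C7b⟩, ⟨C8a, C8b⟩, C9, C10⟩ := key lab hb hs
    have b1 := hb 2 3
    have b2 := hb 4 3
    have b3 := hb 8 6
    have b4 := hb 5 6
    have b5 := hb 4 5
    have b6 := hb 5 4
    have b7 := hb 6 7
    have b8 := hb 3 1
    constructor <;> omega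
end
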